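/- arXiv:chao-dyn/9712016 — 7 statements merged into one kernel-verified Lean document; each statement's English description precedes it below -/
import Mathlib

section
/- Let X ⊂ ℝ^d be a bounded set of positive Lebesgue measure and f : X → X piecewise linear (affine) with respect to a finite partition Z of X with f(I) = X for each I ∈ Z. Let Z_N be the partition into domains of linearity of f^N and P = (p_{IJ})_{I,J ∈ Z_N} the Ulam matrix, p_{IJ} = m(I ∩ f^{-1}J)/m(I). Then for every row vector u ∈ ℝ^{Z_N} with Σ_I u_I = 0 one has u · P^N = 0; equivalently, if h : X → ℝ is constant on each element of Z_N and ∫_X h dm = 0, then the N-th iterate of the Ulam operator annihilates h. -/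
open MeasureTheory Set

/-- Let `X ⊂ ℝ^d` be bounded of positive Lebesgue measure and `f : X → X` piecewise
affine with respect to a finite partition `Z` of `X`, with full branches `f(I) = X` for
each `I ∈ Z`. Let `Z_N` be the partition into domains of linearity of `f^N` (indexed by
words `w`, with `Z_N(w) = ⋂_{t<N} f^{-t}(Z(w t))`), and let `P` be the Ulam matrix with
respect to `Z_N`. Then every row vector `u` with `∑ u = 0` satisfies `u · P^N = 0`. -/
theorem ulam_annihilates_zero_sum_vectors
    (d m N : ℕ) (hm : 2 ≤ m) (hN : 1 ≤ N)
    (X : Set (Fin d → ℝ)) (hXbdd : Bornology.IsBounded X) (hXpos : 0 < volume X)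
    (f : (Fin d → ℝ) → (Fin d → ℝ))
    (hfX : Set.MapsTo f X X)
    (Z : Fin m → Set (Fin d → ℝ))
    (hZdisj : Pairwise (Function.onFun Disjoint Z))
    (hZcover : (⋃ i, Z i) = X)
    (hZaff : ∀ i, ∃ A : (Fin d → ℝ) →ᵃ[ℝ] (Fin d → ℝ), Set.EqOn f A (Z i))
    (hZfull : ∀ i, f '' Z i = X)
    (ZN : (Fin N → Fin m) → Set (Fin d → ℝ))
    (hZN : ∀ w, ZN w = ⋂ t : Fin N, f^[(t : ℕ)] ⁻¹' Z (w t))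
    (hZNpos : ∀ w, 0 < volume (ZN w))
    (P : Matrix (Fin N → Fin m) (Fin N → Fin m) ℝ)
    (hP : ∀ w w', P w w' = (volume (ZN w ∩ f ⁻¹' ZN w')).toReal / (volume (ZN w)).toReal) :
    ∀ u : (Fin N → Fin m) → ℝ, (∑ w, u w) = 0 → Matrix.vecMul u (P ^ N) = 0 := by
  intro u hu
  obtain ⟨N', rfl⟩ : ∃ n, N = n + 1 := ⟨N - 1, (Nat.succ_pred_eq_of_pos hN).symm⟩
  classical
  choose A hA using hZaff
  have hXne : volume X ≠ 0 := hXpos.ne'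
  have hXfin : volume X ≠ ⊤ := hXbdd.measure_lt_top.ne
  have hZsub : ∀ i, Z i ⊆ X := by
    intro i; rw [← hZcover]; exact Set.subset_iUnion Z i
  have himg : ∀ i, A i '' Z i = X := by
    intro i; rw [← (hA i).image_eq, hZfull i]
  -- determinants are nonzero
  have hdet : ∀ i, LinearMap.det (A i).linear ≠ 0 := by
    intro i h0
    apply hXne
    rw [← himg i]
    have hsub : A i '' Z i ⊆ (fun y => y + A i 0) '' (LinearMap.range (A i).linear : Set _) := by
      rintro y ⟨x, hx, rfl⟩
      have hd := congrFun (AffineMap.decomp (A i)) x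
      simp only [Pi.add_apply] at hd
      exact ⟨(A i).linear x, ⟨x, rfl⟩, hd.symm⟩
    refine le_antisymm (le_trans (measure_mono hsub) ?_) (zero_le)
    rw [Set.image_add_right, measure_preimage_add_right]
    exact le_of_eq (Measure.addHaar_submodule _ _ (LinearMap.range_lt_top_of_det_eq_zero h0).ne)
  have hAinj : ∀ i, Function.Injective (A i) := by
    intro i
    have hl : Function.Injective (A i).linear := (LinearMap.equivOfDetNeZero _ (hdet i)).injective
    intro x y hxy
    have hd := AffineMap.decomp (A i)
    have hx := congrFun hd x; have hy := congrFun hd y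
    simp only [Pi.add_apply] at hx hy
    apply hl
    have : (A i).linear x + A i 0 = (A i).linear y + A i 0 := by rw [← hx, ← hy, hxy]
    exact add_right_cancel this
  set J : Fin m → ENNReal := fun i => ENNReal.ofReal |(LinearMap.det (A i).linear)⁻¹| with hJ
  have hJ0 : ∀ i, J i ≠ 0 := by
    intro i
    simp only [hJ, ne_eq, ENNReal.ofReal_eq_zero, not_le]
    exact abs_pos.2 (inv_ne_zero (hdet i))
  have hJtop : ∀ i, J i ≠ ⊤ := fun i => ENNReal.ofReal_ne_top
  -- preimage volume under A i
  have hApre : ∀ i (S : Set (Fin d → ℝ)), volume ((A i) ⁻¹' S) = J i * volume S := by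
    intro i S
    have hset : (A i) ⁻¹' S = (A i).linear ⁻¹' ((fun y => y + A i 0) ⁻¹' S) := by
      ext x
      have hd := congrFun (AffineMap.decomp (A i)) x
      simp only [Pi.add_apply] at hd
      simp [Set.mem_preimage, hd]
    rw [hset, Measure.addHaar_preimage_linearMap _ (hdet i), measure_preimage_add_right]
  -- key identity
  have hkey : ∀ i (S : Set (Fin d → ℝ)), S ⊆ X →
      volume (Z i ∩ f ⁻¹' S) = J i * volume S := by
    intro i S hS
    have hset : Z i ∩ f ⁻¹' S = (A i) ⁻¹' S := by
      apply Set.Subset.antisymm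
      · rintro x ⟨hxZ, hxS⟩
        rw [Set.mem_preimage, ← hA i hxZ]
        exact hxS
      · intro x hx
        rw [Set.mem_preimage] at hx
        have hxX : A i x ∈ X := hS hx
        rw [← himg i] at hxX
        obtain ⟨y, hyZ, hyx⟩ := hxX
        obtain rfl := hAinj i hyx
        exact ⟨hyZ, by rw [Set.mem_preimage, hA i hyZ]; exact hx⟩
    rw [hset, hApre]
  -- cylinder volumes
  have hcyl : ∀ (L : ℕ) (a : Fin (L + 1) → Fin m),
      volume (⋂ t : Fin (L + 1), f^[(t : ℕ)] ⁻¹' Z (a t)) = (∏ t, J (a t)) * volume X := by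
    intro L
    induction L with
    | zero =>
      intro a
      have h1 : (⋂ t : Fin 1, f^[(t : ℕ)] ⁻¹' Z (a t)) = Z (a 0) := by
        ext x
        simp [Fin.forall_fin_one]
      rw [h1, Fin.prod_univ_one]
      have h2 := hkey (a 0) X subset_rfl
      have h3 : Z (a 0) ∩ f ⁻¹' X = Z (a 0) :=
        Set.inter_eq_left.mpr (fun x hx => hfX (hZsub _ hx))
      rwa [h3] at h2
    | succ L IH =>
      intro a
      have hsplit : (⋂ t : Fin (L + 2), f^[(t : ℕ)] ⁻¹' Z (a t))
          = Z (a 0) ∩ f ⁻¹' (⋂ t : Fin (L + 1), f^[(t : ℕ)] ⁻¹' Z (a t.succ)) := by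
        ext x
        simp only [Set.mem_iInter, Set.mem_inter_iff, Set.mem_preimage, Fin.forall_fin_succ,
          Fin.val_zero, Function.iterate_zero, id_eq, Fin.val_succ,
          Function.iterate_succ_apply]
      have hsubX : (⋂ t : Fin (L + 1), f^[(t : ℕ)] ⁻¹' Z (a (Fin.succ t))) ⊆ X := by
        intro x hx
        have h0 := Set.mem_iInter.mp hx 0
        simp only [Fin.val_zero, Function.iterate_zero, id_eq, Set.mem_preimage] at h0
        exact hZsub _ h0
      rw [hsplit, hkey (a 0) _ hsubX, IH (fun t => a t.succ),
        show (∏ t : Fin (L + 1 + 1), J (a t)) = J (a 0) * ∏ t : Fin (L + 1), J (a t.succ) from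
          Fin.prod_univ_succ _]
      ring
  -- explicit form of P
  set dd : Fin m → ℝ := fun i => (J i).toReal with hdd
  have hprod_ne : ∀ (w : Fin (N' + 1) → Fin m),
      (∏ t, J (w t)) ≠ 0 ∧ (∏ t, J (w t)) ≠ ⊤ :=
    fun w => ⟨Finset.prod_ne_zero_iff.mpr fun t _ => hJ0 _,
      ENNReal.prod_ne_top fun t _ => hJtop _⟩
  have hPform : ∀ w w', P w w' =
      (if (∀ t : Fin N', w' t.castSucc = w t.succ) then dd (w' (Fin.last N')) else 0) := by
    intro w w'
    rw [hP]
    by_cases hc : ∀ t : Fin N', w' t.castSucc = w t.succ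
    · rw [if_pos hc]
      set b : Fin (N' + 1 + 1) → Fin m :=
        fun t => if h : (t : ℕ) < N' + 1 then w ⟨t, h⟩ else w' (Fin.last N') with hb
      have hset : ZN w ∩ f ⁻¹' ZN w' = ⋂ t : Fin (N' + 2), f^[(t : ℕ)] ⁻¹' Z (b t) := by
        rw [hZN, hZN]
        ext x
        simp only [Set.mem_inter_iff, Set.mem_iInter, Set.mem_preimage]
        constructor
        · rintro ⟨h1, h2⟩ t
          by_cases ht : (t : ℕ) < N' + 1
          · have := h1 ⟨t, ht⟩
            simpa [hb, ht, Nat.lt_succ_iff.mp ht] using this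
          · have htN : (t : ℕ) = N' + 1 := by omega
            have h2' := h2 (Fin.last N')
            have hit : f^[(t : ℕ)] x = f^[(N' : ℕ)] (f x) := by
              rw [htN]; exact Function.iterate_succ_apply f N' x
            simp only [hb, ht, dif_neg, not_false_eq_true]
            rw [hit]
            simpa using h2'
        · intro h
          constructor
          · intro t
            have := h t.castSucc
            simpa [hb, Fin.is_lt t, Fin.coe_castSucc, Nat.lt_succ_iff.mp t.is_lt] using this
          · intro t
            have hht := h t.succ
            have hit : f^[((t.succ : Fin (N' + 2)) : ℕ)] x = f^[(t : ℕ)] (f x) := by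
              simp [Function.iterate_succ_apply]
            rw [hit] at hht
            by_cases ht : (t : ℕ) + 1 < N' + 1
            · have hb' : b t.succ = w' t := by
                have ht' : (t : ℕ) < N' := by omega
                have := hc ⟨(t : ℕ), ht'⟩
                simp only [hb, Fin.val_succ, ht, dif_pos]
                have e1 : ((⟨(t : ℕ), ht'⟩ : Fin N').succ) = (⟨(t : ℕ) + 1, ht⟩ : Fin (N' + 1)) := by
                  ext; simp
                have e2 : ((⟨(t : ℕ), ht'⟩ : Fin N').castSucc) = t := by
                  ext; simp
                rw [e1, e2] at this
                exact this.symm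
              rwa [hb'] at hht
            · have htN : (t : ℕ) = N' := by omega
              have hb' : b t.succ = w' t := by
                simp only [hb, Fin.val_succ, ht, dif_neg, not_false_eq_true]
                congr 1
                ext; simp [htN]
              rwa [hb'] at hht
      have hbw : ∏ t : Fin (N' + 2), J (b t)
          = (∏ t : Fin (N' + 1), J (w t)) * J (w' (Fin.last N')) := by
        rw [Fin.prod_univ_castSucc]
        congr 1
        · apply Finset.prod_congr rfl
          intro t _
          congr 1
          simp [hb, Fin.is_lt t, Nat.lt_succ_iff.mp t.is_lt, not_lt.mpr (Nat.lt_succ_iff.mp t.is_lt)]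
        · congr 1
          simp [hb]
      rw [hset, hcyl (N' + 1) b, hZN, hcyl N' w, hbw]
      obtain ⟨hp0, hpt⟩ := hprod_ne w
      rw [ENNReal.toReal_mul, ENNReal.toReal_mul, ENNReal.toReal_mul]
      have hr0 : (∏ t, J (w t)).toReal ≠ 0 := ENNReal.toReal_ne_zero.mpr ⟨hp0, hpt⟩
      have hX0 : (volume X).toReal ≠ 0 := ENNReal.toReal_ne_zero.mpr ⟨hXne, hXfin⟩
      have harith : ∀ x y z : ℝ, x ≠ 0 → z ≠ 0 → x * y * z / (x * z) = y := by
        intro x y z hx hz; field_simp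
      exact harith _ _ _ hr0 hX0
    · rw [if_neg hc]
      push_neg at hc
      obtain ⟨t, ht⟩ := hc
      have hempty : ZN w ∩ f ⁻¹' ZN w' = ∅ := by
        rw [hZN, hZN]
        apply Set.eq_empty_iff_forall_notMem.mpr
        rintro x ⟨h1, h2⟩
        have ha := Set.mem_iInter.mp h1 t.succ
        have hb' := Set.mem_iInter.mp (Set.mem_preimage.mp h2) t.castSucc
        simp only [Set.mem_preimage] at ha hb'
        have hit : f^[((t.castSucc : Fin (N' + 1)) : ℕ)] (f x)
            = f^[((t.succ : Fin (N' + 1)) : ℕ)] x := by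
          simp [Function.iterate_succ_apply]
        rw [hit] at hb'
        exact Set.disjoint_left.mp (hZdisj ht) hb' ha
      simp [hempty]
  -- combinatorial part
  set g : ℕ → (Fin (N' + 1) → Fin m) → ℝ := fun k w' =>
    ∑ a : Fin (N' + 1) → Fin m,
      if (∀ t s : Fin (N' + 1), (s : ℕ) = (t : ℕ) + k → a s = w' t) then u a else 0 with hg
  set push : Fin m → (Fin (N' + 1) → Fin m) → (Fin (N' + 1) → Fin m) :=
    fun j w' => Fin.cons j (fun t : Fin N' => w' t.castSucc) with hpush
  have hpush0 : ∀ j w', push j w' 0 = j := fun j w' => rfl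
  have hpushs : ∀ j w' (t : Fin N'), push j w' t.succ = w' t.castSucc := fun j w' t => by
    simp [hpush]
  -- sum over compatible words
  have hcompat_sum : ∀ (F : (Fin (N' + 1) → Fin m) → ℝ) (w' : Fin (N' + 1) → Fin m),
      (∑ w : Fin (N' + 1) → Fin m,
        if (∀ t : Fin N', w' t.castSucc = w t.succ) then F w else 0)
      = ∑ j : Fin m, F (push j w') := by
    intro F w'
    rw [← Finset.sum_filter]
    have hfil : Finset.univ.filter (fun w => ∀ t : Fin N', w' t.castSucc = w t.succ)
        = Finset.image (fun j => push j w') Finset.univ := by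
      ext w
      simp only [Finset.mem_filter, Finset.mem_univ, true_and, Finset.mem_image]
      constructor
      · intro hw
        refine ⟨w 0, ?_⟩
        funext t
        refine Fin.cases ?_ ?_ t
        · exact hpush0 (w 0) w'
        · intro t'
          rw [hpushs, hw t']
      · rintro ⟨j, rfl⟩ t
        rw [hpushs]
    rw [hfil, Finset.sum_image]
    intro j _ j' _ h
    have := congrFun h 0
    beta_reduce at this
    rwa [hpush0, hpush0] at this
  -- recurrence for g
  have hgrec : ∀ k, k < N' + 1 → ∀ w', (∑ j : Fin m, g k (push j w')) = g (k + 1) w' := by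
    intro k hk w'
    simp only [hg]
    rw [Finset.sum_comm]
    apply Finset.sum_congr rfl
    intro a _
    have hcond : ∀ j : Fin m,
        (∀ t s : Fin (N' + 1), (s : ℕ) = (t : ℕ) + k → a s = push j w' t)
        ↔ (a ⟨k, hk⟩ = j ∧ ∀ t s : Fin (N' + 1), (s : ℕ) = (t : ℕ) + (k + 1) → a s = w' t) := by
      intro j
      constructor
      · intro h
        constructor
        · have := h 0 ⟨k, hk⟩ (by simp)
          rwa [hpush0] at this
        · intro t s hs
          have htpos : 1 ≤ (t : ℕ) + 1 := by omega
          have ht1 : (t : ℕ) + 1 < N' + 1 := by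
            have := s.is_lt; omega
          have ht0 : (t : ℕ) < N' := by omega
          have := h ⟨(t : ℕ) + 1, ht1⟩ s (by simp; omega)
          have e1 : (⟨(t : ℕ) + 1, ht1⟩ : Fin (N' + 1)) = (⟨(t : ℕ), ht0⟩ : Fin N').succ := by
            ext; simp
          rw [e1, hpushs] at this
          have e2 : ((⟨(t : ℕ), ht0⟩ : Fin N').castSucc) = t := by ext; simp
          rwa [e2] at this
      · rintro ⟨h0, h⟩ t s hs
        rcases Nat.eq_zero_or_pos (t : ℕ) with ht | ht
        · have et : t = 0 := by ext; simp [ht]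
          have es : s = ⟨k, hk⟩ := by ext; simp [hs, ht]
          rw [et, es, hpush0, h0]
        · have ht0 : (t : ℕ) - 1 < N' := by
            have := t.is_lt; omega
          have e1 : t = (⟨(t : ℕ) - 1, ht0⟩ : Fin N').succ := by
            ext; simp; omega
          rw [e1, hpushs]
          have e2 : ((⟨(t : ℕ) - 1, ht0⟩ : Fin N').castSucc : Fin (N' + 1)) =
              ⟨(t : ℕ) - 1, by omega⟩ := by ext; simp
          rw [e2]
          exact h ⟨(t : ℕ) - 1, by omega⟩ s (by simp [hs]; omega)
    calc (∑ j : Fin m,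
        if (∀ t s : Fin (N' + 1), (s : ℕ) = (t : ℕ) + k → a s = push j w' t) then u a else 0)
        = ∑ j : Fin m, if a ⟨k, hk⟩ = j then
            (if (∀ t s : Fin (N' + 1), (s : ℕ) = (t : ℕ) + (k + 1) → a s = w' t)
              then u a else 0) else 0 := by
          apply Finset.sum_congr rfl
          intro j _
          rw [if_congr (hcond j) rfl rfl, ite_and]
      _ = _ := by rw [Finset.sum_ite_eq]; simp
  -- main induction
  have main : ∀ k, k ≤ N' + 1 → ∀ w', Matrix.vecMul u (P ^ k) w'
      = (∏ t : Fin (N' + 1), if N' + 1 - k ≤ (t : ℕ) then dd (w' t) else 1) * g k w' := by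
    intro k
    induction k with
    | zero =>
      intro _ w'
      rw [pow_zero, Matrix.vecMul_one]
      have hpr : (∏ t : Fin (N' + 1), if N' + 1 - 0 ≤ (t : ℕ) then dd (w' t) else 1) = 1 := by
        apply Finset.prod_eq_one
        intro t _
        rw [if_neg]
        have := t.is_lt; omega
      rw [hpr, one_mul]
      have : g 0 w' = ∑ a : Fin (N' + 1) → Fin m, if a = w' then u a else 0 := by
        simp only [hg]
        apply Finset.sum_congr rfl
        intro a _
        apply if_congr _ rfl rfl
        constructor
        · intro h; funext t; exact h t t (by simp)
        · rintro rfl t s hs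
          have : s = t := by ext; simpa using hs
          rw [this]
      rw [this, Finset.sum_ite_eq']
      simp
    | succ k IH =>
      intro hk1 w'
      have hk : k ≤ N' := by omega
      rw [pow_succ, ← Matrix.vecMul_vecMul]
      have hvm : ∀ w'', Matrix.vecMul (Matrix.vecMul u (P ^ k)) P w''
          = ∑ w, Matrix.vecMul u (P ^ k) w * P w w'' := by
        intro w''
        simp [Matrix.vecMul, dotProduct]
      rw [hvm w']
      have step1 : (∑ w, Matrix.vecMul u (P ^ k) w * P w w')
          = ∑ j : Fin m, Matrix.vecMul u (P ^ k) (push j w') * dd (w' (Fin.last N')) := by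
        rw [← hcompat_sum (fun w => Matrix.vecMul u (P ^ k) w * dd (w' (Fin.last N'))) w']
        apply Finset.sum_congr rfl
        intro w _
        rw [hPform w w']
        by_cases hc : ∀ t : Fin N', w' t.castSucc = w t.succ
        · rw [if_pos hc, if_pos hc]
        · rw [if_neg hc, if_neg hc, mul_zero]
      rw [step1]
      have hprodpush : ∀ j : Fin m,
          (∏ t : Fin (N' + 1), if N' + 1 - k ≤ (t : ℕ) then dd (push j w' t) else 1)
          = ∏ t : Fin N', if N' - k ≤ (t : ℕ) then dd (w' t.castSucc) else 1 := by
        intro j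
        rw [Fin.prod_univ_succ]
        have h0 : (if N' + 1 - k ≤ ((0 : Fin (N' + 1)) : ℕ) then dd (push j w' 0) else 1) = 1 := by
          rw [if_neg]; simp; omega
        rw [h0, one_mul]
        apply Finset.prod_congr rfl
        intro t _
        rw [hpushs]
        apply if_congr _ rfl rfl
        simp; omega
      have step2 : ∀ j : Fin m, Matrix.vecMul u (P ^ k) (push j w')
          = (∏ t : Fin N', if N' - k ≤ (t : ℕ) then dd (w' t.castSucc) else 1)
            * g k (push j w') := by
        intro j
        rw [IH (by omega) (push j w'), hprodpush j]
      have htarget : (∏ t : Fin (N' + 1), if N' + 1 - (k + 1) ≤ (t : ℕ) then dd (w' t) else 1)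
          = (∏ t : Fin N', if N' - k ≤ (t : ℕ) then dd (w' t.castSucc) else 1)
            * dd (w' (Fin.last N')) := by
        rw [Fin.prod_univ_castSucc]
        congr 1
        · apply Finset.prod_congr rfl
          intro t _
          apply if_congr _ rfl rfl
          simp only [Fin.coe_castSucc]
          omega
        · rw [if_pos]
          simp only [Fin.val_last]
          omega
      rw [htarget, ← hgrec k (by omega) w', Finset.mul_sum]
      rw [Finset.sum_congr rfl (fun j _ => by rw [step2 j])]
      apply Finset.sum_congr rfl
      intro j _
      ring
  -- conclusion
  funext w'
  have hfin := main (N' + 1) le_rfl w'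
  have hg0 : g (N' + 1) w' = 0 := by
    simp only [hg]
    have : ∀ a : Fin (N' + 1) → Fin m,
        (∀ t s : Fin (N' + 1), (s : ℕ) = (t : ℕ) + (N' + 1) → a s = w' t) := by
      intro a t s hs
      exfalso
      have := s.is_lt
      omega
    rw [Finset.sum_congr rfl (fun a _ => if_pos (this a))]
    exact hu
  rw [Pi.zero_apply, hfin, hg0, mul_zero]
end

section
/- Let f̃ : ℝ^d → ℝ^d be a linear map with f̃(ℤ^d) = ℤ^d, and let f := f̃ (mod 1) be the induced map on the d-dimensional unit torus [0,1)^d. For n ∈ ℕ let P_n denote the Ulam matrix of f constructed with respect to the partition of the torus into n^d congruent cubes of side 1/n, with entries p_{ij} = m(Δ_i ∩ f^{-1}Δ_j)/m(Δ_i). Then for every positive integer k, every eigenvalue r of P_n is also an eigenvalue of P_{kn}. -/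
open MeasureTheory Set Pointwise

namespace UlamAux

/-- core coordinate arithmetic -/
lemma coord_iff {nn : ℕ} (hn : 0 < nn) (e b : ℕ) (hb : b < nn) (y : ℝ) :
    (((nn * e + b : ℕ) : ℝ) / nn ≤ y ∧ y < (((nn * e + b : ℕ) : ℝ) + 1) / nn) ↔
      (⌊y⌋ = (e : ℤ) ∧ (b : ℝ) / nn ≤ Int.fract y ∧ Int.fract y < ((b : ℝ) + 1) / nn) := by
  have hn' : (0:ℝ) < nn := by exact_mod_cast hn
  have hb' : (b : ℝ) + 1 ≤ nn := by exact_mod_cast hb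
  push_cast
  rw [div_le_iff₀ hn', lt_div_iff₀ hn', div_le_iff₀ hn', lt_div_iff₀ hn']
  constructor
  · rintro ⟨h1, h2⟩
    have hfl : ⌊y⌋ = (e : ℤ) := by
      rw [Int.floor_eq_iff]
      push_cast
      constructor <;> nlinarith
    have hfr : Int.fract y = y - e := by
      rw [Int.fract, hfl]; push_cast; ring
    rw [hfr]
    refine ⟨hfl, by nlinarith, by nlinarith⟩
  · rintro ⟨hfl, h1, h2⟩
    have hfr : Int.fract y = y - e := by
      rw [Int.fract, hfl]; push_cast; ring
    rw [hfr] at h1 h2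
    constructor <;> nlinarith

variable {d : ℕ}


def box (n : ℕ) (c : Fin d → Fin n) : Set (Fin d → ℝ) :=
  {v : Fin d → ℝ | ∀ i, ((c i : ℕ) : ℝ) / n ≤ v i ∧ v i < (((c i : ℕ) : ℝ) + 1) / n}

lemma box_eq_pi (n : ℕ) (c : Fin d → Fin n) :
    box n c = Set.univ.pi fun i => Set.Ico (((c i : ℕ) : ℝ) / n) ((((c i : ℕ) : ℝ) + 1) / n) := by
  ext v; simp [box, Set.mem_pi, Set.mem_Ico]

lemma measurable_box (n : ℕ) (c : Fin d → Fin n) : MeasurableSet (box n c) := by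
  rw [box_eq_pi]; exact MeasurableSet.univ_pi fun i => measurableSet_Ico

lemma volume_box {n : ℕ} (hn : 0 < n) (c : Fin d → Fin n) :
    volume (box n c) = ENNReal.ofReal ((n : ℝ)⁻¹) ^ d := by
  have hn' : (0:ℝ) < n := by exact_mod_cast hn
  rw [box_eq_pi, volume_pi_pi]
  have : ∀ i : Fin d, volume (Set.Ico (((c i : ℕ) : ℝ) / n) ((((c i : ℕ) : ℝ) + 1) / n))
      = ENNReal.ofReal ((n : ℝ)⁻¹) := by
    intro i
    rw [Real.volume_Ico]
    congr 1
    field_simp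
    ring
  simp only [this, Finset.prod_const, Finset.card_univ, Fintype.card_fin]

lemma box_disjoint {n : ℕ} (hn : 0 < n) {c c' : Fin d → Fin n} (h : c ≠ c') :
    Disjoint (box n c) (box n c') := by
  have hn' : (0:ℝ) < n := by exact_mod_cast hn
  rw [Set.disjoint_left]
  intro v hv hv'
  obtain ⟨i, hi⟩ := Function.ne_iff.mp h
  have h1 := hv i
  have h2 := hv' i
  have e1 : ((c i : ℕ) : ℝ) < ((c' i : ℕ) : ℝ) + 1 := by
    have := lt_of_le_of_lt h1.1 h2.2
    rwa [div_lt_div_iff_of_pos_right hn'] at this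
  have e2 : ((c' i : ℕ) : ℝ) < ((c i : ℕ) : ℝ) + 1 := by
    have := lt_of_le_of_lt h2.1 h1.2
    rwa [div_lt_div_iff_of_pos_right hn'] at this
  have e1' : (c i : ℕ) < (c' i : ℕ) + 1 := by exact_mod_cast e1
  have e2' : (c' i : ℕ) < (c i : ℕ) + 1 := by exact_mod_cast e2
  exact hi (Fin.ext (by omega))


def res {n k : ℕ} (hn : 0 < n) (c : Fin d → Fin (k * n)) : Fin d → Fin n :=
  fun i => ⟨(c i : ℕ) % n, Nat.mod_lt _ hn⟩

noncomputable def gmap (d k : ℕ) : (Fin d → ℝ) → (Fin d → ℝ) := fun v i => Int.fract ((k : ℝ) * v i)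

noncomputable def tmap (d : ℕ) (n k : ℕ) (c : Fin d → Fin (k * n)) : (Fin d → ℝ) → (Fin d → ℝ) :=
  fun v i => (v i + (((c i : ℕ) / n : ℕ) : ℝ)) / k

lemma scale_iff {k : ℕ} (hk : 0 < k) (p q x : ℝ) :
    (p / k ≤ x ∧ x < q / k) ↔ (p ≤ k * x ∧ k * x < q) := by
  have hk' : (0:ℝ) < k := by exact_mod_cast hk
  rw [div_le_iff₀ hk', lt_div_iff₀ hk']
  constructor <;> rintro ⟨h1, h2⟩ <;> constructor <;> nlinarith

/-- decomposition of a fine-cube membership -/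
lemma fine_coord {n k : ℕ} (hn : 0 < n) (hk : 0 < k) (a : ℕ) (ha : a < k * n) (x : ℝ) :
    ((a : ℝ) / (k * n : ℕ) ≤ x ∧ x < ((a : ℝ) + 1) / (k * n : ℕ)) ↔
      (⌊(k : ℝ) * x⌋ = ((a / n : ℕ) : ℤ) ∧ ((a % n : ℕ) : ℝ) / n ≤ Int.fract ((k : ℝ) * x) ∧
        Int.fract ((k : ℝ) * x) < (((a % n : ℕ) : ℝ) + 1) / n) := by
  have key := coord_iff hn (a / n) (a % n) (Nat.mod_lt _ hn) ((k : ℝ) * x)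
  have ha' : n * (a / n) + a % n = a := Nat.div_add_mod a n
  rw [ha'] at key
  rw [← key]
  have hkn : ((k * n : ℕ) : ℝ) = (n : ℝ) * k := by push_cast; ring
  have h1 : (a : ℝ) / ((k * n : ℕ) : ℝ) = ((a : ℝ) / n) / k := by rw [hkn, div_div]
  have h2 : ((a : ℝ) + 1) / ((k * n : ℕ) : ℝ) = (((a : ℝ) + 1) / n) / k := by rw [hkn, div_div]
  rw [h1, h2, scale_iff hk]

lemma box_subset_unit {n : ℕ} (hn : 0 < n) (D : Fin d → Fin n) {v : Fin d → ℝ}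
    (hv : v ∈ box n D) (i : Fin d) : 0 ≤ v i ∧ v i < 1 := by
  have hn' : (0:ℝ) < n := by exact_mod_cast hn
  have h := hv i
  have hD : ((D i : ℕ) : ℝ) + 1 ≤ n := by exact_mod_cast (D i).isLt
  constructor
  · exact le_trans (by positivity) h.1
  · calc v i < (((D i : ℕ) : ℝ) + 1) / n := h.2
      _ ≤ 1 := (div_le_one hn').mpr hD

lemma tmap_image {n k : ℕ} (hn : 0 < n) (hk : 0 < k) (c : Fin d → Fin (k * n))
    (S : Set (Fin d → ℝ)) :
    box (k * n) c ∩ gmap d k ⁻¹' S = tmap d n k c '' (box n (res hn c) ∩ S) := by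
  have hk' : (0:ℝ) < k := by exact_mod_cast hk
  ext w
  constructor
  · rintro ⟨hw, hgw⟩
    refine ⟨gmap d k w, ⟨?_, hgw⟩, ?_⟩
    · intro i
      have h := (fine_coord hn hk (c i) (c i).isLt (w i)).mp (hw i)
      exact ⟨h.2.1, h.2.2⟩
    · funext i
      have h := (fine_coord hn hk (c i) (c i).isLt (w i)).mp (hw i)
      have hfr : Int.fract ((k:ℝ) * w i) = (k:ℝ) * w i - (((c i : ℕ) / n : ℕ) : ℝ) := by
        rw [Int.fract, h.1, Int.cast_natCast]
      simp only [tmap, gmap, hfr]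
      field_simp
      ring
  · rintro ⟨v, ⟨hv, hvS⟩, rfl⟩
    have hunit : ∀ i, 0 ≤ v i ∧ v i < 1 := box_subset_unit hn _ hv
    have hkey : ∀ i, (k:ℝ) * tmap d n k c v i = v i + (((c i : ℕ) / n : ℕ) : ℝ) := by
      intro i; simp only [tmap]; field_simp
    have hfloor : ∀ i, ⌊(k:ℝ) * tmap d n k c v i⌋ = (((c i : ℕ) / n : ℕ) : ℤ) := by
      intro i
      rw [hkey i, Int.floor_add_natCast, Int.floor_eq_zero_iff.2
        (Set.mem_Ico.mpr ⟨(hunit i).1, (hunit i).2⟩), zero_add]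
    have hfract : ∀ i, Int.fract ((k:ℝ) * tmap d n k c v i) = v i := by
      intro i
      rw [Int.fract, hfloor i, hkey i, Int.cast_natCast]
      ring
    have hg : gmap d k (tmap d n k c v) = v := funext fun i => hfract i
    refine ⟨?_, by rw [Set.mem_preimage, hg]; exact hvS⟩
    intro i
    rw [fine_coord hn hk (c i) (c i).isLt]
    refine ⟨hfloor i, ?_, ?_⟩ <;> rw [hfract i]
    · have := (hv i).1
      simpa [res] using this
    · have := (hv i).2
      simpa [res] using this

lemma mem_box_iff {n k : ℕ} (hn : 0 < n) (hk : 0 < k) (D : Fin d → Fin n) (u : Fin d → ℝ)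
    (hu : ∀ i, 0 ≤ u i ∧ u i < 1) :
    gmap d k u ∈ box n D ↔ ∃ c' : Fin d → Fin (k * n), res hn c' = D ∧ u ∈ box (k * n) c' := by
  have hk' : (0:ℝ) < k := by exact_mod_cast hk
  constructor
  · intro hg
    have hfl : ∀ i, 0 ≤ ⌊(k:ℝ) * u i⌋ ∧ ⌊(k:ℝ) * u i⌋ < k := by
      intro i
      constructor
      · exact Int.floor_nonneg.mpr (by nlinarith [(hu i).1])
      · exact Int.floor_lt.mpr (by push_cast; nlinarith [(hu i).2])
    refine ⟨fun i => ⟨n * (⌊(k:ℝ) * u i⌋).toNat + (D i : ℕ), ?_⟩, ?_, ?_⟩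
    · have h1 : (⌊(k:ℝ) * u i⌋).toNat < k := by
        have := (hfl i).2; omega
      have h2 : (D i : ℕ) < n := (D i).isLt
      calc n * (⌊(k:ℝ) * u i⌋).toNat + (D i : ℕ) < n * (⌊(k:ℝ) * u i⌋).toNat + n := by omega
        _ ≤ n * k := by nlinarith
        _ = k * n := Nat.mul_comm n k
    · funext i
      apply Fin.ext
      show (n * (⌊(k:ℝ) * u i⌋).toNat + (D i : ℕ)) % n = (D i : ℕ)
      rw [Nat.add_comm, Nat.add_mul_mod_self_left]
      exact Nat.mod_eq_of_lt (D i).isLt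
    · intro i
      rw [fine_coord hn hk _ (by
        have h1 : (⌊(k:ℝ) * u i⌋).toNat < k := by have := (hfl i).2; omega
        have h2 : (D i : ℕ) < n := (D i).isLt
        calc n * (⌊(k:ℝ) * u i⌋).toNat + (D i : ℕ) < n * (⌊(k:ℝ) * u i⌋).toNat + n := by omega
          _ ≤ n * k := by nlinarith
          _ = k * n := Nat.mul_comm n k) (u i)]
      have hdiv : (n * (⌊(k:ℝ) * u i⌋).toNat + (D i : ℕ)) / n = (⌊(k:ℝ) * u i⌋).toNat := by
        rw [Nat.add_comm, Nat.add_mul_div_left _ _ hn, Nat.div_eq_of_lt (D i).isLt, Nat.zero_add]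
      have hmod : (n * (⌊(k:ℝ) * u i⌋).toNat + (D i : ℕ)) % n = (D i : ℕ) := by
        rw [Nat.add_comm, Nat.add_mul_mod_self_left]; exact Nat.mod_eq_of_lt (D i).isLt
      rw [hdiv, hmod]
      refine ⟨by rw [Int.toNat_of_nonneg (hfl i).1], (hg i).1, (hg i).2⟩
  · rintro ⟨c', hres, hu'⟩
    intro i
    have h := (fine_coord hn hk (c' i) (c' i).isLt (u i)).mp (hu' i)
    have hm : (c' i : ℕ) % n = (D i : ℕ) := by
      have := congrFun hres i
      simpa [res, Fin.ext_iff] using this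
    rw [hm] at h
    exact ⟨h.2.1, h.2.2⟩

lemma gmap_comm {k : ℕ} (L : (Fin d → ℝ) →ₗ[ℝ] (Fin d → ℝ))
    (hL : ∀ v : Fin d → ℝ, (∀ i, ∃ z : ℤ, v i = (z : ℝ)) → ∀ i, ∃ z : ℤ, L v i = (z : ℝ))
    (f : (Fin d → ℝ) → (Fin d → ℝ)) (hf : ∀ v i, f v i = Int.fract (L v i)) (v : Fin d → ℝ) :
    gmap d k (f v) = f (gmap d k v) := by
  funext i
  have hgv : gmap d k v = (k : ℝ) • v - fun j => ((⌊(k:ℝ) * v j⌋ : ℤ) : ℝ) := by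
    funext j
    simp only [gmap, Pi.sub_apply, Pi.smul_apply, smul_eq_mul, Int.fract]
  obtain ⟨z, hz⟩ := hL (fun j => ((⌊(k:ℝ) * v j⌋ : ℤ) : ℝ)) (fun j => ⟨_, rfl⟩) i
  rw [hf, hgv, map_sub, LinearMap.map_smul, Pi.sub_apply, Pi.smul_apply, smul_eq_mul, hz,
    Int.fract_sub_intCast]
  simp only [gmap, hf]
  have hin : Int.fract (L v i) = L v i - ((⌊L v i⌋ : ℤ) : ℝ) := rfl
  rw [hin, mul_sub]
  have : (k:ℝ) * ((⌊L v i⌋ : ℤ) : ℝ) = (((k : ℤ) * ⌊L v i⌋ : ℤ) : ℝ) := by push_cast; ring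
  rw [this, Int.fract_sub_intCast]

lemma volume_tmap_image {n k : ℕ} (hk : 0 < k) (c : Fin d → Fin (k * n))
    (A : Set (Fin d → ℝ)) :
    volume (tmap d n k c '' A) = ENNReal.ofReal ((k : ℝ)⁻¹ ^ d) * volume A := by
  have hk' : (0:ℝ) < k := by exact_mod_cast hk
  set e : Fin d → ℝ := fun i => (((c i : ℕ) / n : ℕ) : ℝ) with he
  have himg : tmap d n k c '' A = (k : ℝ)⁻¹ • ((fun v => v + e) '' A) := by
    rw [← Set.image_smul, ← Set.image_comp]
    apply Set.image_congr
    intro v _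
    funext i
    simp only [Function.comp_apply, tmap, Pi.smul_apply, Pi.add_apply, smul_eq_mul]
    field_simp
    rfl
  rw [himg, Measure.addHaar_smul_of_nonneg volume (by positivity : (0:ℝ) ≤ (k:ℝ)⁻¹)]
  have : volume ((fun v => v + e) '' A) = volume A := by
    have : (fun v : Fin d → ℝ => v + e) '' A = (fun v : Fin d → ℝ => v + (-e)) ⁻¹' A := by
      ext x
      simp only [Set.mem_image, Set.mem_preimage]
      constructor
      · rintro ⟨v, hv, rfl⟩; simpa using hv
      · intro hx; exact ⟨x + (-e), hx, by abel⟩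
    rw [this, measure_preimage_add_right]
  rw [this, Module.finrank_fin_fun]

lemma key_vol {n k : ℕ} (hn : 0 < n) (hk : 0 < k)
    (f : (Fin d → ℝ) → (Fin d → ℝ)) (hfm : Measurable f)
    (hfu : ∀ v i, 0 ≤ f v i ∧ f v i < 1)
    (hcomm : ∀ v, gmap d k (f v) = f (gmap d k v))
    (c : Fin d → Fin (k * n)) (D : Fin d → Fin n) :
    ∑ c' ∈ Finset.univ.filter (fun c' => res hn c' = D),
        volume (box (k*n) c ∩ f ⁻¹' box (k*n) c')
      = ENNReal.ofReal ((k : ℝ)⁻¹ ^ d) * volume (box n (res hn c) ∩ f ⁻¹' box n D) := by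
  have hkn : 0 < k * n := Nat.mul_pos hk hn
  rw [← measure_biUnion_finset ?hd ?hm]
  case hd =>
    intro c₁ _ c₂ _ hne
    exact ((box_disjoint hkn hne).preimage f).mono inter_subset_right inter_subset_right
  case hm =>
    intro c' _
    exact (measurable_box _ _).inter (hfm (measurable_box _ _))
  have hun : ⋃ c' ∈ Finset.univ.filter (fun c' => res hn c' = D),
      (box (k*n) c ∩ f ⁻¹' box (k*n) c')
      = box (k*n) c ∩ gmap d k ⁻¹' (f ⁻¹' box n D) := by
    ext x
    simp only [Set.mem_iUnion, Finset.mem_filter, Finset.mem_univ, true_and, Set.mem_inter_iff,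
      Set.mem_preimage, exists_prop]
    constructor
    · rintro ⟨c', hres, hx, hfx⟩
      refine ⟨hx, ?_⟩
      rw [← hcomm x]
      exact (mem_box_iff hn hk D (f x) (fun i => hfu x i)).mpr ⟨c', hres, hfx⟩
    · rintro ⟨hx, hg⟩
      rw [← hcomm x] at hg
      obtain ⟨c', hres, hfx⟩ := (mem_box_iff hn hk D (f x) (fun i => hfu x i)).mp hg
      exact ⟨c', hres, hx, hfx⟩
  rw [hun, tmap_image hn hk c (f ⁻¹' box n D), volume_tmap_image hk]

end UlamAux
open MeasureTheory Set UlamAux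

/-- Let `f̃ : ℝ^d → ℝ^d` be a linear map with `f̃(ℤ^d) = ℤ^d` and `f = f̃ (mod 1)` the
induced map on the unit torus `[0,1)^d`. Let `P_n` be the Ulam matrix of `f` for the
partition of the torus into `n^d` congruent cubes of side `1/n`. Then for every positive
integer `k`, every eigenvalue `r` of `P_n` is also an eigenvalue of `P_{kn}`. -/
theorem ulam_eigenvalues_persist_on_refinement
    (d : ℕ) (L : (Fin d → ℝ) →ₗ[ℝ] (Fin d → ℝ))
    (hL : L '' {v : Fin d → ℝ | ∀ i, ∃ z : ℤ, v i = (z : ℝ)}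
        = {v : Fin d → ℝ | ∀ i, ∃ z : ℤ, v i = (z : ℝ)})
    (f : (Fin d → ℝ) → (Fin d → ℝ))
    (hf : ∀ v i, f v i = Int.fract (L v i))
    (Δ : (n : ℕ) → (Fin d → Fin n) → Set (Fin d → ℝ))
    (hΔ : ∀ n c, Δ n c = {v : Fin d → ℝ |
      ∀ i, ((c i : ℕ) : ℝ) / n ≤ v i ∧ v i < (((c i : ℕ) : ℝ) + 1) / n})
    (P : (n : ℕ) → Matrix (Fin d → Fin n) (Fin d → Fin n) ℝ)
    (hP : ∀ n c c', P n c c'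
      = (volume (Δ n c ∩ f ⁻¹' Δ n c')).toReal / (volume (Δ n c)).toReal)
    (n k : ℕ) (hn : 0 < n) (hk : 0 < k)
    (r : ℂ) (hr : r ∈ spectrum ℂ ((P n).map Complex.ofReal)) :
    r ∈ spectrum ℂ ((P (k * n)).map Complex.ofReal) := by
  classical
  have hkn : 0 < k * n := Nat.mul_pos hk hn
  have hn' : (0:ℝ) < n := by exact_mod_cast hn
  have hk' : (0:ℝ) < k := by exact_mod_cast hk
  -- basic facts about f
  have hfm : Measurable f := by
    have hLm : Measurable (L : (Fin d → ℝ) → (Fin d → ℝ)) :=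
      L.continuous_of_finiteDimensional.measurable
    have : f = fun v => fun i => Int.fract (L v i) := by funext v i; exact hf v i
    rw [this]
    exact measurable_pi_lambda _ fun i =>
      Measurable.comp measurable_fract ((measurable_pi_apply i).comp hLm)
  have hfu : ∀ v i, 0 ≤ f v i ∧ f v i < 1 := fun v i => by
    rw [hf]; exact ⟨Int.fract_nonneg _, Int.fract_lt_one _⟩
  have hLZ : ∀ v : Fin d → ℝ, (∀ i, ∃ z : ℤ, v i = (z : ℝ)) → ∀ i, ∃ z : ℤ, L v i = (z : ℝ) := by
    intro v hv
    have : L v ∈ {v : Fin d → ℝ | ∀ i, ∃ z : ℤ, v i = (z : ℝ)} := by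
      rw [← hL]; exact ⟨v, hv, rfl⟩
    exact this
  have hcomm : ∀ v, gmap d k (f v) = f (gmap d k v) := gmap_comm L hLZ f hf
  -- Δ equals box
  have hbox : ∀ m (c : Fin d → Fin m), Δ m c = box m c := fun m c => hΔ m c
  -- the key matrix identity
  have key : ∀ (c : Fin d → Fin (k * n)) (D : Fin d → Fin n),
      ∑ c' ∈ Finset.univ.filter (fun c' => res hn c' = D), P (k * n) c c'
        = P n (res hn c) D := by
    intro c D
    have hvol := key_vol hn hk f hfm hfu hcomm c D
    have hfin : ∀ c' : Fin d → Fin (k * n),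
        volume (box (k*n) c ∩ f ⁻¹' box (k*n) c') ≠ ⊤ := by
      intro c'
      refine ne_top_of_le_ne_top ?_ (measure_mono inter_subset_left)
      rw [volume_box hkn]
      exact (ENNReal.pow_lt_top ENNReal.ofReal_lt_top).ne
    have hfin2 : volume (box n (res hn c) ∩ f ⁻¹' box n D) ≠ ⊤ := by
      refine ne_top_of_le_ne_top ?_ (measure_mono inter_subset_left)
      rw [volume_box hn]
      exact (ENNReal.pow_lt_top ENNReal.ofReal_lt_top).ne
    simp only [hP, hbox]
    rw [← Finset.sum_div, ← ENNReal.toReal_sum (fun c' _ => hfin c'), hvol,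
      ENNReal.toReal_mul, ENNReal.toReal_ofReal (by positivity),
      volume_box hkn, volume_box hn, ENNReal.toReal_pow, ENNReal.toReal_pow,
      ENNReal.toReal_ofReal (by positivity), ENNReal.toReal_ofReal (by positivity)]
    have hcast : (((k * n : ℕ) : ℝ))⁻¹ = (k : ℝ)⁻¹ * (n : ℝ)⁻¹ := by
      push_cast; rw [mul_inv]
    rw [hcast, mul_pow]
    field_simp
  -- extract eigenvector of P n
  set M : Matrix (Fin d → Fin n) (Fin d → Fin n) ℂ := (P n).map Complex.ofReal with hM
  set M' : Matrix (Fin d → Fin (k*n)) (Fin d → Fin (k*n)) ℂ :=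
    (P (k*n)).map Complex.ofReal with hM'
  have h1 : ¬ IsUnit (algebraMap ℂ _ r - M) := spectrum.mem_iff.mp hr
  have hdet : (algebraMap ℂ (Matrix (Fin d → Fin n) (Fin d → Fin n) ℂ) r - M).det = 0 := by
    by_contra hd
    exact h1 ((Matrix.isUnit_iff_isUnit_det _).mpr (Ne.isUnit hd))
  obtain ⟨v, hv0, hv⟩ := Matrix.exists_mulVec_eq_zero_iff.mpr hdet
  have hev : M.mulVec v = r • v := by
    rw [Algebra.algebraMap_eq_smul_one, Matrix.sub_mulVec, Matrix.smul_mulVec,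
      Matrix.one_mulVec, sub_eq_zero] at hv
    exact hv.symm
  -- lift the eigenvector
  set w : (Fin d → Fin (k*n)) → ℂ := fun c => v (res hn c) with hw
  have hw0 : w ≠ 0 := by
    intro hcontra
    apply hv0
    funext D
    have hsurj : ∃ c : Fin d → Fin (k*n), res hn c = D := by
      refine ⟨fun i => ⟨(D i : ℕ), lt_of_lt_of_le (D i).isLt (Nat.le_mul_of_pos_left n hk)⟩, ?_⟩
      funext i
      exact Fin.ext (Nat.mod_eq_of_lt (D i).isLt)
    obtain ⟨c, rfl⟩ := hsurj
    have := congrFun hcontra c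
    simpa [hw] using this
  have hev' : M'.mulVec w = r • w := by
    funext c
    show ∑ c', M' c c' * w c' = r • w c
    calc ∑ c', M' c c' * w c'
        = ∑ D : Fin d → Fin n, ∑ c' ∈ Finset.univ.filter (fun c' => res hn c' = D),
            M' c c' * w c' := by
          rw [Finset.sum_fiberwise_of_maps_to (fun x _ => Finset.mem_univ (res hn x))]
      _ = ∑ D : Fin d → Fin n, ((P n (res hn c) D : ℝ) : ℂ) * v D := by
          refine Finset.sum_congr rfl fun D _ => ?_
          have : ∀ c' ∈ Finset.univ.filter (fun c' => res hn c' = D),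
              M' c c' * w c' = ((P (k*n) c c' : ℝ) : ℂ) * v D := by
            intro c' hc'
            have hres : res hn c' = D := (Finset.mem_filter.mp hc').2
            simp [hM', hw, hres, Matrix.map_apply]
          rw [Finset.sum_congr rfl this, ← Finset.sum_mul, ← Complex.ofReal_sum, key c D]
      _ = (M.mulVec v) (res hn c) := by
          simp [hM, Matrix.mulVec, dotProduct, Matrix.map_apply]
      _ = r • w c := by rw [hev]; simp [hw]
  -- conclude
  rw [spectrum.mem_iff]
  intro hu
  have hdet' : (algebraMap ℂ _ r - M').det ≠ 0 :=
    ((Matrix.isUnit_iff_isUnit_det _).mp hu).ne_zero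
  apply hdet'
  rw [← Matrix.exists_mulVec_eq_zero_iff]
  refine ⟨w, hw0, ?_⟩
  rw [Algebra.algebraMap_eq_smul_one, Matrix.sub_mulVec, Matrix.smul_mulVec,
    Matrix.one_mulVec, hev', sub_self]
end

section
/- Let h : ℝ → ℝ be a C¹ function with compact support. Then ∫_ℝ |h(x + δ) − h(x)| dx = (|δ| + o(δ)) · var(h) as δ → 0; that is, lim_{δ→0} (1/|δ|) ∫_ℝ |h(x + δ) − h(x)| dx = var(h), where var(h) = ∫_ℝ |h'(x)| dx is the total variation of h. -/
open MeasureTheory Filter Topology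

/-- For a compactly supported `C¹` function `h : ℝ → ℝ`,
`∫ |h(x+δ) - h(x)| dx = (|δ| + o(δ)) · var(h)` as `δ → 0`; that is,
`lim_{δ→0} (1/|δ|) ∫ |h(x+δ) - h(x)| dx = var(h)`, where the total variation of `h`
equals `var(h) = ∫ |h'(x)| dx`. -/
theorem translation_L1_rate_eq_variation
    (h : ℝ → ℝ) (hsmooth : ContDiff ℝ 1 h) (hsupp : HasCompactSupport h) :
    Tendsto (fun δ : ℝ => (1 / |δ|) * ∫ x : ℝ, |h (x + δ) - h x|)
      (𝓝[≠] (0 : ℝ)) (𝓝 (∫ x : ℝ, |deriv h x|)) := by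
  have hdiff : Differentiable ℝ h := hsmooth.differentiable one_ne_zero
  have hcont : Continuous h := hdiff.continuous
  have hderiv_cont : Continuous (deriv h) := (hsmooth.iterate_deriv' 0 1).continuous
  -- bound on |deriv h|
  obtain ⟨C, hC⟩ : ∃ C, ∀ x, ‖deriv h x‖ ≤ C :=
    hsupp.deriv.exists_bound_of_continuous hderiv_cont
  have hC0 : 0 ≤ C := le_trans (norm_nonneg _) (hC 0)
  -- Lipschitz bound from MVT
  have lipW : LipschitzWith C.toNNReal h :=
    lipschitzWith_of_nnnorm_deriv_le hdiff fun x => by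
      simpa [← norm_toNNReal] using Real.toNNReal_le_toNNReal (hC x)
  have lip : ∀ x y : ℝ, |h y - h x| ≤ C * |y - x| := by
    intro x y
    have := lipW.dist_le_mul y x
    rw [Real.dist_eq, Real.dist_eq] at this
    calc |h y - h x| ≤ (C.toNNReal : ℝ) * |y - x| := this
    _ ≤ C * |y - x| := by
        gcongr
        exact Real.toNNReal_le_iff_le_coe.mp le_rfl |>.trans (by simp [Real.coe_toNNReal _ hC0])
  set K : Set ℝ := Metric.cthickening 1 (tsupport h) with hK
  have hKcompact : IsCompact K := hsupp.cthickening
  set bound : ℝ → ℝ := K.indicator (fun _ => C) with hbdef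
  have key : Tendsto (fun δ : ℝ => ∫ x : ℝ, (1 / |δ|) * |h (x + δ) - h x|)
      (𝓝[≠] (0 : ℝ)) (𝓝 (∫ x : ℝ, |deriv h x|)) := by
    apply tendsto_integral_filter_of_dominated_convergence bound
    · filter_upwards with δ
      exact (continuous_const.mul
        (((hcont.comp (continuous_id.add continuous_const)).sub hcont).abs)).aestronglyMeasurable
    · filter_upwards [self_mem_nhdsWithin,
        eventually_nhdsWithin_of_eventually_nhds (eventually_abs_sub_lt 0 one_pos)] with δ hδ hδ1
      have hδne : δ ≠ 0 := hδ
      have hδ' : 0 < |δ| := abs_pos.mpr hδne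
      have hδle : |δ| ≤ 1 := by simpa using hδ1.le
      filter_upwards with x
      by_cases hx : x ∈ K
      · have hle : (1 / |δ|) * |h (x + δ) - h x| ≤ C := by
          rw [one_div, inv_mul_le_iff₀ hδ']
          calc |h (x + δ) - h x| ≤ C * |x + δ - x| := lip x (x + δ)
          _ = |δ| * C := by rw [mul_comm]; simp
        rw [Real.norm_eq_abs, abs_of_nonneg (mul_nonneg (by positivity) (abs_nonneg _)),
          hbdef, Set.indicator_of_mem hx]
        exact hle
      · have hx1 : x ∉ tsupport h := fun hmem =>
          hx (Metric.self_subset_cthickening _ hmem)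
        have hx2 : x + δ ∉ tsupport h := by
          intro hmem
          refine hx (Metric.mem_cthickening_of_dist_le x (x + δ) 1 _ hmem ?_)
          rw [Real.dist_eq]
          simpa [abs_sub_comm] using hδle
        rw [image_eq_zero_of_notMem_tsupport hx1, image_eq_zero_of_notMem_tsupport hx2,
          hbdef, Set.indicator_of_notMem hx]
        simp
    · rw [hbdef, integrable_indicator_iff hKcompact.measurableSet]
      exact (integrableOn_const_iff).mpr (Or.inr hKcompact.measure_lt_top)
    · filter_upwards with x
      have hd : HasDerivAt h (deriv h x) x := (hdiff x).hasDerivAt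
      have hslope := hasDerivAt_iff_tendsto_slope.mp hd
      have hmap : Tendsto (fun δ : ℝ => x + δ) (𝓝[≠] (0:ℝ)) (𝓝[≠] x) := by
        rw [tendsto_nhdsWithin_iff]
        constructor
        · have : Tendsto (fun δ : ℝ => x + δ) (𝓝 (0:ℝ)) (𝓝 (x + 0)) :=
            (continuous_const.add continuous_id).tendsto (0:ℝ)
          simpa using this.mono_left nhdsWithin_le_nhds
        · filter_upwards [self_mem_nhdsWithin] with δ hδ
          have : δ ≠ 0 := hδ
          simp only [Set.mem_compl_iff, Set.mem_singleton_iff]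
          intro hc
          exact this (by linarith)
      refine ((hslope.comp hmap).abs).congr (fun δ => ?_)
      show |slope h x (x + δ)| = (1 / |δ|) * |h (x + δ) - h x|
      rw [slope_def_field, div_eq_inv_mul]
      have : x + δ - x = δ := by ring
      rw [this, abs_mul, abs_inv, one_div]
  refine key.congr (fun δ => ?_)
  exact integral_const_mul _ _
end

section
/- Let λ > 1, c ∈ (0,1), and a, b > 0 with I := [c − a, c + b] ⊆ [0,1]. Let f be a map which on I is given by f(x) = c + λ(x − c) for x ≤ c and f(x) = c − λ(x − c) for x > c (so c is a fixed turning point with slopes λ and −λ). Then m({x ∈ I : f(x) ∈ I})/m(I) = (a + min{a, λb}) / (λ(a + b)). In particular, if a = λb this probability equals 2/(λ + 1), and 2/(λ+1) > 1/λ. -/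
/-!
On `I` the map is `f x = c - λ|x - c|`, so `f x ∈ I` exactly when `λ|x - c| ≤ a`: the points of `I`
returning to `I` form `I ∩ [c - a/λ, c + a/λ] = [c - a/λ, c + min b (a/λ)]`, an interval of length
`(a + min a (λb))/λ`. With `a = λb` this is `2b`, against `m(I) = (λ + 1)b`.
-/

open MeasureTheory Set

section TurningPoint

variable {lam c a b : ℝ} {f : ℝ → ℝ} {s : Set ℝ}

lemma eq_sub_mul_abs_of_turning_point
    (hf₁ : ∀ x ∈ s, x ≤ c → f x = c + lam * (x - c))
    (hf₂ : ∀ x ∈ s, c < x → f x = c - lam * (x - c)) {x : ℝ} (hx : x ∈ s) :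
    f x = c - lam * |x - c| := by
  rcases le_or_gt x c with hxc | hxc
  · rw [hf₁ x hx hxc, abs_of_nonpos (sub_nonpos.2 hxc)]
    ring
  · rw [hf₂ x hx hxc, abs_of_pos (sub_pos.2 hxc)]

lemma sub_mul_abs_mem_Icc_iff (hlam : 0 < lam) (hb : 0 ≤ b) (x : ℝ) :
    c - lam * |x - c| ∈ Icc (c - a) (c + b) ↔ x ∈ Icc (c - a / lam) (c + a / lam) := by
  have hnonneg : 0 ≤ lam * |x - c| := by positivity
  rw [← Real.closedBall_eq_Icc, Metric.mem_closedBall, Real.dist_eq, le_div_iff₀ hlam, mul_comm,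
    mem_Icc]
  constructor
  · rintro ⟨h, -⟩
    linarith
  · intro h
    constructor <;> linarith

lemma turning_point_return_set_eq (hlam : 0 < lam) (hb : 0 ≤ b)
    (hf₁ : ∀ x ∈ Icc (c - a) (c + b), x ≤ c → f x = c + lam * (x - c))
    (hf₂ : ∀ x ∈ Icc (c - a) (c + b), c < x → f x = c - lam * (x - c)) :
    {x ∈ Icc (c - a) (c + b) | f x ∈ Icc (c - a) (c + b)}
      = Icc (c - a) (c + b) ∩ Icc (c - a / lam) (c + a / lam) := by
  ext x
  refine and_congr_right fun hx => ?_
  rw [eq_sub_mul_abs_of_turning_point hf₁ hf₂ hx, sub_mul_abs_mem_Icc_iff hlam hb]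

lemma turning_point_volume_return_set (hlam : 1 ≤ lam) (ha : 0 ≤ a) (hb : 0 ≤ b)
    (hf₁ : ∀ x ∈ Icc (c - a) (c + b), x ≤ c → f x = c + lam * (x - c))
    (hf₂ : ∀ x ∈ Icc (c - a) (c + b), c < x → f x = c - lam * (x - c)) :
    (volume {x ∈ Icc (c - a) (c + b) | f x ∈ Icc (c - a) (c + b)}).toReal
      = (a + min a (lam * b)) / lam := by
  have hlam0 : 0 < lam := zero_lt_one.trans_le hlam
  have hdiv : a / lam ≤ a := div_le_self ha hlam
  have hleft : (c - a) ⊔ (c - a / lam) = c - a / lam := max_eq_right (sub_le_sub_left hdiv c)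
  have hright : (c + b) ⊓ (c + a / lam) = c + min b (a / lam) := min_add_add_left c b (a / lam)
  have hmin_nonneg : 0 ≤ min b (a / lam) := le_min hb (div_nonneg ha hlam0.le)
  have hmin : min b (a / lam) = min a (lam * b) / lam := by
    rw [← min_div_div_right hlam0.le, mul_div_cancel_left₀ b hlam0.ne', min_comm]
  rw [turning_point_return_set_eq hlam0 hb hf₁ hf₂, Icc_inter_Icc, hleft, hright, Real.volume_Icc,
    ENNReal.toReal_ofReal (by linarith [div_nonneg ha hlam0.le]), hmin]
  ring

end TurningPoint

lemma one_div_lt_two_div_add_one {lam : ℝ} (hlam : 1 < lam) : 1 / lam < 2 / (lam + 1) := by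
  rw [div_lt_div_iff₀ (by linarith) (by linarith)]
  linarith

theorem turning_point_ulam_probability_general
    (lam c a b : ℝ) (hlam : 1 < lam)
    (ha : 0 < a) (hb : 0 < b)
    (f : ℝ → ℝ)
    (hf₁ : ∀ x ∈ Set.Icc (c - a) (c + b), x ≤ c → f x = c + lam * (x - c))
    (hf₂ : ∀ x ∈ Set.Icc (c - a) (c + b), c < x → f x = c - lam * (x - c)) :
    (volume {x ∈ Set.Icc (c - a) (c + b) | f x ∈ Set.Icc (c - a) (c + b)}).toReal
        / (volume (Set.Icc (c - a) (c + b))).toReal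
      = (a + min a (lam * b)) / (lam * (a + b)) ∧
    (a = lam * b →
      (volume {x ∈ Set.Icc (c - a) (c + b) | f x ∈ Set.Icc (c - a) (c + b)}).toReal
          / (volume (Set.Icc (c - a) (c + b))).toReal = 2 / (lam + 1)) ∧
    1 / lam < 2 / (lam + 1) := by
  have hI : (volume (Icc (c - a) (c + b))).toReal = a + b := by
    rw [Real.volume_Icc, ENNReal.toReal_ofReal (by linarith)]
    ring
  have hratio : (volume {x ∈ Icc (c - a) (c + b) | f x ∈ Icc (c - a) (c + b)}).toReal
      / (volume (Icc (c - a) (c + b))).toReal = (a + min a (lam * b)) / (lam * (a + b)) := by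
    rw [turning_point_volume_return_set hlam.le ha.le hb.le hf₁ hf₂, hI, div_div]
  refine ⟨hratio, fun hab => ?_, one_div_lt_two_div_add_one hlam⟩
  have hlam0 : lam ≠ 0 := by positivity
  rw [hratio, hab, min_self]
  field_simp
  ring

/-- Let `λ > 1`, `c ∈ (0,1)`, `a, b > 0` with `I = [c−a, c+b] ⊆ [0,1]`, and let `f` be
given on `I` by `f(x) = c + λ(x−c)` for `x ≤ c` and `f(x) = c − λ(x−c)` for `x > c`
(a fixed turning point at `c` with slopes `±λ`). Then the Ulam transition probability of
`I` to itself is `m({x ∈ I : f x ∈ I})/m(I) = (a + min{a, λb})/(λ(a+b))`; in particular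
it equals `2/(λ+1)` when `a = λb`, and `2/(λ+1) > 1/λ`. -/
theorem turning_point_ulam_probability
    (lam c a b : ℝ) (hlam : 1 < lam) (hc : c ∈ Set.Ioo (0 : ℝ) 1)
    (ha : 0 < a) (hb : 0 < b)
    (hI : Set.Icc (c - a) (c + b) ⊆ Set.Icc (0 : ℝ) 1)
    (f : ℝ → ℝ)
    (hf₁ : ∀ x ∈ Set.Icc (c - a) (c + b), x ≤ c → f x = c + lam * (x - c))
    (hf₂ : ∀ x ∈ Set.Icc (c - a) (c + b), c < x → f x = c - lam * (x - c)) :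
    (volume {x ∈ Set.Icc (c - a) (c + b) | f x ∈ Set.Icc (c - a) (c + b)}).toReal
        / (volume (Set.Icc (c - a) (c + b))).toReal
      = (a + min a (lam * b)) / (lam * (a + b)) ∧
    (a = lam * b →
      (volume {x ∈ Set.Icc (c - a) (c + b) | f x ∈ Set.Icc (c - a) (c + b)}).toReal
          / (volume (Set.Icc (c - a) (c + b))).toReal = 2 / (lam + 1)) ∧
    1 / lam < 2 / (lam + 1) :=
  turning_point_ulam_probability_general lam c a b hlam ha hb f hf₁ hf₂
end

section
/- Let f be the 'cat' map of the unit torus X = [0,1)², f(x,y) = (x + y mod 1, x + 2y mod 1), and for n ≥ 2 let Δ_{ij} = [i/n, (i+1)/n) × [j/n, (j+1)/n), i, j ∈ {0,…,n−1}, be the standard partition into n² squares. Then the Ulam transition probabilities p_{(i,j),(k,l)} = m(Δ_{ij} ∩ f^{-1}Δ_{kl})/m(Δ_{ij}) equal 1/4 for each of the four index pairs (k,l) ≡ (i+j, i+2j), (i+j, i+2j+1), (i+j+1, i+2j+1), (i+j+1, i+2j+2) (mod n), and equal 0 for all other (k,l). -/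
open MeasureTheory Set

lemma fract_mem_Ico_iff (n : ℕ) (hn : 0 < n) (t : ℝ) (k : ℕ) (hk : k < n) :
    Int.fract t ∈ Ico ((k:ℝ)/n) (((k:ℝ)+1)/n) ↔ ⌊(n:ℝ)*t⌋ % (n:ℤ) = k := by
  have hn' : (0:ℝ) < n := by exact_mod_cast hn
  have key : ⌊(n:ℝ) * Int.fract t⌋ = ⌊(n:ℝ)*t⌋ - n*⌊t⌋ := by
    have h1 : (n:ℝ) * Int.fract t = (n:ℝ)*t - ((n*⌊t⌋ : ℤ):ℝ) := by
      rw [Int.fract]; push_cast; ring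
    rw [h1, Int.floor_sub_intCast]
  have hb1 : 0 ≤ ⌊(n:ℝ) * Int.fract t⌋ :=
    Int.floor_nonneg.2 (mul_nonneg hn'.le (Int.fract_nonneg t))
  have hb2 : ⌊(n:ℝ) * Int.fract t⌋ < n := by
    rw [Int.floor_lt]
    have := Int.fract_lt_one t
    push_cast
    nlinarith [Int.fract_nonneg t]
  constructor
  · rintro ⟨h1, h2⟩
    have hfl : ⌊(n:ℝ) * Int.fract t⌋ = k := by
      rw [Int.floor_eq_iff]
      constructor
      · rw [div_le_iff₀ hn'] at h1; push_cast; linarith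
      · rw [lt_div_iff₀ hn'] at h2; push_cast; nlinarith
    have heq : ⌊(n:ℝ)*t⌋ = k + n*⌊t⌋ := by omega
    rw [heq, Int.add_mul_emod_self_left,
      Int.emod_eq_of_lt (by positivity) (by exact_mod_cast hk)]
  · intro h
    have h2 : ⌊(n:ℝ)*t⌋ - n*⌊t⌋ = (k:ℤ) := by
      have e1 : (⌊(n:ℝ)*t⌋ - (n:ℤ)*⌊t⌋) % n = ⌊(n:ℝ)*t⌋ % n := by
        simp [Int.sub_emod, Int.mul_emod_right]
      rw [← key] at e1 ⊢
      rw [← Int.emod_eq_of_lt hb1 hb2, e1, h]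
    have hfl : ⌊(n:ℝ) * Int.fract t⌋ = k := by omega
    have hle := Int.floor_le ((n:ℝ) * Int.fract t)
    have hlt := Int.lt_floor_add_one ((n:ℝ) * Int.fract t)
    rw [hfl] at hle hlt
    constructor
    · rw [div_le_iff₀ hn']; push_cast at hle ⊢; linarith
    · rw [lt_div_iff₀ hn']; push_cast at hlt ⊢; linarith

lemma vol_slice (a a' : ℝ) (h : a ≤ a') (e₁ e₂ : ℝ → ℝ) (hc₁ : Continuous e₁)
    (hc₂ : Continuous e₂) (hle : ∀ x ∈ Ico a a', e₁ x ≤ e₂ x) :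
    volume {q : ℝ × ℝ | q.1 ∈ Ico a a' ∧ q.2 ∈ Ico (e₁ q.1) (e₂ q.1)}
      = ENNReal.ofReal (∫ x in a..a', (e₂ x - e₁ x)) := by
  have hmeas : MeasurableSet {q : ℝ × ℝ | q.1 ∈ Ico a a' ∧ q.2 ∈ Ico (e₁ q.1) (e₂ q.1)} := by
    have h1 : MeasurableSet {q : ℝ × ℝ | a ≤ q.1} :=
      measurableSet_le measurable_const measurable_fst
    have h2 : MeasurableSet {q : ℝ × ℝ | q.1 < a'} :=
      measurableSet_lt measurable_fst measurable_const
    have h3 : MeasurableSet {q : ℝ × ℝ | e₁ q.1 ≤ q.2} :=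
      measurableSet_le (hc₁.measurable.comp measurable_fst) measurable_snd
    have h4 : MeasurableSet {q : ℝ × ℝ | q.2 < e₂ q.1} :=
      measurableSet_lt measurable_snd (hc₂.measurable.comp measurable_fst)
    have heq : {q : ℝ × ℝ | q.1 ∈ Ico a a' ∧ q.2 ∈ Ico (e₁ q.1) (e₂ q.1)}
        = ({q : ℝ × ℝ | a ≤ q.1} ∩ {q | q.1 < a'}) ∩
          ({q | e₁ q.1 ≤ q.2} ∩ {q | q.2 < e₂ q.1}) := by
      ext q; simp [Set.mem_Ico, and_assoc]
    rw [heq]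
    exact ((h1.inter h2).inter (h3.inter h4))
  rw [Measure.volume_eq_prod, Measure.prod_apply hmeas]
  have hsl : ∀ x, (volume (Prod.mk x ⁻¹'
        {q : ℝ × ℝ | q.1 ∈ Ico a a' ∧ q.2 ∈ Ico (e₁ q.1) (e₂ q.1)}))
      = Set.indicator (Ico a a') (fun x => ENNReal.ofReal (e₂ x - e₁ x)) x := by
    intro x
    by_cases hx : x ∈ Ico a a'
    · have heq : (Prod.mk x ⁻¹' {q : ℝ × ℝ | q.1 ∈ Ico a a' ∧ q.2 ∈ Ico (e₁ q.1) (e₂ q.1)})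
          = Ico (e₁ x) (e₂ x) := by
        obtain ⟨hx1, hx2⟩ := hx
        ext y; simp only [Set.mem_preimage, Set.mem_setOf_eq, Set.mem_Ico]
        constructor
        · rintro ⟨_, hy⟩; exact hy
        · intro hy; exact ⟨⟨hx1, hx2⟩, hy⟩
      rw [heq, Real.volume_Ico, Set.indicator_of_mem hx]
    · have heq : (Prod.mk x ⁻¹' {q : ℝ × ℝ | q.1 ∈ Ico a a' ∧ q.2 ∈ Ico (e₁ q.1) (e₂ q.1)})
          = ∅ := by
        ext y
        simp only [Set.mem_preimage, Set.mem_setOf_eq, Set.mem_empty_iff_false, iff_false]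
        rintro ⟨hx', _⟩; exact hx hx'
      rw [heq, Set.indicator_of_notMem hx, measure_empty]
  rw [lintegral_congr hsl, lintegral_indicator measurableSet_Ico]
  rw [← ofReal_integral_eq_lintegral_ofReal]
  · rw [MeasureTheory.integral_Ico_eq_integral_Ioo, ← MeasureTheory.integral_Ioc_eq_integral_Ioo,
      ← intervalIntegral.integral_of_le h]
  · exact ((hc₂.sub hc₁).integrableOn_Icc).mono_set Ico_subset_Icc_self
  · exact (ae_restrict_iff' measurableSet_Ico).2 (Filter.Eventually.of_forall
      (fun x hx => sub_nonneg.2 (hle x hx)))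

lemma integral_tri (a s : ℝ) : ∫ x in a..a+s, (a+s-x)/2 = s^2/4 := by
  have h : (fun x : ℝ => (a+s-x)/2) = fun x : ℝ => (a+s)/2 - x/2 := by funext x; ring
  rw [h, intervalIntegral.integral_sub intervalIntegrable_const
    (intervalIntegral.intervalIntegrable_id.div_const 2),
    intervalIntegral.integral_const, intervalIntegral.integral_div, integral_id]
  simp only [smul_eq_mul]; ring

lemma integral_tri' (a s : ℝ) : ∫ x in a..a+s, (x-a)/2 = s^2/4 := by
  have h : (fun x : ℝ => (x-a)/2) = fun x : ℝ => x/2 - a/2 := by funext x; ring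
  rw [h, intervalIntegral.integral_sub (intervalIntegral.intervalIntegrable_id.div_const 2)
    intervalIntegrable_const,
    intervalIntegral.integral_const, intervalIntegral.integral_div, integral_id]
  simp only [smul_eq_mul]; ring

lemma vol_quarter₁ (nr c d : ℝ) (hnr : 0 < nr) :
    volume {q : ℝ × ℝ | (c ≤ nr*q.1 ∧ nr*q.1 < c+1) ∧ (d ≤ nr*q.2 ∧ nr*q.2 < d+1) ∧
      nr*(q.1+q.2) < c+d+1 ∧ nr*(q.1+2*q.2) < c+2*d+1} = ENNReal.ofReal (1/(4*nr^2)) := by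
  have h2nr : (0:ℝ) < 2*nr := by linarith
  have hset : {q : ℝ × ℝ | (c ≤ nr*q.1 ∧ nr*q.1 < c+1) ∧ (d ≤ nr*q.2 ∧ nr*q.2 < d+1) ∧
      nr*(q.1+q.2) < c+d+1 ∧ nr*(q.1+2*q.2) < c+2*d+1}
      = {q : ℝ × ℝ | q.1 ∈ Ico (c/nr) ((c+1)/nr) ∧
        q.2 ∈ Ico (d/nr) ((c+2*d+1 - nr*q.1)/(2*nr))} := by
    ext ⟨x, y⟩
    simp only [Set.mem_setOf_eq, Set.mem_Ico]
    rw [div_le_iff₀ hnr, lt_div_iff₀ hnr, div_le_iff₀ hnr, lt_div_iff₀ h2nr]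
    constructor
    · rintro ⟨⟨h1,h2⟩,⟨h3,h4⟩,h5,h6⟩
      exact ⟨⟨by linarith, by linarith⟩, by linarith, by linarith⟩
    · rintro ⟨⟨h1,h2⟩,h3,h4⟩
      exact ⟨⟨by linarith, by linarith⟩, ⟨by linarith, by linarith⟩, by linarith, by linarith⟩
  rw [hset]
  refine (vol_slice (c/nr) ((c+1)/nr) (by gcongr; linarith) (fun _ => d/nr)
    (fun x => (c+2*d+1 - nr*x)/(2*nr)) (by continuity) (by continuity)
    (fun x hx => ?_)).trans ?_
  · obtain ⟨hx1, hx2⟩ := hx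
    rw [lt_div_iff₀ hnr] at hx2
    rw [div_le_div_iff₀ hnr h2nr]
    nlinarith
  · congr 1
    have h : (fun x : ℝ => (c+2*d+1 - nr*x)/(2*nr) - d/nr)
        = fun x : ℝ => (c/nr + 1/nr - x)/2 := by
      funext x; field_simp; ring
    rw [show (c+1)/nr = c/nr + 1/nr from (add_div c 1 nr), h, integral_tri]
    field_simp

lemma vol_quarter₂ (nr c d : ℝ) (hnr : 0 < nr) :
    volume {q : ℝ × ℝ | (c ≤ nr*q.1 ∧ nr*q.1 < c+1) ∧ (d ≤ nr*q.2 ∧ nr*q.2 < d+1) ∧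
      nr*(q.1+q.2) < c+d+1 ∧ (c+2*d+1 ≤ nr*(q.1+2*q.2) ∧ nr*(q.1+2*q.2) < c+2*d+2)}
      = ENNReal.ofReal (1/(4*nr^2)) := by
  have h2nr : (0:ℝ) < 2*nr := by linarith
  have hset : {q : ℝ × ℝ | (c ≤ nr*q.1 ∧ nr*q.1 < c+1) ∧ (d ≤ nr*q.2 ∧ nr*q.2 < d+1) ∧
      nr*(q.1+q.2) < c+d+1 ∧ (c+2*d+1 ≤ nr*(q.1+2*q.2) ∧ nr*(q.1+2*q.2) < c+2*d+2)}
      = {q : ℝ × ℝ | q.1 ∈ Ico (c/nr) ((c+1)/nr) ∧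
        q.2 ∈ Ico ((c+2*d+1 - nr*q.1)/(2*nr)) ((c+d+1 - nr*q.1)/nr)} := by
    ext ⟨x, y⟩
    simp only [Set.mem_setOf_eq, Set.mem_Ico]
    rw [div_le_iff₀ hnr, lt_div_iff₀ hnr, div_le_iff₀ h2nr, lt_div_iff₀ hnr]
    constructor
    · rintro ⟨⟨h1,h2⟩,⟨h3,h4⟩,h5,h6,h7⟩
      exact ⟨⟨by linarith, by linarith⟩, by linarith, by linarith⟩
    · rintro ⟨⟨h1,h2⟩,h3,h4⟩
      exact ⟨⟨by linarith, by linarith⟩, ⟨by linarith, by linarith⟩, by linarith, by linarith,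
        by linarith⟩
  rw [hset]
  refine (vol_slice (c/nr) ((c+1)/nr) (by gcongr; linarith) (fun x => (c+2*d+1 - nr*x)/(2*nr))
    (fun x => (c+d+1 - nr*x)/nr) (by continuity) (by continuity)
    (fun x hx => ?_)).trans ?_
  · obtain ⟨hx1, hx2⟩ := hx
    rw [lt_div_iff₀ hnr] at hx2
    rw [div_le_div_iff₀ h2nr hnr]
    nlinarith
  · congr 1
    have h : (fun x : ℝ => (c+d+1 - nr*x)/nr - (c+2*d+1 - nr*x)/(2*nr))
        = fun x : ℝ => (c/nr + 1/nr - x)/2 := by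
      funext x; field_simp; ring
    rw [show (c+1)/nr = c/nr + 1/nr from (add_div c 1 nr), h, integral_tri]
    field_simp

lemma vol_quarter₃ (nr c d : ℝ) (hnr : 0 < nr) :
    volume {q : ℝ × ℝ | (c ≤ nr*q.1 ∧ nr*q.1 < c+1) ∧ (d ≤ nr*q.2 ∧ nr*q.2 < d+1) ∧
      (c+d+1 ≤ nr*(q.1+q.2) ∧ nr*(q.1+q.2) < c+d+2) ∧
      (c+2*d+1 ≤ nr*(q.1+2*q.2) ∧ nr*(q.1+2*q.2) < c+2*d+2)}
      = ENNReal.ofReal (1/(4*nr^2)) := by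
  have h2nr : (0:ℝ) < 2*nr := by linarith
  have hset : {q : ℝ × ℝ | (c ≤ nr*q.1 ∧ nr*q.1 < c+1) ∧ (d ≤ nr*q.2 ∧ nr*q.2 < d+1) ∧
      (c+d+1 ≤ nr*(q.1+q.2) ∧ nr*(q.1+q.2) < c+d+2) ∧
      (c+2*d+1 ≤ nr*(q.1+2*q.2) ∧ nr*(q.1+2*q.2) < c+2*d+2)}
      = {q : ℝ × ℝ | q.1 ∈ Ico (c/nr) ((c+1)/nr) ∧
        q.2 ∈ Ico ((c+d+1 - nr*q.1)/nr) ((c+2*d+2 - nr*q.1)/(2*nr))} := by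
    ext ⟨x, y⟩
    simp only [Set.mem_setOf_eq, Set.mem_Ico]
    rw [div_le_iff₀ hnr, lt_div_iff₀ hnr, div_le_iff₀ hnr, lt_div_iff₀ h2nr]
    constructor
    · rintro ⟨⟨h1,h2⟩,⟨h3,h4⟩,⟨h5,h6⟩,h7,h8⟩
      exact ⟨⟨by linarith, by linarith⟩, by linarith, by linarith⟩
    · rintro ⟨⟨h1,h2⟩,h3,h4⟩
      exact ⟨⟨by linarith, by linarith⟩, ⟨by linarith, by linarith⟩, ⟨by linarith, by linarith⟩,
        by linarith, by linarith⟩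
  rw [hset]
  refine (vol_slice (c/nr) ((c+1)/nr) (by gcongr; linarith) (fun x => (c+d+1 - nr*x)/nr)
    (fun x => (c+2*d+2 - nr*x)/(2*nr)) (by continuity) (by continuity)
    (fun x hx => ?_)).trans ?_
  · obtain ⟨hx1, hx2⟩ := hx
    rw [div_le_iff₀ hnr] at hx1
    rw [div_le_div_iff₀ hnr h2nr]
    nlinarith
  · congr 1
    have h : (fun x : ℝ => (c+2*d+2 - nr*x)/(2*nr) - (c+d+1 - nr*x)/nr)
        = fun x : ℝ => (x - c/nr)/2 := by
      funext x; field_simp; ring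
    rw [show (c+1)/nr = c/nr + 1/nr from (add_div c 1 nr), h, integral_tri']
    field_simp

lemma vol_quarter₄ (nr c d : ℝ) (hnr : 0 < nr) :
    volume {q : ℝ × ℝ | (c ≤ nr*q.1 ∧ nr*q.1 < c+1) ∧ (d ≤ nr*q.2 ∧ nr*q.2 < d+1) ∧
      (c+d+1 ≤ nr*(q.1+q.2) ∧ nr*(q.1+q.2) < c+d+2) ∧
      (c+2*d+2 ≤ nr*(q.1+2*q.2) ∧ nr*(q.1+2*q.2) < c+2*d+3)}
      = ENNReal.ofReal (1/(4*nr^2)) := by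
  have h2nr : (0:ℝ) < 2*nr := by linarith
  have hset : {q : ℝ × ℝ | (c ≤ nr*q.1 ∧ nr*q.1 < c+1) ∧ (d ≤ nr*q.2 ∧ nr*q.2 < d+1) ∧
      (c+d+1 ≤ nr*(q.1+q.2) ∧ nr*(q.1+q.2) < c+d+2) ∧
      (c+2*d+2 ≤ nr*(q.1+2*q.2) ∧ nr*(q.1+2*q.2) < c+2*d+3)}
      = {q : ℝ × ℝ | q.1 ∈ Ico (c/nr) ((c+1)/nr) ∧
        q.2 ∈ Ico ((c+2*d+2 - nr*q.1)/(2*nr)) ((d+1)/nr)} := by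
    ext ⟨x, y⟩
    simp only [Set.mem_setOf_eq, Set.mem_Ico]
    rw [div_le_iff₀ hnr, lt_div_iff₀ hnr, div_le_iff₀ h2nr, lt_div_iff₀ hnr]
    constructor
    · rintro ⟨⟨h1,h2⟩,⟨h3,h4⟩,⟨h5,h6⟩,h7,h8⟩
      exact ⟨⟨by linarith, by linarith⟩, by linarith, by linarith⟩
    · rintro ⟨⟨h1,h2⟩,h3,h4⟩
      exact ⟨⟨by linarith, by linarith⟩, ⟨by linarith, by linarith⟩, ⟨by linarith, by linarith⟩,
        by linarith, by linarith⟩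
  rw [hset]
  refine (vol_slice (c/nr) ((c+1)/nr) (by gcongr; linarith)
    (fun x => (c+2*d+2 - nr*x)/(2*nr)) (fun _ => (d+1)/nr) (by continuity) (by continuity)
    (fun x hx => ?_)).trans ?_
  · obtain ⟨hx1, hx2⟩ := hx
    rw [div_le_iff₀ hnr] at hx1
    rw [div_le_div_iff₀ h2nr hnr]
    nlinarith
  · congr 1
    have h : (fun x : ℝ => (d+1)/nr - (c+2*d+2 - nr*x)/(2*nr))
        = fun x : ℝ => (x - c/nr)/2 := by
      funext x; field_simp; ring
    rw [show (c+1)/nr = c/nr + 1/nr from (add_div c 1 nr), h, integral_tri']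
    field_simp

/-- For the 'cat' map `f(x,y) = (x+y mod 1, x+2y mod 1)` of the unit torus and the
standard partition of the torus into `n²` squares `Δ_{ij} = [i/n,(i+1)/n) × [j/n,(j+1)/n)`
(`n ≥ 2`), the Ulam transition probabilities `p_{(i,j),(k,l)}` equal `1/4` for the four
index pairs `(k,l) ≡ (i+j, i+2j), (i+j, i+2j+1), (i+j+1, i+2j+1), (i+j+1, i+2j+2)`
(mod `n`), and `0` for all other `(k,l)`. -/
theorem cat_map_ulam_probabilities_standard_partition
    (n : ℕ) [NeZero n] (hn : 2 ≤ n)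
    (f : ℝ × ℝ → ℝ × ℝ)
    (hf : ∀ p : ℝ × ℝ, f p = (Int.fract (p.1 + p.2), Int.fract (p.1 + 2 * p.2)))
    (Δ : Fin n → Fin n → Set (ℝ × ℝ))
    (hΔ : ∀ i j, Δ i j = Set.Ico (((i : ℕ) : ℝ) / n) ((((i : ℕ) : ℝ) + 1) / n) ×ˢ
        Set.Ico (((j : ℕ) : ℝ) / n) ((((j : ℕ) : ℝ) + 1) / n))
    (p : Fin n → Fin n → Fin n → Fin n → ℝ)
    (hp : ∀ i j k l, p i j k l
      = (volume (Δ i j ∩ f ⁻¹' Δ k l)).toReal / (volume (Δ i j)).toReal)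
    (i j k l : Fin n) :
    p i j k l =
      if (k, l) = (i + j, i + 2 * j) ∨ (k, l) = (i + j, i + 2 * j + 1)
          ∨ (k, l) = (i + j + 1, i + 2 * j + 1) ∨ (k, l) = (i + j + 1, i + 2 * j + 2)
      then 1 / 4 else 0 := by
  have hn0 : 0 < n := by omega
  have hnr : (0:ℝ) < (n:ℝ) := by exact_mod_cast hn0
  -- modular arithmetic helpers
  have natmod : ∀ a : ℕ, ((a:ℤ)) % ((n:ℕ):ℤ) = ((a % n : ℕ) : ℤ) := fun a => by push_cast; ring
  have modcancel : ∀ a b M : ℕ, a < n → b < n → (M+a)%n = (M+b)%n → a = b := by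
    intro a b M ha hb h
    have h2 : a % n = b % n := Nat.ModEq.add_left_cancel' M h
    rwa [Nat.mod_eq_of_lt ha, Nat.mod_eq_of_lt hb] at h2
  have modkey : ∀ (F : ℤ) (a v : ℕ), F = (a:ℤ) → F % (n:ℤ) = (v:ℤ) → a % n = v := by
    intro F a v h1 h2; rw [h1, natmod] at h2; exact_mod_cast h2
  have mod_adj : ∀ a b : ℕ, a + 1 = b → b % n = a % n → False := by
    intro a b hab h; subst hab
    have h01 := modcancel 1 0 a (by omega) hn0 (by simpa using h)
    omega
  -- Fin equalities in terms of values
  have hk1 : (k = i + j) ↔ k.val = (i.val + j.val) % n := by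
    open Fin.NatCast in rw [show (i + j : Fin n) = ((i.val + j.val : ℕ) : Fin n) from by
      push_cast [Fin.cast_val_eq_self]; rfl, Fin.ext_iff, Fin.val_natCast]
  have hk2 : (k = i + j + 1) ↔ k.val = (i.val + j.val + 1) % n := by
    open Fin.NatCast in rw [show (i + j + 1 : Fin n) = ((i.val + j.val + 1 : ℕ) : Fin n) from by
      push_cast [Fin.cast_val_eq_self]; rfl, Fin.ext_iff, Fin.val_natCast]
  have hl1 : (l = i + 2*j) ↔ l.val = (i.val + 2*j.val) % n := by
    open Fin.NatCast in rw [show (i + 2*j : Fin n) = ((i.val + 2*j.val : ℕ) : Fin n) from by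
      push_cast [Fin.cast_val_eq_self]; rw [show (2*j : Fin n) = ((2*j.val : ℕ) : Fin n) from by
        ext; simp [Fin.val_mul, Fin.val_natCast, Nat.mul_mod]], Fin.ext_iff, Fin.val_natCast]
  have hl2 : (l = i + 2*j + 1) ↔ l.val = (i.val + 2*j.val + 1) % n := by
    open Fin.NatCast in rw [show (i + 2*j + 1 : Fin n) = ((i.val + 2*j.val + 1 : ℕ) : Fin n) from by
      push_cast [Fin.cast_val_eq_self]; rw [show (2*j : Fin n) = ((2*j.val : ℕ) : Fin n) from by
        ext; simp [Fin.val_mul, Fin.val_natCast, Nat.mul_mod]], Fin.ext_iff, Fin.val_natCast]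
  have hl3 : (l = i + 2*j + 2) ↔ l.val = (i.val + 2*j.val + 2) % n := by
    open Fin.NatCast in rw [show (i + 2*j + 2 : Fin n) = ((i.val + 2*j.val + 2 : ℕ) : Fin n) from by
      push_cast [Fin.cast_val_eq_self]; rw [show (2*j : Fin n) = ((2*j.val : ℕ) : Fin n) from by
        ext; simp [Fin.val_mul, Fin.val_natCast, Nat.mul_mod]], Fin.ext_iff, Fin.val_natCast]
  -- membership characterization
  have hfr : ∀ (t:ℝ) (m : Fin n),
      (((m:ℕ):ℝ)/(n:ℝ) ≤ Int.fract t ∧ Int.fract t < (((m:ℕ):ℝ)+1)/(n:ℝ)) ↔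
        ⌊(n:ℝ)*t⌋ % (n:ℤ) = ((m:ℕ):ℤ) := fun t m => by
    simpa [Set.mem_Ico] using fract_mem_Ico_iff n hn0 t m.val m.isLt
  have hmem : ∀ x y : ℝ, ((x,y) ∈ Δ i j ∩ f ⁻¹' Δ k l) ↔
      ((((i.val:ℝ)) ≤ x*(n:ℝ) ∧ x*(n:ℝ) < (i.val:ℝ)+1) ∧
        (((j.val:ℝ)) ≤ y*(n:ℝ) ∧ y*(n:ℝ) < (j.val:ℝ)+1)) ∧
      (⌊(n:ℝ)*(x+y)⌋ % (n:ℤ) = (k.val:ℤ) ∧ ⌊(n:ℝ)*(x+2*y)⌋ % (n:ℤ) = (l.val:ℤ)) := by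
    intro x y
    rw [Set.mem_inter_iff, Set.mem_preimage, hf, hΔ i j, hΔ k l]
    simp only [Set.mem_prod, Set.mem_Ico]
    rw [hfr (x+y) k, hfr (x+2*y) l]
    rw [div_le_iff₀ hnr, lt_div_iff₀ hnr, div_le_iff₀ hnr, lt_div_iff₀ hnr]
  -- floor bounds
  have hfb : ∀ x y : ℝ, (i.val:ℝ) ≤ x*(n:ℝ) → x*(n:ℝ) < (i.val:ℝ)+1 →
      (j.val:ℝ) ≤ y*(n:ℝ) → y*(n:ℝ) < (j.val:ℝ)+1 →
      (((i.val+j.val:ℕ):ℤ) ≤ ⌊(n:ℝ)*(x+y)⌋ ∧ ⌊(n:ℝ)*(x+y)⌋ < ((i.val+j.val:ℕ):ℤ)+2) ∧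
      (((i.val+2*j.val:ℕ):ℤ) ≤ ⌊(n:ℝ)*(x+2*y)⌋ ∧
        ⌊(n:ℝ)*(x+2*y)⌋ < ((i.val+2*j.val:ℕ):ℤ)+3) := by
    intro x y h1 h2 h3 h4
    refine ⟨⟨Int.le_floor.2 ?_, Int.floor_lt.2 ?_⟩, Int.le_floor.2 ?_, Int.floor_lt.2 ?_⟩ <;>
      push_cast <;> linarith
  -- volume of the basic square and final arithmetic
  have hdiff : ∀ c:ℝ, (c+1)/(n:ℝ) - c/(n:ℝ) = 1/(n:ℝ) := fun c => by ring
  have hvolΔ : (volume (Δ i j)).toReal = (1/(n:ℝ)) * (1/(n:ℝ)) := by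
    rw [hΔ i j, Measure.volume_eq_prod, Measure.prod_prod, Real.volume_Ico, Real.volume_Ico,
      hdiff, hdiff, ENNReal.toReal_mul, ENNReal.toReal_ofReal (by positivity)]
  have hfinal : ∀ V : Set (ℝ×ℝ), volume V = ENNReal.ofReal (1/(4*(n:ℝ)^2)) →
      (volume V).toReal / (volume (Δ i j)).toReal = 1/4 := by
    intro V hV
    rw [hV, hvolΔ, ENNReal.toReal_ofReal (by positivity),
      div_eq_iff (by positivity : (0:ℝ) < 1/(n:ℝ)*(1/(n:ℝ))).ne']
    field_simp
  rw [hp i j k l]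
  by_cases hA0 : k.val = (i.val + j.val) % n
  · by_cases hB0 : l.val = (i.val + 2*j.val) % n
    · -- case 1 : (k,l) = (i+j, i+2j)
      rw [if_pos (Or.inl (by rw [Prod.mk.injEq]; exact ⟨hk1.mpr hA0, hl1.mpr hB0⟩))]
      refine hfinal _ ?_
      have hSeq : Δ i j ∩ f ⁻¹' Δ k l = {q : ℝ × ℝ |
          (((i.val:ℝ)) ≤ (n:ℝ)*q.1 ∧ (n:ℝ)*q.1 < (i.val:ℝ)+1) ∧
          (((j.val:ℝ)) ≤ (n:ℝ)*q.2 ∧ (n:ℝ)*q.2 < (j.val:ℝ)+1) ∧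
          (n:ℝ)*(q.1+q.2) < (i.val:ℝ)+(j.val:ℝ)+1 ∧
          (n:ℝ)*(q.1+2*q.2) < (i.val:ℝ)+2*(j.val:ℝ)+1} := by
        ext ⟨x, y⟩
        rw [hmem x y]
        simp only [Set.mem_setOf_eq]
        constructor
        · rintro ⟨⟨⟨h1,h2⟩,h3,h4⟩, hF1, hF2⟩
          obtain ⟨⟨hb1,hb2⟩,hb3,hb4⟩ := hfb x y h1 h2 h3 h4
          have hF1M : ⌊(n:ℝ)*(x+y)⌋ = ((i.val+j.val : ℕ):ℤ) := by
            by_contra hne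
            have hF1M1 : ⌊(n:ℝ)*(x+y)⌋ = ((i.val+j.val+1 : ℕ):ℤ) := by
              push_cast at hb1 hb2 hne ⊢; omega
            have hmm := modkey _ _ _ hF1M1 hF1
            rw [hA0] at hmm
            have h10 := modcancel 1 0 (i.val+j.val) (by omega) hn0 (by simpa using hmm)
            exact absurd h10 one_ne_zero
          have hxy : (n:ℝ)*(x+y) < (i.val:ℝ)+(j.val:ℝ)+1 := by
            have h' := Int.floor_lt.1 (show ⌊(n:ℝ)*(x+y)⌋ < ((i.val+j.val:ℕ):ℤ)+1 by omega)
            push_cast at h'; linarith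
          have hF2lt : ⌊(n:ℝ)*(x+2*y)⌋ < ((i.val+2*j.val:ℕ):ℤ)+2 := by
            apply Int.floor_lt.2; push_cast; linarith
          have hF2N : ⌊(n:ℝ)*(x+2*y)⌋ = ((i.val+2*j.val : ℕ):ℤ) := by
            by_contra hne
            have hF2N1 : ⌊(n:ℝ)*(x+2*y)⌋ = ((i.val+2*j.val+1 : ℕ):ℤ) := by
              push_cast at hb3 hF2lt hne ⊢; omega
            have hmm := modkey _ _ _ hF2N1 hF2
            rw [hB0] at hmm
            have h10 := modcancel 1 0 (i.val+2*j.val) (by omega) hn0 (by simpa using hmm)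
            exact absurd h10 one_ne_zero
          have hxy2 : (n:ℝ)*(x+2*y) < (i.val:ℝ)+2*(j.val:ℝ)+1 := by
            have h' := Int.floor_lt.1 (show ⌊(n:ℝ)*(x+2*y)⌋ < ((i.val+2*j.val:ℕ):ℤ)+1 by omega)
            push_cast at h'; linarith
          exact ⟨⟨by linarith, by linarith⟩, ⟨by linarith, by linarith⟩, hxy, hxy2⟩
        · rintro ⟨⟨h1,h2⟩,⟨h3,h4⟩,h5,h6⟩
          have h1' : (i.val:ℝ) ≤ x*(n:ℝ) := by linarith
          have h2' : x*(n:ℝ) < (i.val:ℝ)+1 := by linarith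
          have h3' : (j.val:ℝ) ≤ y*(n:ℝ) := by linarith
          have h4' : y*(n:ℝ) < (j.val:ℝ)+1 := by linarith
          obtain ⟨⟨hb1,hb2⟩,hb3,hb4⟩ := hfb x y h1' h2' h3' h4'
          have hF1M : ⌊(n:ℝ)*(x+y)⌋ = ((i.val+j.val : ℕ):ℤ) := by
            have hlt : ⌊(n:ℝ)*(x+y)⌋ < ((i.val+j.val:ℕ):ℤ)+1 :=
              Int.floor_lt.2 (by push_cast; linarith)
            omega
          have hF2N : ⌊(n:ℝ)*(x+2*y)⌋ = ((i.val+2*j.val : ℕ):ℤ) := by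
            have hlt : ⌊(n:ℝ)*(x+2*y)⌋ < ((i.val+2*j.val:ℕ):ℤ)+1 :=
              Int.floor_lt.2 (by push_cast; linarith)
            omega
          refine ⟨⟨⟨h1', h2'⟩, h3', h4'⟩, ?_, ?_⟩
          · rw [hF1M, natmod]; exact_mod_cast hA0.symm
          · rw [hF2N, natmod]; exact_mod_cast hB0.symm
      rw [hSeq]
      exact vol_quarter₁ (n:ℝ) (i.val:ℝ) (j.val:ℝ) hnr
    · by_cases hB1 : l.val = (i.val + 2*j.val + 1) % n
      · -- case 2 : (k,l) = (i+j, i+2j+1)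
        rw [if_pos (Or.inr (Or.inl (by rw [Prod.mk.injEq]; exact ⟨hk1.mpr hA0, hl2.mpr hB1⟩)))]
        refine hfinal _ ?_
        have hSeq : Δ i j ∩ f ⁻¹' Δ k l = {q : ℝ × ℝ |
            (((i.val:ℝ)) ≤ (n:ℝ)*q.1 ∧ (n:ℝ)*q.1 < (i.val:ℝ)+1) ∧
            (((j.val:ℝ)) ≤ (n:ℝ)*q.2 ∧ (n:ℝ)*q.2 < (j.val:ℝ)+1) ∧
            (n:ℝ)*(q.1+q.2) < (i.val:ℝ)+(j.val:ℝ)+1 ∧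
            ((i.val:ℝ)+2*(j.val:ℝ)+1 ≤ (n:ℝ)*(q.1+2*q.2) ∧
              (n:ℝ)*(q.1+2*q.2) < (i.val:ℝ)+2*(j.val:ℝ)+2)} := by
          ext ⟨x, y⟩
          rw [hmem x y]
          simp only [Set.mem_setOf_eq]
          constructor
          · rintro ⟨⟨⟨h1,h2⟩,h3,h4⟩, hF1, hF2⟩
            obtain ⟨⟨hb1,hb2⟩,hb3,hb4⟩ := hfb x y h1 h2 h3 h4
            have hF1M : ⌊(n:ℝ)*(x+y)⌋ = ((i.val+j.val : ℕ):ℤ) := by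
              by_contra hne
              have hF1M1 : ⌊(n:ℝ)*(x+y)⌋ = ((i.val+j.val+1 : ℕ):ℤ) := by
                push_cast at hb1 hb2 hne ⊢; omega
              have hmm := modkey _ _ _ hF1M1 hF1
              rw [hA0] at hmm
              exact mod_adj _ _ rfl hmm
            have hxy : (n:ℝ)*(x+y) < (i.val:ℝ)+(j.val:ℝ)+1 := by
              have h' := Int.floor_lt.1 (show ⌊(n:ℝ)*(x+y)⌋ < ((i.val+j.val:ℕ):ℤ)+1 by omega)
              push_cast at h'; linarith
            have hF2lt : ⌊(n:ℝ)*(x+2*y)⌋ < ((i.val+2*j.val:ℕ):ℤ)+2 := by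
              apply Int.floor_lt.2; push_cast; linarith
            have hF2N1 : ⌊(n:ℝ)*(x+2*y)⌋ = ((i.val+2*j.val+1 : ℕ):ℤ) := by
              by_contra hne
              have hF2N : ⌊(n:ℝ)*(x+2*y)⌋ = ((i.val+2*j.val : ℕ):ℤ) := by
                push_cast at hb3 hF2lt hne ⊢; omega
              exact hB0 (modkey _ _ _ hF2N hF2).symm
            have hge : (i.val:ℝ)+2*(j.val:ℝ)+1 ≤ (n:ℝ)*(x+2*y) := by
              have h' := Int.le_floor.1 hF2N1.symm.le
              push_cast at h'; linarith
            have hlt2 : (n:ℝ)*(x+2*y) < (i.val:ℝ)+2*(j.val:ℝ)+2 := by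
              have h' := Int.floor_lt.1
                (show ⌊(n:ℝ)*(x+2*y)⌋ < ((i.val+2*j.val+1:ℕ):ℤ)+1 by omega)
              push_cast at h'; linarith
            exact ⟨⟨by linarith, by linarith⟩, ⟨by linarith, by linarith⟩, hxy, hge, hlt2⟩
          · rintro ⟨⟨h1,h2⟩,⟨h3,h4⟩,h5,h6,h7⟩
            have h1' : (i.val:ℝ) ≤ x*(n:ℝ) := by linarith
            have h2' : x*(n:ℝ) < (i.val:ℝ)+1 := by linarith
            have h3' : (j.val:ℝ) ≤ y*(n:ℝ) := by linarith
            have h4' : y*(n:ℝ) < (j.val:ℝ)+1 := by linarith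
            obtain ⟨⟨hb1,hb2⟩,hb3,hb4⟩ := hfb x y h1' h2' h3' h4'
            have hF1M : ⌊(n:ℝ)*(x+y)⌋ = ((i.val+j.val : ℕ):ℤ) := by
              have hlt : ⌊(n:ℝ)*(x+y)⌋ < ((i.val+j.val:ℕ):ℤ)+1 :=
                Int.floor_lt.2 (by push_cast; linarith)
              omega
            have hF2N1 : ⌊(n:ℝ)*(x+2*y)⌋ = ((i.val+2*j.val+1 : ℕ):ℤ) := by
              have hge' : ((i.val+2*j.val+1:ℕ):ℤ) ≤ ⌊(n:ℝ)*(x+2*y)⌋ :=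
                Int.le_floor.2 (by push_cast; linarith)
              have hlt : ⌊(n:ℝ)*(x+2*y)⌋ < ((i.val+2*j.val+1:ℕ):ℤ)+1 :=
                Int.floor_lt.2 (by push_cast; linarith)
              omega
            refine ⟨⟨⟨h1', h2'⟩, h3', h4'⟩, ?_, ?_⟩
            · rw [hF1M, natmod]; exact_mod_cast hA0.symm
            · rw [hF2N1, natmod]; exact_mod_cast hB1.symm
        rw [hSeq]
        exact vol_quarter₂ (n:ℝ) (i.val:ℝ) (j.val:ℝ) hnr
      · -- empty case (k matches i+j, l matches nothing)
        have hSeq : Δ i j ∩ f ⁻¹' Δ k l = ∅ := by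
          ext ⟨x, y⟩
          rw [hmem x y]
          simp only [Set.mem_empty_iff_false, iff_false]
          rintro ⟨⟨⟨h1,h2⟩,h3,h4⟩, hF1, hF2⟩
          obtain ⟨⟨hb1,hb2⟩,hb3,hb4⟩ := hfb x y h1 h2 h3 h4
          have hF1M : ⌊(n:ℝ)*(x+y)⌋ = ((i.val+j.val : ℕ):ℤ) := by
            by_contra hne
            have hF1M1 : ⌊(n:ℝ)*(x+y)⌋ = ((i.val+j.val+1 : ℕ):ℤ) := by
              push_cast at hb1 hb2 hne ⊢; omega
            have hmm := modkey _ _ _ hF1M1 hF1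
            rw [hA0] at hmm
            exact mod_adj _ _ rfl hmm
          have hxy : (n:ℝ)*(x+y) < (i.val:ℝ)+(j.val:ℝ)+1 := by
            have h' := Int.floor_lt.1 (show ⌊(n:ℝ)*(x+y)⌋ < ((i.val+j.val:ℕ):ℤ)+1 by omega)
            push_cast at h'; linarith
          have hF2lt : ⌊(n:ℝ)*(x+2*y)⌋ < ((i.val+2*j.val:ℕ):ℤ)+2 := by
            apply Int.floor_lt.2; push_cast; linarith
          rcases (show ⌊(n:ℝ)*(x+2*y)⌋ = ((i.val+2*j.val:ℕ):ℤ) ∨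
              ⌊(n:ℝ)*(x+2*y)⌋ = ((i.val+2*j.val+1:ℕ):ℤ) by push_cast at hb3 hF2lt ⊢; omega)
            with h|h
          · exact hB0 (modkey _ _ _ h hF2).symm
          · exact hB1 (modkey _ _ _ h hF2).symm
        rw [hSeq, measure_empty, if_neg ?_]
        · simp
        · rintro (h|h|h|h) <;> rw [Prod.mk.injEq] at h
          · exact hB0 (hl1.mp h.2)
          · exact hB1 (hl2.mp h.2)
          · have hx := hk2.mp h.1
            rw [hA0] at hx
            exact mod_adj _ _ rfl hx.symm
          · have hx := hk2.mp h.1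
            rw [hA0] at hx
            exact mod_adj _ _ rfl hx.symm
  · by_cases hA1 : k.val = (i.val + j.val + 1) % n
    · by_cases hB1 : l.val = (i.val + 2*j.val + 1) % n
      · -- case 3 : (k,l) = (i+j+1, i+2j+1)
        rw [if_pos (Or.inr (Or.inr (Or.inl (by
          rw [Prod.mk.injEq]; exact ⟨hk2.mpr hA1, hl2.mpr hB1⟩))))]
        refine hfinal _ ?_
        have hSeq : Δ i j ∩ f ⁻¹' Δ k l = {q : ℝ × ℝ |
            (((i.val:ℝ)) ≤ (n:ℝ)*q.1 ∧ (n:ℝ)*q.1 < (i.val:ℝ)+1) ∧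
            (((j.val:ℝ)) ≤ (n:ℝ)*q.2 ∧ (n:ℝ)*q.2 < (j.val:ℝ)+1) ∧
            ((i.val:ℝ)+(j.val:ℝ)+1 ≤ (n:ℝ)*(q.1+q.2) ∧
              (n:ℝ)*(q.1+q.2) < (i.val:ℝ)+(j.val:ℝ)+2) ∧
            ((i.val:ℝ)+2*(j.val:ℝ)+1 ≤ (n:ℝ)*(q.1+2*q.2) ∧
              (n:ℝ)*(q.1+2*q.2) < (i.val:ℝ)+2*(j.val:ℝ)+2)} := by
          ext ⟨x, y⟩
          rw [hmem x y]
          simp only [Set.mem_setOf_eq]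
          constructor
          · rintro ⟨⟨⟨h1,h2⟩,h3,h4⟩, hF1, hF2⟩
            obtain ⟨⟨hb1,hb2⟩,hb3,hb4⟩ := hfb x y h1 h2 h3 h4
            have hF1M1 : ⌊(n:ℝ)*(x+y)⌋ = ((i.val+j.val+1 : ℕ):ℤ) := by
              by_contra hne
              have hF1M : ⌊(n:ℝ)*(x+y)⌋ = ((i.val+j.val : ℕ):ℤ) := by
                push_cast at hb1 hb2 hne ⊢; omega
              exact hA0 (modkey _ _ _ hF1M hF1).symm
            have hxyge : (i.val:ℝ)+(j.val:ℝ)+1 ≤ (n:ℝ)*(x+y) := by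
              have h' := Int.le_floor.1 hF1M1.symm.le
              push_cast at h'; linarith
            have hxylt : (n:ℝ)*(x+y) < (i.val:ℝ)+(j.val:ℝ)+2 := by linarith
            have hF2ge : ((i.val+2*j.val+1:ℕ):ℤ) ≤ ⌊(n:ℝ)*(x+2*y)⌋ :=
              Int.le_floor.2 (by push_cast; linarith)
            have hF2N1 : ⌊(n:ℝ)*(x+2*y)⌋ = ((i.val+2*j.val+1 : ℕ):ℤ) := by
              by_contra hne
              have hF2N2 : ⌊(n:ℝ)*(x+2*y)⌋ = ((i.val+2*j.val+2 : ℕ):ℤ) := by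
                push_cast at hF2ge hb4 hne ⊢; omega
              have hmm := modkey _ _ _ hF2N2 hF2
              rw [hB1] at hmm
              exact mod_adj _ _ (by omega) hmm
            have hge : (i.val:ℝ)+2*(j.val:ℝ)+1 ≤ (n:ℝ)*(x+2*y) := by
              have h' := Int.le_floor.1 hF2N1.symm.le
              push_cast at h'; linarith
            have hlt2 : (n:ℝ)*(x+2*y) < (i.val:ℝ)+2*(j.val:ℝ)+2 := by
              have h' := Int.floor_lt.1
                (show ⌊(n:ℝ)*(x+2*y)⌋ < ((i.val+2*j.val+1:ℕ):ℤ)+1 by omega)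
              push_cast at h'; linarith
            exact ⟨⟨by linarith, by linarith⟩, ⟨by linarith, by linarith⟩,
              ⟨hxyge, hxylt⟩, hge, hlt2⟩
          · rintro ⟨⟨h1,h2⟩,⟨h3,h4⟩,⟨h5,h6⟩,h7,h8⟩
            have h1' : (i.val:ℝ) ≤ x*(n:ℝ) := by linarith
            have h2' : x*(n:ℝ) < (i.val:ℝ)+1 := by linarith
            have h3' : (j.val:ℝ) ≤ y*(n:ℝ) := by linarith
            have h4' : y*(n:ℝ) < (j.val:ℝ)+1 := by linarith
            obtain ⟨⟨hb1,hb2⟩,hb3,hb4⟩ := hfb x y h1' h2' h3' h4'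
            have hF1M1 : ⌊(n:ℝ)*(x+y)⌋ = ((i.val+j.val+1 : ℕ):ℤ) := by
              have hge' : ((i.val+j.val+1:ℕ):ℤ) ≤ ⌊(n:ℝ)*(x+y)⌋ :=
                Int.le_floor.2 (by push_cast; linarith)
              have hlt : ⌊(n:ℝ)*(x+y)⌋ < ((i.val+j.val+1:ℕ):ℤ)+1 :=
                Int.floor_lt.2 (by push_cast; linarith)
              omega
            have hF2N1 : ⌊(n:ℝ)*(x+2*y)⌋ = ((i.val+2*j.val+1 : ℕ):ℤ) := by
              have hge' : ((i.val+2*j.val+1:ℕ):ℤ) ≤ ⌊(n:ℝ)*(x+2*y)⌋ :=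
                Int.le_floor.2 (by push_cast; linarith)
              have hlt : ⌊(n:ℝ)*(x+2*y)⌋ < ((i.val+2*j.val+1:ℕ):ℤ)+1 :=
                Int.floor_lt.2 (by push_cast; linarith)
              omega
            refine ⟨⟨⟨h1', h2'⟩, h3', h4'⟩, ?_, ?_⟩
            · rw [hF1M1, natmod]; exact_mod_cast hA1.symm
            · rw [hF2N1, natmod]; exact_mod_cast hB1.symm
        rw [hSeq]
        exact vol_quarter₃ (n:ℝ) (i.val:ℝ) (j.val:ℝ) hnr
      · by_cases hB2 : l.val = (i.val + 2*j.val + 2) % n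
        · -- case 4 : (k,l) = (i+j+1, i+2j+2)
          rw [if_pos (Or.inr (Or.inr (Or.inr (by
            rw [Prod.mk.injEq]; exact ⟨hk2.mpr hA1, hl3.mpr hB2⟩))))]
          refine hfinal _ ?_
          have hSeq : Δ i j ∩ f ⁻¹' Δ k l = {q : ℝ × ℝ |
              (((i.val:ℝ)) ≤ (n:ℝ)*q.1 ∧ (n:ℝ)*q.1 < (i.val:ℝ)+1) ∧
              (((j.val:ℝ)) ≤ (n:ℝ)*q.2 ∧ (n:ℝ)*q.2 < (j.val:ℝ)+1) ∧
              ((i.val:ℝ)+(j.val:ℝ)+1 ≤ (n:ℝ)*(q.1+q.2) ∧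
                (n:ℝ)*(q.1+q.2) < (i.val:ℝ)+(j.val:ℝ)+2) ∧
              ((i.val:ℝ)+2*(j.val:ℝ)+2 ≤ (n:ℝ)*(q.1+2*q.2) ∧
                (n:ℝ)*(q.1+2*q.2) < (i.val:ℝ)+2*(j.val:ℝ)+3)} := by
            ext ⟨x, y⟩
            rw [hmem x y]
            simp only [Set.mem_setOf_eq]
            constructor
            · rintro ⟨⟨⟨h1,h2⟩,h3,h4⟩, hF1, hF2⟩
              obtain ⟨⟨hb1,hb2⟩,hb3,hb4⟩ := hfb x y h1 h2 h3 h4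
              have hF1M1 : ⌊(n:ℝ)*(x+y)⌋ = ((i.val+j.val+1 : ℕ):ℤ) := by
                by_contra hne
                have hF1M : ⌊(n:ℝ)*(x+y)⌋ = ((i.val+j.val : ℕ):ℤ) := by
                  push_cast at hb1 hb2 hne ⊢; omega
                exact hA0 (modkey _ _ _ hF1M hF1).symm
              have hxyge : (i.val:ℝ)+(j.val:ℝ)+1 ≤ (n:ℝ)*(x+y) := by
                have h' := Int.le_floor.1 hF1M1.symm.le
                push_cast at h'; linarith
              have hxylt : (n:ℝ)*(x+y) < (i.val:ℝ)+(j.val:ℝ)+2 := by linarith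
              have hF2ge : ((i.val+2*j.val+1:ℕ):ℤ) ≤ ⌊(n:ℝ)*(x+2*y)⌋ :=
                Int.le_floor.2 (by push_cast; linarith)
              have hF2N2 : ⌊(n:ℝ)*(x+2*y)⌋ = ((i.val+2*j.val+2 : ℕ):ℤ) := by
                by_contra hne
                have hF2N1 : ⌊(n:ℝ)*(x+2*y)⌋ = ((i.val+2*j.val+1 : ℕ):ℤ) := by
                  push_cast at hF2ge hb4 hne ⊢; omega
                exact hB1 (modkey _ _ _ hF2N1 hF2).symm
              have hge : (i.val:ℝ)+2*(j.val:ℝ)+2 ≤ (n:ℝ)*(x+2*y) := by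
                have h' := Int.le_floor.1 hF2N2.symm.le
                push_cast at h'; linarith
              have hlt2 : (n:ℝ)*(x+2*y) < (i.val:ℝ)+2*(j.val:ℝ)+3 := by linarith
              exact ⟨⟨by linarith, by linarith⟩, ⟨by linarith, by linarith⟩,
                ⟨hxyge, hxylt⟩, hge, hlt2⟩
            · rintro ⟨⟨h1,h2⟩,⟨h3,h4⟩,⟨h5,h6⟩,h7,h8⟩
              have h1' : (i.val:ℝ) ≤ x*(n:ℝ) := by linarith
              have h2' : x*(n:ℝ) < (i.val:ℝ)+1 := by linarith
              have h3' : (j.val:ℝ) ≤ y*(n:ℝ) := by linarith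
              have h4' : y*(n:ℝ) < (j.val:ℝ)+1 := by linarith
              obtain ⟨⟨hb1,hb2⟩,hb3,hb4⟩ := hfb x y h1' h2' h3' h4'
              have hF1M1 : ⌊(n:ℝ)*(x+y)⌋ = ((i.val+j.val+1 : ℕ):ℤ) := by
                have hge' : ((i.val+j.val+1:ℕ):ℤ) ≤ ⌊(n:ℝ)*(x+y)⌋ :=
                  Int.le_floor.2 (by push_cast; linarith)
                have hlt : ⌊(n:ℝ)*(x+y)⌋ < ((i.val+j.val+1:ℕ):ℤ)+1 :=
                  Int.floor_lt.2 (by push_cast; linarith)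
                omega
              have hF2N2 : ⌊(n:ℝ)*(x+2*y)⌋ = ((i.val+2*j.val+2 : ℕ):ℤ) := by
                have hge' : ((i.val+2*j.val+2:ℕ):ℤ) ≤ ⌊(n:ℝ)*(x+2*y)⌋ :=
                  Int.le_floor.2 (by push_cast; linarith)
                have hlt : ⌊(n:ℝ)*(x+2*y)⌋ < ((i.val+2*j.val+2:ℕ):ℤ)+1 :=
                  Int.floor_lt.2 (by push_cast; linarith)
                omega
              refine ⟨⟨⟨h1', h2'⟩, h3', h4'⟩, ?_, ?_⟩
              · rw [hF1M1, natmod]; exact_mod_cast hA1.symm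
              · rw [hF2N2, natmod]; exact_mod_cast hB2.symm
          rw [hSeq]
          exact vol_quarter₄ (n:ℝ) (i.val:ℝ) (j.val:ℝ) hnr
        · -- empty case (k matches i+j+1, l matches nothing)
          have hSeq : Δ i j ∩ f ⁻¹' Δ k l = ∅ := by
            ext ⟨x, y⟩
            rw [hmem x y]
            simp only [Set.mem_empty_iff_false, iff_false]
            rintro ⟨⟨⟨h1,h2⟩,h3,h4⟩, hF1, hF2⟩
            obtain ⟨⟨hb1,hb2⟩,hb3,hb4⟩ := hfb x y h1 h2 h3 h4
            have hF1M1 : ⌊(n:ℝ)*(x+y)⌋ = ((i.val+j.val+1 : ℕ):ℤ) := by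
              by_contra hne
              have hF1M : ⌊(n:ℝ)*(x+y)⌋ = ((i.val+j.val : ℕ):ℤ) := by
                push_cast at hb1 hb2 hne ⊢; omega
              exact hA0 (modkey _ _ _ hF1M hF1).symm
            have hxyge : (i.val:ℝ)+(j.val:ℝ)+1 ≤ (n:ℝ)*(x+y) := by
              have h' := Int.le_floor.1 hF1M1.symm.le
              push_cast at h'; linarith
            have hF2ge : ((i.val+2*j.val+1:ℕ):ℤ) ≤ ⌊(n:ℝ)*(x+2*y)⌋ :=
              Int.le_floor.2 (by push_cast; linarith)
            rcases (show ⌊(n:ℝ)*(x+2*y)⌋ = ((i.val+2*j.val+1:ℕ):ℤ) ∨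
                ⌊(n:ℝ)*(x+2*y)⌋ = ((i.val+2*j.val+2:ℕ):ℤ) by
                  push_cast at hF2ge hb4 ⊢; omega) with h|h
            · exact hB1 (modkey _ _ _ h hF2).symm
            · exact hB2 (modkey _ _ _ h hF2).symm
          rw [hSeq, measure_empty, if_neg ?_]
          · simp
          · rintro (h|h|h|h) <;> rw [Prod.mk.injEq] at h
            · have hx := hk1.mp h.1
              rw [hx] at hA1
              exact mod_adj _ _ rfl hA1.symm
            · have hx := hk1.mp h.1
              rw [hx] at hA1
              exact mod_adj _ _ rfl hA1.symm
            · exact hB1 (hl2.mp h.2)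
            · exact hB2 (hl3.mp h.2)
    · -- empty case (k matches nothing)
      have hSeq : Δ i j ∩ f ⁻¹' Δ k l = ∅ := by
        ext ⟨x, y⟩
        rw [hmem x y]
        simp only [Set.mem_empty_iff_false, iff_false]
        rintro ⟨⟨⟨h1,h2⟩,h3,h4⟩, hF1, hF2⟩
        obtain ⟨⟨hb1,hb2⟩,hb3,hb4⟩ := hfb x y h1 h2 h3 h4
        rcases (show ⌊(n:ℝ)*(x+y)⌋ = ((i.val+j.val:ℕ):ℤ) ∨
            ⌊(n:ℝ)*(x+y)⌋ = ((i.val+j.val+1:ℕ):ℤ) by push_cast at hb1 hb2 ⊢; omega) with h|h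
        · exact hA0 (modkey _ _ _ h hF1).symm
        · exact hA1 (modkey _ _ _ h hF1).symm
      rw [hSeq, measure_empty, if_neg ?_]
      · simp
      · rintro (h|h|h|h) <;> rw [Prod.mk.injEq] at h
        · exact hA0 (hk1.mp h.1)
        · exact hA0 (hk1.mp h.1)
        · exact hA1 (hk2.mp h.1)
        · exact hA1 (hk2.mp h.1)
end

section
/- Let f be the 'cat' map of the unit torus X = [0,1)², f(x,y) = (x + y mod 1, x + 2y mod 1), and for n ≥ 3 let Δ'_{ij} be the shifted standard partition consisting of the squares of side 1/n centered at the points (i/n, j/n) (i.e. the standard partition shifted by 1/(2n) in both coordinates), i, j ∈ {0,…,n−1}. Then the Ulam transition probabilities p_{(i,j),(k,l)} = m(Δ'_{ij} ∩ f^{-1}Δ'_{kl})/m(Δ'_{ij}) equal 1/2 for (k,l) ≡ (i+j, i+2j) (mod n), equal 1/8 for each of (k,l) ≡ (i+j, i+2j+1), (i+j+1, i+2j+1), (i+j, i+2j−1), (i+j−1, i+2j−1) (mod n), and equal 0 for all other (k,l). -/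
open MeasureTheory Set

lemma fract_fract_add (a b : ℝ) : Int.fract (Int.fract a + b) = Int.fract (a + b) := by
  rw [show Int.fract a + b = a + b - (⌊a⌋ : ℤ) by rw [← Int.self_sub_floor]; ring,
    Int.fract_sub_intCast]

lemma fract_sub_one (a : ℝ) : Int.fract (a - 1) = Int.fract a := by
  simpa using Int.fract_sub_int a 1

lemma fract_add_measure_eq (c : ℝ) {S : Set ℝ} (hS : MeasurableSet S) :
    volume ((fun x => Int.fract (x + c)) ⁻¹' S ∩ Ico (0:ℝ) 1) = volume (S ∩ Ico (0:ℝ) 1) := by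
  set γ := Int.fract c with hγdef
  have hγ0 : 0 ≤ γ := Int.fract_nonneg c
  have hγ1 : γ < 1 := Int.fract_lt_one c
  have hfc : ∀ x : ℝ, Int.fract (x + c) = Int.fract (x + γ) := by
    intro x
    rw [show x + c = (x + γ) + (⌊c⌋ : ℤ) by rw [hγdef, ← Int.self_sub_floor]; ring,
      Int.fract_add_intCast]
  have hset : (fun x => Int.fract (x + c)) ⁻¹' S ∩ Ico (0:ℝ) 1
      = ((· + γ) ⁻¹' (S ∩ Ico γ 1)) ∪ ((· + (γ - 1)) ⁻¹' (S ∩ Ico 0 γ)) := by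
    ext x
    simp only [mem_inter_iff, mem_preimage, mem_Ico, mem_union]
    constructor
    · rintro ⟨hxS, hx0, hx1⟩
      rw [hfc] at hxS
      by_cases h : x + γ < 1
      · left
        have he : Int.fract (x + γ) = x + γ := Int.fract_eq_self.2 ⟨by linarith, h⟩
        rw [he] at hxS
        exact ⟨hxS, by linarith, h⟩
      · right
        push_neg at h
        have he : Int.fract (x + γ) = x + γ - 1 := by
          rw [← fract_sub_one]
          exact Int.fract_eq_self.2 ⟨by linarith, by linarith⟩
        rw [he] at hxS
        exact ⟨by rw [show x + (γ - 1) = x + γ - 1 by ring]; exact hxS, by linarith, by linarith⟩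
    · rintro (⟨hxS, h1, h2⟩ | ⟨hxS, h1, h2⟩)
      · have he : Int.fract (x + γ) = x + γ := Int.fract_eq_self.2 ⟨by linarith, h2⟩
        exact ⟨by rw [hfc, he]; exact hxS, by linarith, by linarith⟩
      · have h1' : (0:ℝ) ≤ x + (γ - 1) := h1
        have h2' : x + (γ - 1) < γ := h2
        have he : Int.fract (x + γ) = x + γ - 1 := by
          rw [← fract_sub_one]
          exact Int.fract_eq_self.2 ⟨by linarith, by linarith⟩
        refine ⟨by rw [hfc, he, show x + γ - 1 = x + (γ - 1) by ring]; exact hxS, by linarith,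
          by linarith⟩
  have hd1 : Disjoint ((· + γ) ⁻¹' (S ∩ Ico γ 1)) ((· + (γ - 1)) ⁻¹' (S ∩ Ico 0 γ)) := by
    rw [Set.disjoint_left]
    rintro x ⟨_, _, h2⟩ ⟨_, h3, _⟩
    have h2' : x + γ < 1 := h2
    have h3' : (0:ℝ) ≤ x + (γ - 1) := h3
    linarith
  have hm2 : MeasurableSet ((· + (γ - 1)) ⁻¹' (S ∩ Ico 0 γ)) :=
    (hS.inter measurableSet_Ico).preimage (measurable_add_const _)
  rw [hset, measure_union hd1 hm2, measure_preimage_add_right, measure_preimage_add_right,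
    add_comm,
    ← measure_union ((Ico_disjoint_Ico_same).inter_right' S |>.inter_left' S)
      (hS.inter measurableSet_Ico),
    ← inter_union_distrib_left, Ico_union_Ico_eq_Ico hγ0 hγ1.le]

lemma measurePreserving_fract_add (c : ℝ) :
    MeasurePreserving (fun x => Int.fract (x + c))
      (volume.restrict (Ico (0:ℝ) 1)) (volume.restrict (Ico (0:ℝ) 1)) := by
  have hmeas : Measurable fun x : ℝ => Int.fract (x + c) :=
    measurable_fract.comp (measurable_add_const c)
  refine ⟨hmeas, ?_⟩
  refine Measure.ext fun S hS => ?_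
  rw [Measure.map_apply hmeas hS, Measure.restrict_apply (hmeas hS), Measure.restrict_apply hS]
  exact fract_add_measure_eq c hS

lemma vol2 (c d : ℝ) {S : Set (ℝ × ℝ)} (hS : MeasurableSet S) :
    volume {q : ℝ × ℝ | q.1 ∈ Ico (0:ℝ) 1 ∧ q.2 ∈ Ico (0:ℝ) 1 ∧
      (Int.fract (q.1 + c), Int.fract (q.2 + d)) ∈ S}
      = volume (S ∩ (Ico (0:ℝ) 1 ×ˢ Ico (0:ℝ) 1)) := by
  have hφ : MeasurePreserving
      (Prod.map (fun x : ℝ => Int.fract (x + c)) (fun y : ℝ => Int.fract (y + d)))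
      (volume.restrict (Ico (0:ℝ) 1 ×ˢ Ico (0:ℝ) 1))
      (volume.restrict (Ico (0:ℝ) 1 ×ˢ Ico (0:ℝ) 1)) := by
    have h := (measurePreserving_fract_add c).prod (measurePreserving_fract_add d)
    rwa [Measure.prod_restrict, ← Measure.volume_eq_prod] at h
  have hset : {q : ℝ × ℝ | q.1 ∈ Ico (0:ℝ) 1 ∧ q.2 ∈ Ico (0:ℝ) 1 ∧
      (Int.fract (q.1 + c), Int.fract (q.2 + d)) ∈ S}
      = (Prod.map (fun x : ℝ => Int.fract (x + c)) (fun y : ℝ => Int.fract (y + d))) ⁻¹' S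
        ∩ (Ico (0:ℝ) 1 ×ˢ Ico (0:ℝ) 1) := by
    ext q
    simp only [mem_setOf_eq, mem_inter_iff, mem_preimage, Prod.map_apply, mem_prod]
    tauto
  rw [hset, ← Measure.restrict_apply (hφ.measurable hS),
    ← Measure.map_apply hφ.measurable hS, hφ.map_eq, Measure.restrict_apply hS]

lemma vol_section_fst {A : Set ℝ} (hA : MeasurableSet A) {f g : ℝ → ℝ}
    (hf : Measurable f) (hg : Measurable g) :
    volume {q : ℝ × ℝ | q.1 ∈ A ∧ q.2 ∈ Ico (f q.1) (g q.1)}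
      = ∫⁻ x in A, ENNReal.ofReal (g x - f x) := by
  have hmeas : MeasurableSet {q : ℝ × ℝ | q.1 ∈ A ∧ q.2 ∈ Ico (f q.1) (g q.1)} := by
    refine (hA.preimage measurable_fst).inter (MeasurableSet.inter ?_ ?_)
    · exact measurableSet_le (hf.comp measurable_fst) measurable_snd
    · exact measurableSet_lt measurable_snd (hg.comp measurable_fst)
  rw [Measure.volume_eq_prod, Measure.prod_apply hmeas]
  rw [← lintegral_indicator hA]
  congr 1
  ext x
  classical
  rw [Set.indicator_apply]
  by_cases hx : x ∈ A
  · simp only [hx, if_true]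
    have : (Prod.mk x ⁻¹' {q : ℝ × ℝ | q.1 ∈ A ∧ q.2 ∈ Ico (f q.1) (g q.1)})
        = Ico (f x) (g x) := by
      ext y; simp [hx]
    rw [this, Real.volume_Ico]
  · simp only [hx, if_false]
    have : (Prod.mk x ⁻¹' {q : ℝ × ℝ | q.1 ∈ A ∧ q.2 ∈ Ico (f q.1) (g q.1)}) = ∅ := by
      ext y; simp [hx]
    rw [this, measure_empty]

lemma vol_section_snd {A : Set ℝ} (hA : MeasurableSet A) {f g : ℝ → ℝ}
    (hf : Measurable f) (hg : Measurable g) :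
    volume {q : ℝ × ℝ | q.2 ∈ A ∧ q.1 ∈ Ico (f q.2) (g q.2)}
      = ∫⁻ x in A, ENNReal.ofReal (g x - f x) := by
  have hmeas : MeasurableSet {q : ℝ × ℝ | q.2 ∈ A ∧ q.1 ∈ Ico (f q.2) (g q.2)} := by
    refine (hA.preimage measurable_snd).inter (MeasurableSet.inter ?_ ?_)
    · exact measurableSet_le (hf.comp measurable_snd) measurable_fst
    · exact measurableSet_lt measurable_fst (hg.comp measurable_snd)
  rw [Measure.volume_eq_prod, Measure.prod_apply_symm hmeas]
  rw [← lintegral_indicator hA]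
  congr 1
  ext y
  classical
  rw [Set.indicator_apply]
  by_cases hy : y ∈ A
  · simp only [hy, if_true]
    have : ((fun x => (x, y)) ⁻¹' {q : ℝ × ℝ | q.2 ∈ A ∧ q.1 ∈ Ico (f q.2) (g q.2)})
        = Ico (f y) (g y) := by
      ext x; simp [hy]
    rw [this, Real.volume_Ico]
  · simp only [hy, if_false]
    have : ((fun x => (x, y)) ⁻¹' {q : ℝ × ℝ | q.2 ∈ A ∧ q.1 ∈ Ico (f q.2) (g q.2)}) = ∅ := by
      ext x; simp [hy]
    rw [this, measure_empty]

lemma lint_sub_right (a b : ℝ) (h : a ≤ b) :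
    ∫⁻ x in Ico a b, ENNReal.ofReal (b - x) = ENNReal.ofReal ((b - a)^2 / 2) := by
  rw [Measure.restrict_congr_set Ico_ae_eq_Ioc]
  rw [← ofReal_integral_eq_lintegral_ofReal]
  · congr 1
    rw [← intervalIntegral.integral_of_le h]
    rw [intervalIntegral.integral_sub intervalIntegrable_const intervalIntegral.intervalIntegrable_id]
    rw [intervalIntegral.integral_const, integral_id]
    simp only [smul_eq_mul]
    ring
  · apply Continuous.integrableOn_Ioc
    continuity
  · filter_upwards [ae_restrict_mem measurableSet_Ioc] with x hx
    simp only [Pi.zero_apply]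
    linarith [hx.2]

lemma lint_sub_left (a b : ℝ) (h : a ≤ b) :
    ∫⁻ x in Ico a b, ENNReal.ofReal (x - a) = ENNReal.ofReal ((b - a)^2 / 2) := by
  rw [Measure.restrict_congr_set Ico_ae_eq_Ioc]
  rw [← ofReal_integral_eq_lintegral_ofReal]
  · congr 1
    rw [← intervalIntegral.integral_of_le h]
    rw [intervalIntegral.integral_sub intervalIntegral.intervalIntegrable_id intervalIntegrable_const]
    rw [intervalIntegral.integral_const, integral_id]
    simp only [smul_eq_mul]
    ring
  · apply Continuous.integrableOn_Ioc
    continuity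
  · filter_upwards [ae_restrict_mem measurableSet_Ioc] with x hx
    simp only [Pi.zero_apply]
    linarith [hx.1]

lemma fract_sub_one' (a : ℝ) : Int.fract (a - 1) = Int.fract a := by
  simpa using Int.fract_sub_int a 1

lemma fract_eq_self' (x : ℝ) (h0 : 0 ≤ x) (h1 : x < 1) : Int.fract x = x :=
  Int.fract_eq_self.2 ⟨h0, h1⟩

lemma fract_eq_add_one (x : ℝ) (h0 : -1 ≤ x) (h1 : x < 0) : Int.fract x = x + 1 := by
  rw [show x = (x + 1) - 1 by ring, fract_sub_one', fract_eq_self' _ (by linarith) (by linarith)]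
  ring

lemma Wcond (n : ℕ) (hn : 3 ≤ n) {s : ℝ} (hsn : s = 1/(2*(n:ℝ)))
    (r : ℤ) (hr0 : 0 ≤ r) (hrn : r < (n:ℤ)) {W : ℝ} (hW0 : 0 ≤ W) (hW : W < 4*s) :
    (Int.fract (W - s + (r:ℝ)/(n:ℝ)) < 2*s) ↔
      ((r = 0 ∧ s ≤ W ∧ W < 3*s) ∨ (r = 1 ∧ 0 ≤ W ∧ W < s)
        ∨ (r = (n:ℤ) - 1 ∧ 3*s ≤ W ∧ W < 4*s)) := by
  have hn' : (3:ℝ) ≤ (n:ℝ) := by exact_mod_cast hn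
  have hnpos : (0:ℝ) < (n:ℝ) := by linarith
  have hs : 0 < s := by rw [hsn]; positivity
  have hinv : (1:ℝ)/(n:ℝ) = 2*s := by rw [hsn]; field_simp
  have hs6 : 6*s ≤ 1 := by
    rw [hsn, show 6*(1/(2*(n:ℝ))) = 3/(n:ℝ) by ring, div_le_one hnpos]; linarith
  have hcase : r = 0 ∨ r = 1 ∨ r = (n:ℤ) - 1 ∨ (2 ≤ r ∧ r ≤ (n:ℤ) - 2) := by omega
  rcases hcase with hr | hr | hr | ⟨hr1, hr2⟩
  · subst hr
    rw [show (((0:ℤ):ℝ))/(n:ℝ) = 0 by norm_num, add_zero]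
    constructor
    · intro h
      rcases lt_or_ge W s with hw | hw
      · exfalso
        rw [fract_eq_add_one _ (by linarith) (by linarith)] at h
        linarith
      · rcases lt_or_ge W (3*s) with hw2 | hw2
        · exact Or.inl ⟨rfl, hw, hw2⟩
        · exfalso
          rw [fract_eq_self' _ (by linarith) (by linarith)] at h
          linarith
    · rintro (⟨_, hw1, hw2⟩ | ⟨habs, _⟩ | ⟨habs, _⟩)
      · rw [fract_eq_self' _ (by linarith) (by linarith)]
        linarith
      · exact absurd habs (by decide)
      · exfalso; omega
  · subst hr
    rw [show W - s + ((1:ℤ):ℝ)/(n:ℝ) = W + s by push_cast; linarith]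
    constructor
    · intro h
      rcases lt_or_ge W s with hw | hw
      · exact Or.inr (Or.inl ⟨rfl, hW0, hw⟩)
      · exfalso
        rw [fract_eq_self' _ (by linarith) (by linarith)] at h
        linarith
    · rintro (⟨habs, _⟩ | ⟨_, hw1, hw2⟩ | ⟨habs, _⟩)
      · exact absurd habs (by decide)
      · rw [fract_eq_self' _ (by linarith) (by linarith)]
        linarith
      · exfalso; omega
  · subst hr
    have hfrac : ((((n:ℤ) - 1 : ℤ)):ℝ)/(n:ℝ) = 1 - 2*s := by
      push_cast
      rw [sub_div, div_self hnpos.ne']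
      linarith
    rw [show W - s + ((((n:ℤ) - 1 : ℤ)):ℝ)/(n:ℝ) = (W - 3*s) + 1 by rw [hfrac]; ring,
      Int.fract_add_one]
    constructor
    · intro h
      rcases lt_or_ge W (3*s) with hw | hw
      · exfalso
        rw [fract_eq_add_one _ (by linarith) (by linarith)] at h
        linarith
      · exact Or.inr (Or.inr ⟨rfl, hw, hW⟩)
    · rintro (⟨habs, _⟩ | ⟨habs, _⟩ | ⟨_, hw1, hw2⟩)
      · exfalso; omega
      · exfalso; omega
      · rw [fract_eq_self' _ (by linarith) (by linarith)]
        linarith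
  · have h2r : (2:ℝ) ≤ (r:ℝ) := by exact_mod_cast hr1
    have hrn2 : (r:ℝ) ≤ (n:ℝ) - 2 := by
      have : ((r:ℤ):ℝ) ≤ (((n:ℤ) - 2 : ℤ):ℝ) := by exact_mod_cast hr2
      push_cast at this
      linarith
    have h2n : (2:ℝ)/(n:ℝ) = 4*s := by
      rw [show (2:ℝ)/(n:ℝ) = 2*(1/(n:ℝ)) by ring, hinv]; ring
    have hlow : 4*s ≤ (r:ℝ)/(n:ℝ) := by
      rw [← h2n]; gcongr
    have hhigh : (r:ℝ)/(n:ℝ) ≤ 1 - 4*s := by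
      have h1 : (r:ℝ)/(n:ℝ) ≤ ((n:ℝ) - 2)/(n:ℝ) := by gcongr
      have h2 : ((n:ℝ) - 2)/(n:ℝ) = 1 - 4*s := by
        rw [sub_div, div_self hnpos.ne']
        linarith
      linarith
    refine iff_of_false ?_ ?_
    · rw [fract_eq_self' _ (by linarith) (by linarith)]
      push_neg
      linarith
    · rintro (⟨habs, _⟩ | ⟨habs, _⟩ | ⟨habs, _⟩) <;> omega

lemma Zcond (n : ℕ) (hn : 3 ≤ n) {s : ℝ} (hsn : s = 1/(2*(n:ℝ)))
    (r : ℤ) (hr0 : 0 ≤ r) (hrn : r < (n:ℤ)) {Z : ℝ} (hZ0 : 0 ≤ Z) (hZ : Z < 6*s) :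
    (Int.fract (Z - 2*s + (r:ℝ)/(n:ℝ)) < 2*s) ↔
      ((r = 0 ∧ 2*s ≤ Z ∧ Z < 4*s) ∨ (r = 1 ∧ 0 ≤ Z ∧ Z < 2*s)
        ∨ (r = (n:ℤ) - 1 ∧ 4*s ≤ Z ∧ Z < 6*s)) := by
  have hn' : (3:ℝ) ≤ (n:ℝ) := by exact_mod_cast hn
  have hnpos : (0:ℝ) < (n:ℝ) := by linarith
  have hs : 0 < s := by rw [hsn]; positivity
  have hinv : (1:ℝ)/(n:ℝ) = 2*s := by rw [hsn]; field_simp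
  have hs6 : 6*s ≤ 1 := by
    rw [hsn, show 6*(1/(2*(n:ℝ))) = 3/(n:ℝ) by ring, div_le_one hnpos]; linarith
  have hcase : r = 0 ∨ r = 1 ∨ r = (n:ℤ) - 1 ∨ (2 ≤ r ∧ r ≤ (n:ℤ) - 2) := by omega
  rcases hcase with hr | hr | hr | ⟨hr1, hr2⟩
  · subst hr
    rw [show (((0:ℤ):ℝ))/(n:ℝ) = 0 by norm_num, add_zero]
    constructor
    · intro h
      rcases lt_or_ge Z (2*s) with hw | hw
      · exfalso
        rw [fract_eq_add_one _ (by linarith) (by linarith)] at h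
        linarith
      · rcases lt_or_ge Z (4*s) with hw2 | hw2
        · exact Or.inl ⟨rfl, hw, hw2⟩
        · exfalso
          rw [fract_eq_self' _ (by linarith) (by linarith)] at h
          linarith
    · rintro (⟨_, hw1, hw2⟩ | ⟨habs, _⟩ | ⟨habs, _⟩)
      · rw [fract_eq_self' _ (by linarith) (by linarith)]
        linarith
      · exact absurd habs (by decide)
      · exfalso; omega
  · subst hr
    rw [show Z - 2*s + ((1:ℤ):ℝ)/(n:ℝ) = Z by push_cast; linarith]
    constructor
    · intro h
      rcases lt_or_ge Z (2*s) with hw | hw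
      · exact Or.inr (Or.inl ⟨rfl, hZ0, hw⟩)
      · exfalso
        rw [fract_eq_self' _ (by linarith) (by linarith)] at h
        linarith
    · rintro (⟨habs, _⟩ | ⟨_, hw1, hw2⟩ | ⟨habs, _⟩)
      · exact absurd habs (by decide)
      · rw [fract_eq_self' _ (by linarith) (by linarith)]
        linarith
      · exfalso; omega
  · subst hr
    have hfrac : ((((n:ℤ) - 1 : ℤ)):ℝ)/(n:ℝ) = 1 - 2*s := by
      push_cast
      rw [sub_div, div_self hnpos.ne']
      linarith
    rw [show Z - 2*s + ((((n:ℤ) - 1 : ℤ)):ℝ)/(n:ℝ) = (Z - 4*s) + 1 by rw [hfrac]; ring,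
      Int.fract_add_one]
    constructor
    · intro h
      rcases lt_or_ge Z (4*s) with hw | hw
      · exfalso
        rw [fract_eq_add_one _ (by linarith) (by linarith)] at h
        linarith
      · exact Or.inr (Or.inr ⟨rfl, hw, hZ⟩)
    · rintro (⟨habs, _⟩ | ⟨habs, _⟩ | ⟨_, hw1, hw2⟩)
      · exfalso; omega
      · exfalso; omega
      · rw [fract_eq_self' _ (by linarith) (by linarith)]
        linarith
  · have h2r : (2:ℝ) ≤ (r:ℝ) := by exact_mod_cast hr1
    have hrn2 : (r:ℝ) ≤ (n:ℝ) - 2 := by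
      have : ((r:ℤ):ℝ) ≤ (((n:ℤ) - 2 : ℤ):ℝ) := by exact_mod_cast hr2
      push_cast at this
      linarith
    have h2n : (2:ℝ)/(n:ℝ) = 4*s := by
      rw [show (2:ℝ)/(n:ℝ) = 2*(1/(n:ℝ)) by ring, hinv]; ring
    have hlow : 4*s ≤ (r:ℝ)/(n:ℝ) := by
      rw [← h2n]; gcongr
    have hhigh : (r:ℝ)/(n:ℝ) ≤ 1 - 4*s := by
      have h1 : (r:ℝ)/(n:ℝ) ≤ ((n:ℝ) - 2)/(n:ℝ) := by gcongr
      have h2 : ((n:ℝ) - 2)/(n:ℝ) = 1 - 4*s := by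
        rw [sub_div, div_self hnpos.ne']
        linarith
      linarith
    refine iff_of_false ?_ ?_
    · rw [fract_eq_self' _ (by linarith) (by linarith)]
      push_neg
      linarith
    · rintro (⟨habs, _⟩ | ⟨habs, _⟩ | ⟨habs, _⟩) <;> omega

lemma key5 (n : ℕ) (hn : 0 < n) (K A : ℤ) (hK0 : 0 ≤ K) (hKn : K < n) :
    K = A % n ↔ (n:ℤ) ∣ A - K := by
  constructor
  · rintro rfl
    exact ⟨A / n, by rw [Int.emod_def]; ring⟩
  · intro h
    have h2 : A ≡ K [ZMOD (n:ℤ)] := (Int.modEq_iff_dvd.mpr h).symm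
    have h3 : K % n = A % n := h2.symm
    rw [← h3, Int.emod_eq_of_lt hK0 hKn]

lemma key6 (n : ℕ) (hn : 0 < n) (x c : ℤ) (hc0 : 0 ≤ c) (hcn : c < n) :
    x % n = c ↔ (n:ℤ) ∣ x - c := by
  rw [eq_comm]
  exact key5 n hn c x hc0 hcn

lemma natCast_mod_int (a b : ℕ) : ((a % b : ℕ) : ℤ) = (a : ℤ) % b := by
  push_cast
  rfl

/-- `k = m` iff the mod-`n` residue of `m - k` is `0`. -/
lemma finG0 {n : ℕ} (hn : 3 ≤ n) (k m : Fin n) :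
    k = m ↔ ((m.val:ℤ) - k.val) % n = 0 := by
  have hn0 : 0 < n := by omega
  have hk : (k.val:ℤ) < n := by exact_mod_cast k.isLt
  have hm : (m.val:ℤ) < n := by exact_mod_cast m.isLt
  have hk0 : (0:ℤ) ≤ k.val := Int.ofNat_nonneg _
  have hm0 : (0:ℤ) ≤ m.val := Int.ofNat_nonneg _
  have hn' : (0:ℤ) < n := by exact_mod_cast hn0
  rw [Fin.ext_iff, key6 n hn0 _ 0 le_rfl hn', sub_zero]
  constructor
  · intro h
    rw [h]
    simp
  · rintro ⟨q, hq⟩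
    have h2 : ((m.val:ℤ) - k.val) = 0 := by
      rcases lt_trichotomy q 0 with h3 | h3 | h3
      · have : (n:ℤ)*q ≤ (n:ℤ)*(-1) := by
          apply mul_le_mul_of_nonneg_left (by omega) hn'.le
        linarith
      · rw [h3, mul_zero] at hq; linarith
      · have : (n:ℤ)*1 ≤ (n:ℤ)*q := by
          apply mul_le_mul_of_nonneg_left (by omega) hn'.le
        linarith
    omega

/-- `k = m + 1` iff the mod-`n` residue of `m - k` is `n - 1`. -/
lemma finGp {n : ℕ} [NeZero n] (hn : 3 ≤ n) (k m : Fin n) :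
    k = m + 1 ↔ ((m.val:ℤ) - k.val) % n = (n:ℤ) - 1 := by
  have hn0 : 0 < n := by omega
  have hn' : (0:ℤ) < n := by exact_mod_cast hn0
  have h1n : 1 % n = 1 := Nat.mod_eq_of_lt (by omega)
  have hk : (k.val:ℤ) < n := by exact_mod_cast k.isLt
  have hk0 : (0:ℤ) ≤ k.val := Int.ofNat_nonneg _
  rw [Fin.ext_iff, Fin.val_add, Fin.val_one' n, h1n,
    show k.val = (m.val + 1) % n ↔ ((k.val:ℤ)) = (((m.val + 1) % n : ℕ):ℤ) from
      (Nat.cast_inj (R := ℤ)).symm,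
    natCast_mod_int, key5 n hn0 (k.val:ℤ) _ hk0 hk,
    show ((m.val + 1 : ℕ):ℤ) - k.val = (((m.val:ℤ) - k.val) - ((n:ℤ) - 1)) + n by push_cast; ring,
    dvd_add_left (dvd_refl (n:ℤ)), ← key6 n hn0 _ ((n:ℤ)-1) (by omega) (by omega)]

/-- `k = m - 1` iff the mod-`n` residue of `m - k` is `1`. -/
lemma finGm {n : ℕ} [NeZero n] (hn : 3 ≤ n) (k m : Fin n) :
    k = m - 1 ↔ ((m.val:ℤ) - k.val) % n = 1 := by
  have hn0 : 0 < n := by omega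
  have hn' : (0:ℤ) < n := by exact_mod_cast hn0
  have h1n : 1 % n = 1 := Nat.mod_eq_of_lt (by omega)
  have hm : (m.val:ℤ) < n := by exact_mod_cast m.isLt
  have hm0 : (0:ℤ) ≤ m.val := Int.ofNat_nonneg _
  rw [eq_sub_iff_add_eq, Fin.ext_iff, Fin.val_add, Fin.val_one' n, h1n, eq_comm,
    show m.val = (k.val + 1) % n ↔ ((m.val:ℤ)) = (((k.val + 1) % n : ℕ):ℤ) from
      (Nat.cast_inj (R := ℤ)).symm,
    natCast_mod_int, key5 n hn0 (m.val:ℤ) _ hm0 hm,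
    show ((k.val + 1 : ℕ):ℤ) - m.val = -(((m.val:ℤ) - k.val) - 1) by push_cast; ring,
    dvd_neg, ← key6 n hn0 _ 1 (by omega) (by omega)]

lemma natCast_mod_int' (a b : ℕ) : ((a % b : ℕ) : ℤ) = (a : ℤ) % b := by
  push_cast; rfl

lemma valadd_mod {n : ℕ} (a b : Fin n) :
    (((a+b).val:ℤ)) % n = ((a.val:ℤ) + b.val) % n := by
  rw [Fin.val_add, natCast_mod_int', Int.emod_emod_of_dvd _ dvd_rfl]
  push_cast
  rfl

lemma bridge1 {n : ℕ} (i j k : Fin n) :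
    (((i+j).val:ℤ) - k.val) % n = ((i.val:ℤ) + j.val - k.val) % n := by
  rw [Int.sub_emod, valadd_mod, ← Int.sub_emod]

lemma bridge2 {n : ℕ} [NeZero n] (i j l : Fin n) :
    (((i+2*j).val:ℤ) - l.val) % n = ((i.val:ℤ) + 2*j.val - l.val) % n := by
  have h2 : i + 2*j = (i+j)+j := by open Fin.CommRing in ring
  have e2 : ((((i+j)+j).val:ℤ)) % n = (((i.val:ℤ) + j.val) + j.val) % n := by
    rw [valadd_mod, Int.add_emod, valadd_mod, ← Int.add_emod]
  rw [h2, Int.sub_emod, e2, ← Int.sub_emod, show ((i.val:ℤ) + j.val) + j.val - l.val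
    = (i.val:ℤ) + 2*j.val - l.val by ring]

/-- The cell-coordinate region with given bounds on `u+v` and `u+2v`. -/
def Tset (s a b c d : ℝ) : Set (ℝ × ℝ) :=
  {q : ℝ × ℝ | (0 ≤ q.1 ∧ q.1 < 2*s) ∧ (0 ≤ q.2 ∧ q.2 < 2*s) ∧
    (a ≤ q.1 + q.2 ∧ q.1 + q.2 < b) ∧ (c ≤ q.1 + 2*q.2 ∧ q.1 + 2*q.2 < d)}

lemma volT1 {s : ℝ} (hs : 0 < s) :
    volume (Tset s s (3*s) (2*s) (4*s)) = ENNReal.ofReal (2*s^2) := by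
  have hset : Tset s s (3*s) (2*s) (4*s)
      = {q : ℝ × ℝ | q.1 ∈ Ico 0 (2*s) ∧ q.2 ∈ Ico (s - q.1/2) (2*s - q.1/2)} := by
    ext q
    simp only [Tset, mem_setOf_eq, mem_Ico]
    constructor
    · rintro ⟨⟨h1, h2⟩, ⟨h3, h4⟩, ⟨h5, h6⟩, ⟨h7, h8⟩⟩
      exact ⟨⟨by linarith, by linarith⟩, by linarith, by linarith⟩
    · rintro ⟨⟨h1, h2⟩, h3, h4⟩
      refine ⟨⟨by linarith, by linarith⟩, ⟨by linarith, by linarith⟩,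
        ⟨by linarith, by linarith⟩, ⟨by linarith, by linarith⟩⟩
  rw [hset, vol_section_fst (f := fun x => s - x/2) (g := fun x => 2*s - x/2) measurableSet_Ico (by fun_prop) (by fun_prop),
    lintegral_congr fun x => by rw [show 2*s - x/2 - (s - x/2) = s by ring],
    setLIntegral_const, Real.volume_Ico, ← ENNReal.ofReal_mul hs.le]
  congr 1
  ring

lemma volT2 {s : ℝ} (hs : 0 < s) :
    volume (Tset s s (3*s) 0 (2*s)) = ENNReal.ofReal (s^2/2) := by
  have hset : Tset s s (3*s) 0 (2*s)
      = {q : ℝ × ℝ | q.2 ∈ Ico 0 s ∧ q.1 ∈ Ico (s - q.2) (2*s - 2*q.2)} := by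
    ext q
    simp only [Tset, mem_setOf_eq, mem_Ico]
    constructor
    · rintro ⟨⟨h1, h2⟩, ⟨h3, h4⟩, ⟨h5, h6⟩, ⟨h7, h8⟩⟩
      exact ⟨⟨by linarith, by linarith⟩, by linarith, by linarith⟩
    · rintro ⟨⟨h1, h2⟩, h3, h4⟩
      refine ⟨⟨by linarith, by linarith⟩, ⟨by linarith, by linarith⟩,
        ⟨by linarith, by linarith⟩, ⟨by linarith, by linarith⟩⟩
  rw [hset, vol_section_snd (f := fun x => s - x) (g := fun x => 2*s - 2*x) measurableSet_Ico (by fun_prop) (by fun_prop),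
    lintegral_congr fun x => by rw [show 2*s - 2*x - (s - x) = s - x by ring],
    lint_sub_right 0 s hs.le]
  congr 1
  ring

lemma volT3 {s : ℝ} (hs : 0 < s) :
    volume (Tset s s (3*s) (4*s) (6*s)) = ENNReal.ofReal (s^2/2) := by
  have hset : Tset s s (3*s) (4*s) (6*s)
      = {q : ℝ × ℝ | q.2 ∈ Ico s (2*s) ∧ q.1 ∈ Ico (4*s - 2*q.2) (3*s - q.2)} := by
    ext q
    simp only [Tset, mem_setOf_eq, mem_Ico]
    constructor
    · rintro ⟨⟨h1, h2⟩, ⟨h3, h4⟩, ⟨h5, h6⟩, ⟨h7, h8⟩⟩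
      exact ⟨⟨by linarith, by linarith⟩, by linarith, by linarith⟩
    · rintro ⟨⟨h1, h2⟩, h3, h4⟩
      refine ⟨⟨by linarith, by linarith⟩, ⟨by linarith, by linarith⟩,
        ⟨by linarith, by linarith⟩, ⟨by linarith, by linarith⟩⟩
  rw [hset, vol_section_snd (f := fun x => 4*s - 2*x) (g := fun x => 3*s - x) measurableSet_Ico (by fun_prop) (by fun_prop),
    lintegral_congr fun x => by rw [show 3*s - x - (4*s - 2*x) = x - s by ring],
    lint_sub_left s (2*s) (by linarith)]
  congr 1
  ring

lemma volT4 {s : ℝ} (hs : 0 < s) :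
    volume (Tset s (3*s) (4*s) (4*s) (6*s)) = ENNReal.ofReal (s^2/2) := by
  have hset : Tset s (3*s) (4*s) (4*s) (6*s)
      = {q : ℝ × ℝ | q.1 ∈ Ico s (2*s) ∧ q.2 ∈ Ico (3*s - q.1) (2*s)} := by
    ext q
    simp only [Tset, mem_setOf_eq, mem_Ico]
    constructor
    · rintro ⟨⟨h1, h2⟩, ⟨h3, h4⟩, ⟨h5, h6⟩, ⟨h7, h8⟩⟩
      exact ⟨⟨by linarith, by linarith⟩, by linarith, by linarith⟩
    · rintro ⟨⟨h1, h2⟩, h3, h4⟩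
      refine ⟨⟨by linarith, by linarith⟩, ⟨by linarith, by linarith⟩,
        ⟨by linarith, by linarith⟩, ⟨by linarith, by linarith⟩⟩
  rw [hset, vol_section_fst (f := fun x => 3*s - x) (g := fun _ => 2*s) measurableSet_Ico (by fun_prop) (by fun_prop),
    lintegral_congr fun x => by rw [show 2*s - (3*s - x) = x - s by ring],
    lint_sub_left s (2*s) (by linarith)]
  congr 1
  ring

lemma volT5 {s : ℝ} (hs : 0 < s) :
    volume (Tset s 0 s 0 (2*s)) = ENNReal.ofReal (s^2/2) := by
  have hset : Tset s 0 s 0 (2*s)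
      = {q : ℝ × ℝ | q.2 ∈ Ico 0 s ∧ q.1 ∈ Ico 0 (s - q.2)} := by
    ext q
    simp only [Tset, mem_setOf_eq, mem_Ico]
    constructor
    · rintro ⟨⟨h1, h2⟩, ⟨h3, h4⟩, ⟨h5, h6⟩, ⟨h7, h8⟩⟩
      exact ⟨⟨by linarith, by linarith⟩, by linarith, by linarith⟩
    · rintro ⟨⟨h1, h2⟩, h3, h4⟩
      refine ⟨⟨by linarith, by linarith⟩, ⟨by linarith, by linarith⟩,
        ⟨by linarith, by linarith⟩, ⟨by linarith, by linarith⟩⟩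
  rw [hset, vol_section_snd (f := fun _ => (0:ℝ)) (g := fun x => s - x) measurableSet_Ico (by fun_prop) (by fun_prop)]
  have : ∀ x : ℝ, ENNReal.ofReal (s - x - 0) = ENNReal.ofReal (s - x) := by
    intro x; rw [sub_zero]
  rw [lintegral_congr this, lint_sub_right 0 s hs.le]
  congr 1
  ring

lemma Tempty1 {s : ℝ} (hs : 0 < s) : Tset s 0 s (2*s) (4*s) = ∅ := by
  ext q; simp only [Tset, mem_setOf_eq, mem_empty_iff_false, iff_false]
  rintro ⟨⟨h1, h2⟩, ⟨h3, h4⟩, ⟨h5, h6⟩, ⟨h7, h8⟩⟩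
  linarith

lemma Tempty2 {s : ℝ} (hs : 0 < s) : Tset s 0 s (4*s) (6*s) = ∅ := by
  ext q; simp only [Tset, mem_setOf_eq, mem_empty_iff_false, iff_false]
  rintro ⟨⟨h1, h2⟩, ⟨h3, h4⟩, ⟨h5, h6⟩, ⟨h7, h8⟩⟩
  linarith

lemma Tempty3 {s : ℝ} (hs : 0 < s) : Tset s (3*s) (4*s) (2*s) (4*s) = ∅ := by
  ext q; simp only [Tset, mem_setOf_eq, mem_empty_iff_false, iff_false]
  rintro ⟨⟨h1, h2⟩, ⟨h3, h4⟩, ⟨h5, h6⟩, ⟨h7, h8⟩⟩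
  linarith

lemma Tempty4 {s : ℝ} (hs : 0 < s) : Tset s (3*s) (4*s) 0 (2*s) = ∅ := by
  ext q; simp only [Tset, mem_setOf_eq, mem_empty_iff_false, iff_false]
  rintro ⟨⟨h1, h2⟩, ⟨h3, h4⟩, ⟨h5, h6⟩, ⟨h7, h8⟩⟩
  linarith

/-- The transported cell-intersection set. -/
def Sset (s e₃ e₄ : ℝ) : Set (ℝ × ℝ) :=
  {w : ℝ × ℝ | w.1 < 2*s ∧ w.2 < 2*s ∧ Int.fract (w.1 + w.2 + e₃) < 2*s ∧
    Int.fract (w.1 + 2*w.2 + e₄) < 2*s}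

lemma Sset_meas (s e₃ e₄ : ℝ) : MeasurableSet (Sset s e₃ e₄) := by
  apply MeasurableSet.inter
  · exact measurableSet_lt measurable_fst measurable_const
  apply MeasurableSet.inter
  · exact measurableSet_lt measurable_snd measurable_const
  apply MeasurableSet.inter
  · exact measurableSet_lt
      ((measurable_fract.comp ((measurable_fst.add measurable_snd).add_const e₃)))
      measurable_const
  · exact measurableSet_lt
      ((measurable_fract.comp ((measurable_fst.add (measurable_snd.const_mul 2)).add_const e₄)))
      measurable_const

def S0 (s : ℝ) : Set (ℝ × ℝ) := {w : ℝ × ℝ | w.1 < 2*s ∧ w.2 < 2*s}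

lemma S0_meas (s : ℝ) : MeasurableSet (S0 s) :=
  (measurableSet_lt measurable_fst measurable_const).inter
    (measurableSet_lt measurable_snd measurable_const)

lemma S0_inter {s : ℝ} (h2s : 2*s ≤ 1) :
    S0 s ∩ (Ico (0:ℝ) 1 ×ˢ Ico (0:ℝ) 1) = Ico (0:ℝ) (2*s) ×ˢ Ico (0:ℝ) (2*s) := by
  ext q
  simp only [S0, mem_inter_iff, mem_setOf_eq, mem_prod, mem_Ico]
  constructor
  · rintro ⟨⟨h1, h2⟩, ⟨h3, h4⟩, h5, h6⟩
    exact ⟨⟨h3, h1⟩, h5, h2⟩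
  · rintro ⟨⟨h1, h2⟩, h3, h4⟩
    exact ⟨⟨h2, h4⟩, ⟨h1, by linarith⟩, h3, by linarith⟩

lemma SsetInterIff (n : ℕ) (hn : 3 ≤ n) {s : ℝ} (hsn : s = 1/(2*(n:ℝ)))
    (r r' : ℤ) (hr0 : 0 ≤ r) (hrn : r < (n:ℤ)) (hr'0 : 0 ≤ r') (hr'n : r' < (n:ℤ))
    {e₃ e₄ : ℝ}
    (he₃ : ∀ θ : ℝ, Int.fract (θ + e₃) = Int.fract (θ - s + (r:ℝ)/(n:ℝ)))
    (he₄ : ∀ θ : ℝ, Int.fract (θ + e₄) = Int.fract (θ - 2*s + (r':ℝ)/(n:ℝ)))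
    (q : ℝ × ℝ) :
    q ∈ Sset s e₃ e₄ ∩ (Ico (0:ℝ) 1 ×ˢ Ico (0:ℝ) 1) ↔
      ((0 ≤ q.1 ∧ q.1 < 2*s) ∧ (0 ≤ q.2 ∧ q.2 < 2*s) ∧
        ((r = 0 ∧ s ≤ q.1 + q.2 ∧ q.1 + q.2 < 3*s)
          ∨ (r = 1 ∧ 0 ≤ q.1 + q.2 ∧ q.1 + q.2 < s)
          ∨ (r = (n:ℤ) - 1 ∧ 3*s ≤ q.1 + q.2 ∧ q.1 + q.2 < 4*s)) ∧
        ((r' = 0 ∧ 2*s ≤ q.1 + 2*q.2 ∧ q.1 + 2*q.2 < 4*s)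
          ∨ (r' = 1 ∧ 0 ≤ q.1 + 2*q.2 ∧ q.1 + 2*q.2 < 2*s)
          ∨ (r' = (n:ℤ) - 1 ∧ 4*s ≤ q.1 + 2*q.2 ∧ q.1 + 2*q.2 < 6*s))) := by
  have hnR : (0:ℝ) < n := by
    have : (0:ℕ) < n := by omega
    exact_mod_cast this
  have hs : 0 < s := by rw [hsn]; positivity
  have h2s : 2*s ≤ 1 := by
    rw [hsn, show 2*(1/(2*(n:ℝ))) = 1/(n:ℝ) by ring, div_le_one hnR]
    exact_mod_cast by omega
  simp only [Sset, mem_inter_iff, mem_setOf_eq, mem_prod, mem_Ico]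
  constructor
  · rintro ⟨⟨h1, h2, h3, h4⟩, ⟨h5, h6⟩, h7, h8⟩
    rw [he₃] at h3
    rw [he₄] at h4
    refine ⟨⟨h5, h1⟩, ⟨h7, h2⟩, ?_, ?_⟩
    · exact (Wcond n hn hsn r hr0 hrn (by linarith) (by linarith)).mp h3
    · exact (Zcond n hn hsn r' hr'0 hr'n (by linarith) (by linarith)).mp h4
  · rintro ⟨⟨h1, h2⟩, ⟨h3, h4⟩, h5, h6⟩
    refine ⟨⟨h2, h4, ?_, ?_⟩, ⟨h1, by linarith⟩, h3, by linarith⟩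
    · rw [he₃]
      exact (Wcond n hn hsn r hr0 hrn (by linarith) (by linarith)).mpr h5
    · rw [he₄]
      exact (Zcond n hn hsn r' hr'0 hr'n (by linarith) (by linarith)).mpr h6

/-- For the 'cat' map `f(x,y) = (x+y mod 1, x+2y mod 1)` of the unit torus and the
shifted standard partition into `n²` torus squares of side `1/n` centered at the grid
points `(i/n, j/n)` (`n ≥ 3`), the Ulam transition probabilities `p_{(i,j),(k,l)}` equal
`1/2` for `(k,l) ≡ (i+j, i+2j)`, `1/8` for each of
`(k,l) ≡ (i+j, i+2j+1), (i+j+1, i+2j+1), (i+j, i+2j−1), (i+j−1, i+2j−1)` (mod `n`),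
and `0` for all other `(k,l)`.  A point of the torus `[0,1)²` belongs to the square
centered at `(i/n, j/n)` iff `fract(x − i/n + 1/(2n)) < 1/n` and similarly for `y`. -/
theorem cat_map_ulam_probabilities_shifted_partition
    (n : ℕ) [NeZero n] (hn : 3 ≤ n)
    (f : ℝ × ℝ → ℝ × ℝ)
    (hf : ∀ p : ℝ × ℝ, f p = (Int.fract (p.1 + p.2), Int.fract (p.1 + 2 * p.2)))
    (Δ : Fin n → Fin n → Set (ℝ × ℝ))
    (hΔ : ∀ i j, Δ i j = {q : ℝ × ℝ |
      q.1 ∈ Set.Ico (0 : ℝ) 1 ∧ q.2 ∈ Set.Ico (0 : ℝ) 1 ∧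
      Int.fract (q.1 - ((i : ℕ) : ℝ) / n + 1 / (2 * n)) < 1 / n ∧
      Int.fract (q.2 - ((j : ℕ) : ℝ) / n + 1 / (2 * n)) < 1 / n})
    (p : Fin n → Fin n → Fin n → Fin n → ℝ)
    (hp : ∀ i j k l, p i j k l
      = (volume (Δ i j ∩ f ⁻¹' Δ k l)).toReal / (volume (Δ i j)).toReal)
    (i j k l : Fin n) :
    p i j k l =
      if (k, l) = (i + j, i + 2 * j) then 1 / 2
      else if (k, l) = (i + j, i + 2 * j + 1) ∨ (k, l) = (i + j + 1, i + 2 * j + 1)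
          ∨ (k, l) = (i + j, i + 2 * j - 1) ∨ (k, l) = (i + j - 1, i + 2 * j - 1)
      then 1 / 8 else 0 := by
  have hn0 : 0 < n := by omega
  have hnR : (0:ℝ) < n := by exact_mod_cast hn0
  have hnZ : (0:ℤ) < n := by exact_mod_cast hn0
  obtain ⟨s, hsdef⟩ : ∃ t : ℝ, t = 1/(2*(n:ℝ)) := ⟨_, rfl⟩
  have hs : 0 < s := by rw [hsdef]; positivity
  have hinv : (1:ℝ)/(n:ℝ) = 2*s := by rw [hsdef]; field_simp
  have h2s : 2*s ≤ 1 := by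
    rw [← hinv, div_le_one hnR]
    exact_mod_cast hn0
  -- residues
  obtain ⟨r, hrdef⟩ : ∃ t : ℤ, t = ((i.val:ℤ) + j.val - k.val) % n := ⟨_, rfl⟩
  obtain ⟨r', hr'def⟩ : ∃ t : ℤ, t = ((i.val:ℤ) + 2*j.val - l.val) % n := ⟨_, rfl⟩
  have hr0 : 0 ≤ r := by rw [hrdef]; exact Int.emod_nonneg _ hnZ.ne'
  have hrn : r < (n:ℤ) := by rw [hrdef]; exact Int.emod_lt_of_pos _ hnZ
  have hr'0 : 0 ≤ r' := by rw [hr'def]; exact Int.emod_nonneg _ hnZ.ne'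
  have hr'n : r' < (n:ℤ) := by rw [hr'def]; exact Int.emod_lt_of_pos _ hnZ
  -- bridges between Fin equalities and residues
  have hk0 : k = i + j ↔ r = 0 := (finG0 hn k (i+j)).trans (by rw [bridge1, hrdef])
  have hkp : k = i + j + 1 ↔ r = (n:ℤ) - 1 := (finGp hn k (i+j)).trans (by rw [bridge1, hrdef])
  have hkm : k = i + j - 1 ↔ r = 1 := (finGm hn k (i+j)).trans (by rw [bridge1, hrdef])
  have hl0 : l = i + 2*j ↔ r' = 0 := (finG0 hn l (i+2*j)).trans (by rw [bridge2, hr'def])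
  have hlp : l = i + 2*j + 1 ↔ r' = (n:ℤ) - 1 :=
    (finGp hn l (i+2*j)).trans (by rw [bridge2, hr'def])
  have hlm : l = i + 2*j - 1 ↔ r' = 1 := (finGm hn l (i+2*j)).trans (by rw [bridge2, hr'def])
  -- constants
  obtain ⟨c₁, hc₁def⟩ : ∃ t : ℝ, t = s - ((i:ℕ):ℝ)/n := ⟨_, rfl⟩
  obtain ⟨c₂, hc₂def⟩ : ∃ t : ℝ, t = s - ((j:ℕ):ℝ)/n := ⟨_, rfl⟩
  obtain ⟨e₃, he₃def⟩ : ∃ t : ℝ,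
    t = (((i:ℕ):ℝ) + ((j:ℕ):ℝ) - ((k:ℕ):ℝ))/n - s := ⟨_, rfl⟩
  obtain ⟨e₄, he₄def⟩ : ∃ t : ℝ,
    t = (((i:ℕ):ℝ) + 2*((j:ℕ):ℝ) - ((l:ℕ):ℝ))/n - 2*s := ⟨_, rfl⟩
  have hc1 : ∀ x : ℝ, x - ((i:ℕ):ℝ)/n + 1/(2*(n:ℝ)) = x + c₁ := by
    intro x; rw [hc₁def, hsdef]; ring
  have hc2 : ∀ x : ℝ, x - ((j:ℕ):ℝ)/n + 1/(2*(n:ℝ)) = x + c₂ := by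
    intro x; rw [hc₂def, hsdef]; ring
  -- the fract congruences for e₃, e₄
  have he₃ : ∀ θ : ℝ, Int.fract (θ + e₃) = Int.fract (θ - s + (r:ℝ)/(n:ℝ)) := by
    intro θ
    have hz : ((i.val:ℤ) + j.val - k.val)
        = r + (n:ℤ) * (((i.val:ℤ) + j.val - k.val) / n) := by
      rw [hrdef, Int.emod_def]; ring
    have hcast : (((i:ℕ):ℝ) + ((j:ℕ):ℝ) - ((k:ℕ):ℝ))
        = (r:ℝ) + (n:ℝ) * ((((i.val:ℤ) + j.val - k.val) / n : ℤ):ℝ) := by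
      exact_mod_cast congrArg (Int.cast : ℤ → ℝ) hz
    have harg : θ + e₃ = (θ - s + (r:ℝ)/(n:ℝ)) + ((((i.val:ℤ) + j.val - k.val) / n : ℤ):ℝ) := by
      rw [he₃def, hcast]
      field_simp
      ring
    rw [harg, Int.fract_add_intCast]
  have he₄ : ∀ θ : ℝ, Int.fract (θ + e₄) = Int.fract (θ - 2*s + (r':ℝ)/(n:ℝ)) := by
    intro θ
    have hz : ((i.val:ℤ) + 2*j.val - l.val)
        = r' + (n:ℤ) * (((i.val:ℤ) + 2*j.val - l.val) / n) := by
      rw [hr'def, Int.emod_def]; ring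
    have hcast : (((i:ℕ):ℝ) + 2*((j:ℕ):ℝ) - ((l:ℕ):ℝ))
        = (r':ℝ) + (n:ℝ) * ((((i.val:ℤ) + 2*j.val - l.val) / n : ℤ):ℝ) := by
      exact_mod_cast congrArg (Int.cast : ℤ → ℝ) hz
    have harg : θ + e₄ = (θ - 2*s + (r':ℝ)/(n:ℝ))
        + ((((i.val:ℤ) + 2*j.val - l.val) / n : ℤ):ℝ) := by
      rw [he₄def, hcast]
      field_simp
      ring
    rw [harg, Int.fract_add_intCast]
  -- volume of Δ i j
  have hΔset : Δ i j = {q : ℝ × ℝ | q.1 ∈ Ico (0:ℝ) 1 ∧ q.2 ∈ Ico (0:ℝ) 1 ∧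
      (Int.fract (q.1 + c₁), Int.fract (q.2 + c₂)) ∈ S0 s} := by
    rw [hΔ]
    ext q
    simp only [mem_setOf_eq, S0, hinv]
    rw [hc1 q.1, hc2 q.2]
  have hvolΔ : volume (Δ i j) = ENNReal.ofReal (2*s) * ENNReal.ofReal (2*s) := by
    rw [hΔset, vol2 c₁ c₂ (S0_meas s), S0_inter h2s, Measure.volume_eq_prod,
      Measure.prod_prod, Real.volume_Ico, sub_zero]
  -- the intersection set
  have hIset : Δ i j ∩ f ⁻¹' Δ k l = {q : ℝ × ℝ | q.1 ∈ Ico (0:ℝ) 1 ∧ q.2 ∈ Ico (0:ℝ) 1 ∧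
      (Int.fract (q.1 + c₁), Int.fract (q.2 + c₂)) ∈ Sset s e₃ e₄} := by
    ext q
    have hq3 : Int.fract (Int.fract (q.1 + c₁) + Int.fract (q.2 + c₂) + e₃)
        = Int.fract (Int.fract (q.1 + q.2) - ((k:ℕ):ℝ)/n + 1/(2*(n:ℝ))) := by
      have hL : Int.fract (Int.fract (q.1 + c₁) + Int.fract (q.2 + c₂) + e₃)
          = Int.fract (q.1 + q.2 + (1/(2*(n:ℝ)) - ((k:ℕ):ℝ)/n)) := by
        rw [add_assoc, fract_fract_add (q.1 + c₁),
          show q.1 + c₁ + (Int.fract (q.2 + c₂) + e₃)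
            = Int.fract (q.2 + c₂) + (q.1 + c₁ + e₃) by ring,
          fract_fract_add (q.2 + c₂),
          show q.2 + c₂ + (q.1 + c₁ + e₃) = q.1 + q.2 + (1/(2*(n:ℝ)) - ((k:ℕ):ℝ)/n) by
            rw [hc₁def, hc₂def, he₃def, hsdef]; ring]
      have hR : Int.fract (Int.fract (q.1 + q.2) - ((k:ℕ):ℝ)/n + 1/(2*(n:ℝ)))
          = Int.fract (q.1 + q.2 + (1/(2*(n:ℝ)) - ((k:ℕ):ℝ)/n)) := by
        rw [show Int.fract (q.1 + q.2) - ((k:ℕ):ℝ)/n + 1/(2*(n:ℝ))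
            = Int.fract (q.1 + q.2) + (1/(2*(n:ℝ)) - ((k:ℕ):ℝ)/n) by ring,
          fract_fract_add (q.1 + q.2)]
      exact hL.trans hR.symm
    have hq4 : Int.fract (Int.fract (q.1 + c₁) + 2*Int.fract (q.2 + c₂) + e₄)
        = Int.fract (Int.fract (q.1 + 2*q.2) - ((l:ℕ):ℝ)/n + 1/(2*(n:ℝ))) := by
      have hL : Int.fract (Int.fract (q.1 + c₁) + 2*Int.fract (q.2 + c₂) + e₄)
          = Int.fract (q.1 + 2*q.2 + (1/(2*(n:ℝ)) - ((l:ℕ):ℝ)/n)) := by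
        rw [add_assoc, fract_fract_add (q.1 + c₁),
          show q.1 + c₁ + (2*Int.fract (q.2 + c₂) + e₄)
            = Int.fract (q.2 + c₂) + (q.1 + c₁ + Int.fract (q.2 + c₂) + e₄) by ring,
          fract_fract_add (q.2 + c₂),
          show q.2 + c₂ + (q.1 + c₁ + Int.fract (q.2 + c₂) + e₄)
            = Int.fract (q.2 + c₂) + (q.1 + c₁ + q.2 + c₂ + e₄) by ring,
          fract_fract_add (q.2 + c₂),
          show q.2 + c₂ + (q.1 + c₁ + q.2 + c₂ + e₄)
            = q.1 + 2*q.2 + (1/(2*(n:ℝ)) - ((l:ℕ):ℝ)/n) by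
            rw [hc₁def, hc₂def, he₄def, hsdef]; ring]
      have hR : Int.fract (Int.fract (q.1 + 2*q.2) - ((l:ℕ):ℝ)/n + 1/(2*(n:ℝ)))
          = Int.fract (q.1 + 2*q.2 + (1/(2*(n:ℝ)) - ((l:ℕ):ℝ)/n)) := by
        rw [show Int.fract (q.1 + 2*q.2) - ((l:ℕ):ℝ)/n + 1/(2*(n:ℝ))
            = Int.fract (q.1 + 2*q.2) + (1/(2*(n:ℝ)) - ((l:ℕ):ℝ)/n) by ring,
          fract_fract_add (q.1 + 2*q.2)]
      exact hL.trans hR.symm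
    simp only [hΔ, hf, mem_inter_iff, mem_preimage, mem_setOf_eq, Sset]
    constructor
    · rintro ⟨⟨ha1, ha2, ha3, ha4⟩, hb1, hb2, hb3, hb4⟩
      refine ⟨ha1, ha2, ?_, ?_, ?_, ?_⟩
      · rw [← hc1 q.1, ← hinv]; exact ha3
      · rw [← hc2 q.2, ← hinv]; exact ha4
      · rw [hq3, ← hinv]; exact hb3
      · rw [hq4, ← hinv]; exact hb4
    · rintro ⟨ha1, ha2, h3, h4, h5, h6⟩
      refine ⟨⟨ha1, ha2, ?_, ?_⟩,
        ⟨Int.fract_nonneg _, Int.fract_lt_one _⟩,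
        ⟨Int.fract_nonneg _, Int.fract_lt_one _⟩, ?_, ?_⟩
      · rw [hc1 q.1, hinv]; exact h3
      · rw [hc2 q.2, hinv]; exact h4
      · rw [hinv, ← hq3]; exact h5
      · rw [hinv, ← hq4]; exact h6
  have hIvol : volume (Δ i j ∩ f ⁻¹' Δ k l)
      = volume (Sset s e₃ e₄ ∩ (Ico (0:ℝ) 1 ×ˢ Ico (0:ℝ) 1)) := by
    rw [hIset, vol2 c₁ c₂ (Sset_meas s e₃ e₄)]
  have hmem := fun q => SsetInterIff n hn hsdef r r' hr0 hrn hr'0 hr'n he₃ he₄ q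
  -- numeric endgames
  have hden : ((ENNReal.ofReal (2*s)) * ENNReal.ofReal (2*s)).toReal = 4*s^2 := by
    rw [ENNReal.toReal_mul, ENNReal.toReal_ofReal (by positivity)]
    ring
  have hval2 : (ENNReal.ofReal (2*s^2)).toReal = 2*s^2 := ENNReal.toReal_ofReal (by positivity)
  have hval8 : (ENNReal.ofReal (s^2/2)).toReal = s^2/2 := ENNReal.toReal_ofReal (by positivity)
  rw [hp]
  -- case split
  have trichr : r = 0 ∨ r = 1 ∨ r = (n:ℤ) - 1 ∨ (2 ≤ r ∧ r ≤ (n:ℤ) - 2) := by omega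
  have trichr' : r' = 0 ∨ r' = 1 ∨ r' = (n:ℤ) - 1 ∨ (2 ≤ r' ∧ r' ≤ (n:ℤ) - 2) := by omega
  rcases trichr with hr | hr | hr | hr
  · -- r = 0
    rcases trichr' with hr' | hr' | hr' | hr'
    · -- (0,0) : probability 1/2
      have hset : Sset s e₃ e₄ ∩ (Ico (0:ℝ) 1 ×ˢ Ico (0:ℝ) 1)
          = Tset s s (3*s) (2*s) (4*s) := by
        ext q
        rw [hmem q]
        simp only [Tset, mem_setOf_eq]
        constructor
        · rintro ⟨hu, hv, (⟨hc, hw1, hw2⟩|⟨hc, hw1, hw2⟩|⟨hc, hw1, hw2⟩),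
            (⟨hc', hz1, hz2⟩|⟨hc', hz1, hz2⟩|⟨hc', hz1, hz2⟩)⟩ <;>
            first
              | exact ⟨hu, hv, ⟨hw1, hw2⟩, ⟨hz1, hz2⟩⟩
              | omega
        · rintro ⟨hu, hv, ⟨hw1, hw2⟩, hz1, hz2⟩
          exact ⟨hu, hv, Or.inl ⟨hr, hw1, hw2⟩, Or.inl ⟨hr', hz1, hz2⟩⟩
      have cmain : (k, l) = (i + j, i + 2 * j) := by
        rw [Prod.mk.injEq]
        exact ⟨hk0.mpr hr, hl0.mpr hr'⟩
      rw [hIvol, hset, volT1 hs, hvolΔ, if_pos cmain, hval2, hden, div_eq_iff (by positivity)]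
      ring
    · -- (0,1) : k = i+j, l = i+2j-1 : 1/8
      have hset : Sset s e₃ e₄ ∩ (Ico (0:ℝ) 1 ×ˢ Ico (0:ℝ) 1)
          = Tset s s (3*s) 0 (2*s) := by
        ext q
        rw [hmem q]
        simp only [Tset, mem_setOf_eq]
        constructor
        · rintro ⟨hu, hv, (⟨hc, hw1, hw2⟩|⟨hc, hw1, hw2⟩|⟨hc, hw1, hw2⟩),
            (⟨hc', hz1, hz2⟩|⟨hc', hz1, hz2⟩|⟨hc', hz1, hz2⟩)⟩ <;>
            first
              | exact ⟨hu, hv, ⟨hw1, hw2⟩, ⟨hz1, hz2⟩⟩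
              | omega
        · rintro ⟨hu, hv, ⟨hw1, hw2⟩, hz1, hz2⟩
          exact ⟨hu, hv, Or.inl ⟨hr, hw1, hw2⟩, Or.inr (Or.inl ⟨hr', hz1, hz2⟩)⟩
      have notmain : ¬((k, l) = (i + j, i + 2 * j)) := by
        intro h
        rw [Prod.mk.injEq] at h
        have := hl0.mp h.2
        omega
      have c2 : (k, l) = (i + j, i + 2 * j - 1) := by
        rw [Prod.mk.injEq]
        exact ⟨hk0.mpr hr, hlm.mpr hr'⟩
      rw [hIvol, hset, volT2 hs, hvolΔ, if_neg notmain, if_pos (Or.inr (Or.inr (Or.inl c2))),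
        hval8, hden, div_eq_iff (by positivity)]
      ring
    · -- (0,n-1) : k = i+j, l = i+2j+1 : 1/8
      have hset : Sset s e₃ e₄ ∩ (Ico (0:ℝ) 1 ×ˢ Ico (0:ℝ) 1)
          = Tset s s (3*s) (4*s) (6*s) := by
        ext q
        rw [hmem q]
        simp only [Tset, mem_setOf_eq]
        constructor
        · rintro ⟨hu, hv, (⟨hc, hw1, hw2⟩|⟨hc, hw1, hw2⟩|⟨hc, hw1, hw2⟩),
            (⟨hc', hz1, hz2⟩|⟨hc', hz1, hz2⟩|⟨hc', hz1, hz2⟩)⟩ <;>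
            first
              | exact ⟨hu, hv, ⟨hw1, hw2⟩, ⟨hz1, hz2⟩⟩
              | omega
        · rintro ⟨hu, hv, ⟨hw1, hw2⟩, hz1, hz2⟩
          exact ⟨hu, hv, Or.inl ⟨hr, hw1, hw2⟩, Or.inr (Or.inr ⟨hr', hz1, hz2⟩)⟩
      have notmain : ¬((k, l) = (i + j, i + 2 * j)) := by
        intro h
        rw [Prod.mk.injEq] at h
        have := hl0.mp h.2
        omega
      have c2 : (k, l) = (i + j, i + 2 * j + 1) := by
        rw [Prod.mk.injEq]
        exact ⟨hk0.mpr hr, hlp.mpr hr'⟩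
      rw [hIvol, hset, volT3 hs, hvolΔ, if_neg notmain, if_pos (Or.inl c2),
        hval8, hden, div_eq_iff (by positivity)]
      ring
    · -- (0, generic) : 0
      have hset : Sset s e₃ e₄ ∩ (Ico (0:ℝ) 1 ×ˢ Ico (0:ℝ) 1) = (∅ : Set (ℝ × ℝ)) := by
        ext q
        rw [hmem q]
        simp only [mem_empty_iff_false, iff_false]
        rintro ⟨hu, hv, _, (⟨hc', _, _⟩|⟨hc', _, _⟩|⟨hc', _, _⟩)⟩ <;> omega
      have notmain : ¬((k, l) = (i + j, i + 2 * j)) := by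
        intro h
        rw [Prod.mk.injEq] at h
        have := hl0.mp h.2
        omega
      have notrest : ¬((k, l) = (i + j, i + 2 * j + 1) ∨ (k, l) = (i + j + 1, i + 2 * j + 1)
          ∨ (k, l) = (i + j, i + 2 * j - 1) ∨ (k, l) = (i + j - 1, i + 2 * j - 1)) := by
        rintro (h | h | h | h) <;> rw [Prod.mk.injEq] at h <;>
          first
            | (have e2 := hlp.mp h.2; omega)
            | (have e2 := hlm.mp h.2; omega)
      rw [hIvol, hset, measure_empty, if_neg notmain, if_neg notrest, ENNReal.toReal_zero,
        zero_div]
  · -- r = 1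
    rcases trichr' with hr' | hr' | hr' | hr'
    · -- (1,0) : empty
      have hset : Sset s e₃ e₄ ∩ (Ico (0:ℝ) 1 ×ˢ Ico (0:ℝ) 1) = (∅ : Set (ℝ × ℝ)) := by
        ext q
        rw [hmem q]
        simp only [mem_empty_iff_false, iff_false]
        rintro ⟨hu, hv, (⟨hc, hw1, hw2⟩|⟨hc, hw1, hw2⟩|⟨hc, hw1, hw2⟩),
          (⟨hc', hz1, hz2⟩|⟨hc', hz1, hz2⟩|⟨hc', hz1, hz2⟩)⟩ <;>
          first | omega | linarith
      have notmain : ¬((k, l) = (i + j, i + 2 * j)) := by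
        intro h
        rw [Prod.mk.injEq] at h
        have := hk0.mp h.1
        omega
      have notrest : ¬((k, l) = (i + j, i + 2 * j + 1) ∨ (k, l) = (i + j + 1, i + 2 * j + 1)
          ∨ (k, l) = (i + j, i + 2 * j - 1) ∨ (k, l) = (i + j - 1, i + 2 * j - 1)) := by
        rintro (h | h | h | h) <;> rw [Prod.mk.injEq] at h <;>
          first
            | (have e1 := hk0.mp h.1; have e2 := hlp.mp h.2; omega)
            | (have e1 := hkp.mp h.1; have e2 := hlp.mp h.2; omega)
            | (have e1 := hk0.mp h.1; have e2 := hlm.mp h.2; omega)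
            | (have e1 := hkm.mp h.1; have e2 := hlm.mp h.2; omega)
      rw [hIvol, hset, measure_empty, if_neg notmain, if_neg notrest, ENNReal.toReal_zero,
        zero_div]
    · -- (1,1) : k = i+j-1, l = i+2j-1 : 1/8
      have hset : Sset s e₃ e₄ ∩ (Ico (0:ℝ) 1 ×ˢ Ico (0:ℝ) 1)
          = Tset s 0 s 0 (2*s) := by
        ext q
        rw [hmem q]
        simp only [Tset, mem_setOf_eq]
        constructor
        · rintro ⟨hu, hv, (⟨hc, hw1, hw2⟩|⟨hc, hw1, hw2⟩|⟨hc, hw1, hw2⟩),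
            (⟨hc', hz1, hz2⟩|⟨hc', hz1, hz2⟩|⟨hc', hz1, hz2⟩)⟩ <;>
            first
              | exact ⟨hu, hv, ⟨hw1, hw2⟩, ⟨hz1, hz2⟩⟩
              | omega
        · rintro ⟨hu, hv, ⟨hw1, hw2⟩, hz1, hz2⟩
          exact ⟨hu, hv, Or.inr (Or.inl ⟨hr, hw1, hw2⟩), Or.inr (Or.inl ⟨hr', hz1, hz2⟩)⟩
      have notmain : ¬((k, l) = (i + j, i + 2 * j)) := by
        intro h
        rw [Prod.mk.injEq] at h
        have := hk0.mp h.1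
        omega
      have c2 : (k, l) = (i + j - 1, i + 2 * j - 1) := by
        rw [Prod.mk.injEq]
        exact ⟨hkm.mpr hr, hlm.mpr hr'⟩
      rw [hIvol, hset, volT5 hs, hvolΔ, if_neg notmain,
        if_pos (Or.inr (Or.inr (Or.inr c2))), hval8, hden, div_eq_iff (by positivity)]
      ring
    · -- (1,n-1) : empty
      have hset : Sset s e₃ e₄ ∩ (Ico (0:ℝ) 1 ×ˢ Ico (0:ℝ) 1) = (∅ : Set (ℝ × ℝ)) := by
        ext q
        rw [hmem q]
        simp only [mem_empty_iff_false, iff_false]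
        rintro ⟨hu, hv, (⟨hc, hw1, hw2⟩|⟨hc, hw1, hw2⟩|⟨hc, hw1, hw2⟩),
          (⟨hc', hz1, hz2⟩|⟨hc', hz1, hz2⟩|⟨hc', hz1, hz2⟩)⟩ <;>
          first | omega | linarith
      have notmain : ¬((k, l) = (i + j, i + 2 * j)) := by
        intro h
        rw [Prod.mk.injEq] at h
        have := hk0.mp h.1
        omega
      have notrest : ¬((k, l) = (i + j, i + 2 * j + 1) ∨ (k, l) = (i + j + 1, i + 2 * j + 1)
          ∨ (k, l) = (i + j, i + 2 * j - 1) ∨ (k, l) = (i + j - 1, i + 2 * j - 1)) := by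
        rintro (h | h | h | h) <;> rw [Prod.mk.injEq] at h <;>
          first
            | (have e1 := hk0.mp h.1; have e2 := hlp.mp h.2; omega)
            | (have e1 := hkp.mp h.1; have e2 := hlp.mp h.2; omega)
            | (have e1 := hk0.mp h.1; have e2 := hlm.mp h.2; omega)
            | (have e1 := hkm.mp h.1; have e2 := hlm.mp h.2; omega)
      rw [hIvol, hset, measure_empty, if_neg notmain, if_neg notrest, ENNReal.toReal_zero,
        zero_div]
    · -- (1, generic) : 0
      have hset : Sset s e₃ e₄ ∩ (Ico (0:ℝ) 1 ×ˢ Ico (0:ℝ) 1) = (∅ : Set (ℝ × ℝ)) := by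
        ext q
        rw [hmem q]
        simp only [mem_empty_iff_false, iff_false]
        rintro ⟨hu, hv, _, (⟨hc', _, _⟩|⟨hc', _, _⟩|⟨hc', _, _⟩)⟩ <;> omega
      have notmain : ¬((k, l) = (i + j, i + 2 * j)) := by
        intro h
        rw [Prod.mk.injEq] at h
        have := hk0.mp h.1
        omega
      have notrest : ¬((k, l) = (i + j, i + 2 * j + 1) ∨ (k, l) = (i + j + 1, i + 2 * j + 1)
          ∨ (k, l) = (i + j, i + 2 * j - 1) ∨ (k, l) = (i + j - 1, i + 2 * j - 1)) := by
        rintro (h | h | h | h) <;> rw [Prod.mk.injEq] at h <;>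
          first
            | (have e2 := hlp.mp h.2; omega)
            | (have e2 := hlm.mp h.2; omega)
      rw [hIvol, hset, measure_empty, if_neg notmain, if_neg notrest, ENNReal.toReal_zero,
        zero_div]
  · -- r = n-1
    rcases trichr' with hr' | hr' | hr' | hr'
    · -- (n-1,0) : empty
      have hset : Sset s e₃ e₄ ∩ (Ico (0:ℝ) 1 ×ˢ Ico (0:ℝ) 1) = (∅ : Set (ℝ × ℝ)) := by
        ext q
        rw [hmem q]
        simp only [mem_empty_iff_false, iff_false]
        rintro ⟨hu, hv, (⟨hc, hw1, hw2⟩|⟨hc, hw1, hw2⟩|⟨hc, hw1, hw2⟩),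
          (⟨hc', hz1, hz2⟩|⟨hc', hz1, hz2⟩|⟨hc', hz1, hz2⟩)⟩ <;>
          first | omega | linarith
      have notmain : ¬((k, l) = (i + j, i + 2 * j)) := by
        intro h
        rw [Prod.mk.injEq] at h
        have := hk0.mp h.1
        omega
      have notrest : ¬((k, l) = (i + j, i + 2 * j + 1) ∨ (k, l) = (i + j + 1, i + 2 * j + 1)
          ∨ (k, l) = (i + j, i + 2 * j - 1) ∨ (k, l) = (i + j - 1, i + 2 * j - 1)) := by
        rintro (h | h | h | h) <;> rw [Prod.mk.injEq] at h <;>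
          first
            | (have e1 := hk0.mp h.1; have e2 := hlp.mp h.2; omega)
            | (have e1 := hkp.mp h.1; have e2 := hlp.mp h.2; omega)
            | (have e1 := hk0.mp h.1; have e2 := hlm.mp h.2; omega)
            | (have e1 := hkm.mp h.1; have e2 := hlm.mp h.2; omega)
      rw [hIvol, hset, measure_empty, if_neg notmain, if_neg notrest, ENNReal.toReal_zero,
        zero_div]
    · -- (n-1,1) : empty
      have hset : Sset s e₃ e₄ ∩ (Ico (0:ℝ) 1 ×ˢ Ico (0:ℝ) 1) = (∅ : Set (ℝ × ℝ)) := by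
        ext q
        rw [hmem q]
        simp only [mem_empty_iff_false, iff_false]
        rintro ⟨hu, hv, (⟨hc, hw1, hw2⟩|⟨hc, hw1, hw2⟩|⟨hc, hw1, hw2⟩),
          (⟨hc', hz1, hz2⟩|⟨hc', hz1, hz2⟩|⟨hc', hz1, hz2⟩)⟩ <;>
          first | omega | linarith
      have notmain : ¬((k, l) = (i + j, i + 2 * j)) := by
        intro h
        rw [Prod.mk.injEq] at h
        have := hk0.mp h.1
        omega
      have notrest : ¬((k, l) = (i + j, i + 2 * j + 1) ∨ (k, l) = (i + j + 1, i + 2 * j + 1)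
          ∨ (k, l) = (i + j, i + 2 * j - 1) ∨ (k, l) = (i + j - 1, i + 2 * j - 1)) := by
        rintro (h | h | h | h) <;> rw [Prod.mk.injEq] at h <;>
          first
            | (have e1 := hk0.mp h.1; have e2 := hlp.mp h.2; omega)
            | (have e1 := hkp.mp h.1; have e2 := hlp.mp h.2; omega)
            | (have e1 := hk0.mp h.1; have e2 := hlm.mp h.2; omega)
            | (have e1 := hkm.mp h.1; have e2 := hlm.mp h.2; omega)
      rw [hIvol, hset, measure_empty, if_neg notmain, if_neg notrest, ENNReal.toReal_zero,
        zero_div]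
    · -- (n-1,n-1) : k = i+j+1, l = i+2j+1 : 1/8
      have hset : Sset s e₃ e₄ ∩ (Ico (0:ℝ) 1 ×ˢ Ico (0:ℝ) 1)
          = Tset s (3*s) (4*s) (4*s) (6*s) := by
        ext q
        rw [hmem q]
        simp only [Tset, mem_setOf_eq]
        constructor
        · rintro ⟨hu, hv, (⟨hc, hw1, hw2⟩|⟨hc, hw1, hw2⟩|⟨hc, hw1, hw2⟩),
            (⟨hc', hz1, hz2⟩|⟨hc', hz1, hz2⟩|⟨hc', hz1, hz2⟩)⟩ <;>
            first
              | exact ⟨hu, hv, ⟨hw1, hw2⟩, ⟨hz1, hz2⟩⟩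
              | omega
        · rintro ⟨hu, hv, ⟨hw1, hw2⟩, hz1, hz2⟩
          exact ⟨hu, hv, Or.inr (Or.inr ⟨hr, hw1, hw2⟩), Or.inr (Or.inr ⟨hr', hz1, hz2⟩)⟩
      have notmain : ¬((k, l) = (i + j, i + 2 * j)) := by
        intro h
        rw [Prod.mk.injEq] at h
        have := hk0.mp h.1
        omega
      have c2 : (k, l) = (i + j + 1, i + 2 * j + 1) := by
        rw [Prod.mk.injEq]
        exact ⟨hkp.mpr hr, hlp.mpr hr'⟩
      rw [hIvol, hset, volT4 hs, hvolΔ, if_neg notmain,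
        if_pos (Or.inr (Or.inl c2)), hval8, hden, div_eq_iff (by positivity)]
      ring
    · -- (n-1, generic) : 0
      have hset : Sset s e₃ e₄ ∩ (Ico (0:ℝ) 1 ×ˢ Ico (0:ℝ) 1) = (∅ : Set (ℝ × ℝ)) := by
        ext q
        rw [hmem q]
        simp only [mem_empty_iff_false, iff_false]
        rintro ⟨hu, hv, _, (⟨hc', _, _⟩|⟨hc', _, _⟩|⟨hc', _, _⟩)⟩ <;> omega
      have notmain : ¬((k, l) = (i + j, i + 2 * j)) := by
        intro h
        rw [Prod.mk.injEq] at h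
        have := hl0.mp h.2
        omega
      have notrest : ¬((k, l) = (i + j, i + 2 * j + 1) ∨ (k, l) = (i + j + 1, i + 2 * j + 1)
          ∨ (k, l) = (i + j, i + 2 * j - 1) ∨ (k, l) = (i + j - 1, i + 2 * j - 1)) := by
        rintro (h | h | h | h) <;> rw [Prod.mk.injEq] at h <;>
          first
            | (have e2 := hlp.mp h.2; omega)
            | (have e2 := hlm.mp h.2; omega)
      rw [hIvol, hset, measure_empty, if_neg notmain, if_neg notrest, ENNReal.toReal_zero,
        zero_div]
  · -- r generic : 0
    have hset : Sset s e₃ e₄ ∩ (Ico (0:ℝ) 1 ×ˢ Ico (0:ℝ) 1) = (∅ : Set (ℝ × ℝ)) := by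
      ext q
      rw [hmem q]
      simp only [mem_empty_iff_false, iff_false]
      rintro ⟨hu, hv, (⟨hc, _, _⟩|⟨hc, _, _⟩|⟨hc, _, _⟩), _⟩ <;> omega
    have notmain : ¬((k, l) = (i + j, i + 2 * j)) := by
      intro h
      rw [Prod.mk.injEq] at h
      have := hk0.mp h.1
      omega
    have notrest : ¬((k, l) = (i + j, i + 2 * j + 1) ∨ (k, l) = (i + j + 1, i + 2 * j + 1)
        ∨ (k, l) = (i + j, i + 2 * j - 1) ∨ (k, l) = (i + j - 1, i + 2 * j - 1)) := by
      rintro (h | h | h | h) <;> rw [Prod.mk.injEq] at h <;>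
        first
          | (have e1 := hk0.mp h.1; omega)
          | (have e1 := hkp.mp h.1; omega)
          | (have e1 := hkm.mp h.1; omega)
    rw [hIvol, hset, measure_empty, if_neg notmain, if_neg notrest, ENNReal.toReal_zero,
      zero_div]
end

section
/- Let f : ℝ² → ℝ² be the linear hyperbolic map f(x,y) = (2x, y/2), and for s > 0 let S be the square with vertices (s,0), (0,s), (−s,0), (0,−s) (i.e. S = {(x,y) : |x| + |y| ≤ s}, a square rotated by angle π/4 with respect to the coordinate axes). Then m(S ∩ f^{-1}S)/m(S) = 2/3, where m is Lebesgue measure on ℝ². In particular, the probability of remaining in the Ulam square S under the map with unstable expansion λ_u = 2 and stable contraction λ_s = 1/2 equals 2/3 > 1/2 = 1/λ_u. -/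
open MeasureTheory

lemma vol_slice_s15 (g : ℝ → ℝ) (hg : Measurable g) :
    volume {p : ℝ × ℝ | |p.2| ≤ g p.1} = ∫⁻ x, ENNReal.ofReal (2 * g x) := by
  have hm : MeasurableSet {p : ℝ × ℝ | |p.2| ≤ g p.1} :=
    measurableSet_le measurable_snd.abs (hg.comp measurable_fst)
  rw [Measure.volume_eq_prod, Measure.prod_apply hm]
  refine lintegral_congr fun x => ?_
  have h : Prod.mk x ⁻¹' {p : ℝ × ℝ | |p.2| ≤ g p.1} = Set.Icc (-(g x)) (g x) := by
    ext y; simp [abs_le]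
  rw [h, Real.volume_Icc]; congr 1; ring

lemma lint_ofReal (g : ℝ → ℝ) (a : ℝ) (ha : 0 ≤ a) (hc : Continuous g)
    (h0 : ∀ x ∉ Set.Icc (-a) a, g x ≤ 0) (hpos : ∀ x ∈ Set.Icc (-a) a, 0 ≤ g x) :
    ∫⁻ x, ENNReal.ofReal (g x) = ENNReal.ofReal (∫ x in (-a)..a, g x) := by
  set F : ℝ → ℝ := fun x => max (g x) 0 with hF
  have hFc : Continuous F := hc.max continuous_const
  have hsupp : HasCompactSupport F := HasCompactSupport.intro (isCompact_Icc (a := -a) (b := a))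
    (fun x hx => by simp [hF, max_eq_right (h0 x hx)])
  have hint : Integrable F := hFc.integrable_of_hasCompactSupport hsupp
  have h1 : ∀ x, ENNReal.ofReal (g x) = ENNReal.ofReal (F x) := by
    intro x; rcases le_total (g x) 0 with h | h
    · simp [hF, ENNReal.ofReal_eq_zero.2 h, max_eq_right h]
    · simp [hF, max_eq_left h]
  calc ∫⁻ x, ENNReal.ofReal (g x) = ∫⁻ x, ENNReal.ofReal (F x) := lintegral_congr h1
    _ = ENNReal.ofReal (∫ x, F x) :=
        (ofReal_integral_eq_lintegral_ofReal hint
          (Filter.Eventually.of_forall fun x => le_max_right _ _)).symm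
    _ = ENNReal.ofReal (∫ x in Set.Icc (-a) a, F x) := by
        rw [setIntegral_eq_integral_of_forall_compl_eq_zero
          (fun x hx => by simp [hF, max_eq_right (h0 x hx)])]
    _ = ENNReal.ofReal (∫ x in (-a)..a, g x) := by
        rw [integral_Icc_eq_integral_Ioc, ← intervalIntegral.integral_of_le (by linarith)]
        congr 1
        refine intervalIntegral.integral_congr fun x hx => ?_
        rw [Set.uIcc_of_le (by linarith)] at hx
        exact max_eq_left (hpos x hx)

lemma poly_int (a b c d : ℝ) :
    ∫ x in a..b, (c + d * x) = c * (b - a) + d * (b ^ 2 - a ^ 2) / 2 := by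
  have h1 : IntervalIntegrable (fun _ : ℝ => c) volume a b := intervalIntegrable_const
  have h2 : IntervalIntegrable (fun x : ℝ => d * x) volume a b :=
    (intervalIntegral.intervalIntegrable_id).const_mul d
  rw [intervalIntegral.integral_add h1 h2, intervalIntegral.integral_const,
    intervalIntegral.integral_const_mul, integral_id, smul_eq_mul]
  ring

/-- For the linear hyperbolic map `f(x,y) = (2x, y/2)` and the square
`S = {(x,y) : |x| + |y| ≤ s}` (rotated by `π/4` with respect to the coordinate axes),
the Ulam transition probability of `S` to itself is
`m(S ∩ f⁻¹S)/m(S) = 2/3`, and `2/3 > 1/2 = 1/λ_u`. -/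
theorem rotated_square_transition_probability
    (s : ℝ) (hs : 0 < s)
    (f : ℝ × ℝ → ℝ × ℝ) (hf : ∀ p, f p = (2 * p.1, p.2 / 2))
    (S : Set (ℝ × ℝ)) (hS : S = {p : ℝ × ℝ | |p.1| + |p.2| ≤ s}) :
    (volume (S ∩ f ⁻¹' S)).toReal / (volume S).toReal = 2 / 3 ∧
      (2 : ℝ) / 3 > 1 / 2 := by
  constructor
  · -- volume of S
    have hSeq : S = {p : ℝ × ℝ | |p.2| ≤ s - |p.1|} := by
      rw [hS]; ext p; simp only [Set.mem_setOf_eq]; constructor <;> intro h <;> linarith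
    have hvolS : volume S = ENNReal.ofReal (2 * s ^ 2) := by
      rw [hSeq, vol_slice_s15 (fun x => s - |x|) (measurable_const.sub measurable_abs)]
      rw [lint_ofReal (fun x => 2 * (s - |x|)) s hs.le
        (by fun_prop)
        (by intro x hx; simp only [Set.mem_Icc, not_and_or, not_le] at hx
            show 2 * (s - |x|) ≤ 0
            rcases hx with h | h
            · nlinarith [neg_abs_le x]
            · nlinarith [le_abs_self x])
        (by intro x hx; rw [Set.mem_Icc] at hx
            show (0:ℝ) ≤ 2 * (s - |x|)
            have := abs_le.mpr hx; linarith)]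
      congr 1
      rw [← intervalIntegral.integral_add_adjacent_intervals (b := 0)
        ((by fun_prop : Continuous fun x : ℝ => 2 * (s - |x|)).intervalIntegrable _ _)
        ((by fun_prop : Continuous fun x : ℝ => 2 * (s - |x|)).intervalIntegrable _ _)]
      have e1 : ∫ x in (-s)..(0:ℝ), 2 * (s - |x|) = ∫ x in (-s)..(0:ℝ), (2 * s + 2 * x) := by
        refine intervalIntegral.integral_congr fun x hx => ?_
        rw [Set.uIcc_of_le (by linarith)] at hx
        rw [abs_of_nonpos hx.2]; ring
      have e2 : ∫ x in (0:ℝ)..s, 2 * (s - |x|) = ∫ x in (0:ℝ)..s, (2 * s + (-2) * x) := by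
        refine intervalIntegral.integral_congr fun x hx => ?_
        rw [Set.uIcc_of_le (by linarith)] at hx
        rw [abs_of_nonneg hx.1]; ring
      rw [e1, e2, poly_int, poly_int]; ring
    -- volume of the intersection
    have hIeq : S ∩ f ⁻¹' S = {p : ℝ × ℝ | |p.2| ≤ min (s - |p.1|) (2 * s - 4 * |p.1|)} := by
      ext p
      simp only [hS, Set.mem_inter_iff, Set.mem_setOf_eq, Set.mem_preimage, hf, abs_mul,
        abs_div, abs_two, le_min_iff]
      constructor <;> intro h <;> constructor <;> linarith [h.1, h.2]
    have hvolI : volume (S ∩ f ⁻¹' S) = ENNReal.ofReal (4 / 3 * s ^ 2) := by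
      rw [hIeq, vol_slice_s15 (fun x => min (s - |x|) (2 * s - 4 * |x|)) (by fun_prop)]
      rw [lint_ofReal (fun x => 2 * min (s - |x|) (2 * s - 4 * |x|)) (s / 2) (by linarith)
        (by fun_prop)
        (by intro x hx; simp only [Set.mem_Icc, not_and_or, not_le] at hx
            show 2 * min (s - |x|) (2 * s - 4 * |x|) ≤ 0
            have : s / 2 < |x| := by
              rcases hx with h | h
              · rw [abs_of_neg (by linarith)]; linarith
              · exact lt_of_lt_of_le h (le_abs_self x)
            have h2 : 2 * s - 4 * |x| ≤ 0 := by linarith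
            have := min_le_right (s - |x|) (2 * s - 4 * |x|)
            nlinarith)
        (by intro x hx; rw [Set.mem_Icc] at hx
            show (0:ℝ) ≤ 2 * min (s - |x|) (2 * s - 4 * |x|)
            have h1 : |x| ≤ s / 2 := abs_le.mpr hx
            have := le_min (by linarith : (0:ℝ) ≤ s - |x|) (by linarith : (0:ℝ) ≤ 2 * s - 4 * |x|)
            positivity)]
      congr 1
      have hcont : Continuous fun x : ℝ => 2 * min (s - |x|) (2 * s - 4 * |x|) := by fun_prop
      rw [← intervalIntegral.integral_add_adjacent_intervals (b := 0)
        (hcont.intervalIntegrable _ _) (hcont.intervalIntegrable _ _),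
        ← intervalIntegral.integral_add_adjacent_intervals (a := -(s/2)) (b := -(s/3))
        (hcont.intervalIntegrable _ _) (hcont.intervalIntegrable _ _),
        ← intervalIntegral.integral_add_adjacent_intervals (a := (0:ℝ)) (b := s/3)
        (hcont.intervalIntegrable _ _) (hcont.intervalIntegrable _ _)]
      have e1 : ∫ x in (-(s/2))..(-(s/3)), 2 * min (s - |x|) (2 * s - 4 * |x|)
          = ∫ x in (-(s/2))..(-(s/3)), (4 * s + 8 * x) := by
        refine intervalIntegral.integral_congr fun x hx => ?_
        rw [Set.uIcc_of_le (by linarith)] at hx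
        rw [abs_of_nonpos (by linarith [hx.2]), min_eq_right (by linarith [hx.2])]; ring
      have e2 : ∫ x in (-(s/3))..(0:ℝ), 2 * min (s - |x|) (2 * s - 4 * |x|)
          = ∫ x in (-(s/3))..(0:ℝ), (2 * s + 2 * x) := by
        refine intervalIntegral.integral_congr fun x hx => ?_
        rw [Set.uIcc_of_le (by linarith)] at hx
        rw [abs_of_nonpos hx.2, min_eq_left (by linarith [hx.1])]; ring
      have e3 : ∫ x in (0:ℝ)..(s/3), 2 * min (s - |x|) (2 * s - 4 * |x|)
          = ∫ x in (0:ℝ)..(s/3), (2 * s + (-2) * x) := by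
        refine intervalIntegral.integral_congr fun x hx => ?_
        rw [Set.uIcc_of_le (by linarith)] at hx
        rw [abs_of_nonneg hx.1, min_eq_left (by linarith [hx.2])]; ring
      have e4 : ∫ x in (s/3)..(s/2), 2 * min (s - |x|) (2 * s - 4 * |x|)
          = ∫ x in (s/3)..(s/2), (4 * s + (-8) * x) := by
        refine intervalIntegral.integral_congr fun x hx => ?_
        rw [Set.uIcc_of_le (by linarith)] at hx
        rw [abs_of_nonneg (by linarith [hx.1]), min_eq_right (by linarith [hx.1])]; ring
      rw [e1, e2, e3, e4, poly_int, poly_int, poly_int, poly_int]; ring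
    rw [hvolS, hvolI, ENNReal.toReal_ofReal (by positivity), ENNReal.toReal_ofReal (by positivity)]
    rw [div_eq_div_iff (by positivity) (by norm_num)]
    ring
  · norm_num
end
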